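/- arXiv:0908.3462 — 10 statements merged into one kernel-verified Lean document; each statement's English description precedes it below -/
import Mathlib

section
/- For all integers a ≥ 1, n ≥ 1 and all 1 ≤ i, j ≤ n, the number of words f : {1,…,n} → {1,…,a} such that pos(f,j) = i equals Σ_{k=1}^{a} Σ_{r=l}^{u} C(j-1, r)·C(n-j, i-r-1)·k^r·(a-k)^{j-1-r}·(k-1)^{i-1-r}·(a-k+1)^{(n-j)-(i-r-1)}, where l = max(0, (i+j)-(n+1)) and u = min(i-1, j-1). Consequently, the probability P_a(i,j) that an a-shuffle moves the card at position i to position j equals this sum divided by a^n. -/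
/-- Bayer–Diaconis encoding: for a shuffle word `f : Fin n → Fin a`, the card at final
position `i` (1-based value `i+1`) originally occupied position
`pos f i = n_1 + ⋯ + n_{f(i)-1} + c_{f(i)}(i)` (a 1-based position in `{1,…,n}`),
where `n_k` is the number of letters equal to `k` and `c_k(i)` the number of `j ≤ i`
with `f j = k`. -/
def pos {n a : ℕ} (f : Fin n → Fin a) (i : Fin n) : ℕ :=
  (Finset.univ.filter fun j => f j < f i).card +
    (Finset.univ.filter fun j => j ≤ i ∧ f j = f i).card

/-!
`pos f j` is the rank of the pair `(f j, j)` among all pairs `(f x, x)` in lexicographic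
order, so `X ^ pos f j` is a product over positions `x` of `X` or `1`. Summing over the words
with `f j = k` therefore factorizes: each of the `j - 1` positions left of `j` contributes
`k X + (a - k)` and each of the `n - j` positions right of it contributes
`(k - 1) X + (a - k + 1)`, with one extra `X` for `j` itself. The coefficient of `X ^ i` in
`X (k X + (a - k)) ^ (j - 1) ((k - 1) X + (a - k + 1)) ^ (n - j)`, expanded by the binomial
theorem, is the inner sum over `r`.
-/

open Finset Polynomial

theorem coeff_C_mul_X_add_C_pow {R : Type*} [CommSemiring R] (c d : R) (N r : ℕ) :
    ((C c * X + C d) ^ N).coeff r = N.choose r * c ^ r * d ^ (N - r) := by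
  have hterm : ∀ m, (C c * X) ^ m * C d ^ (N - m) * (N.choose m : R[X]) =
      C (c ^ m * d ^ (N - m) * N.choose m) * X ^ m := by
    intro m; simp only [mul_pow, ← C_pow, ← C_eq_natCast, C_mul]; ring
  simp only [add_pow, finsetSum_coeff, hterm, coeff_C_mul_X_pow]
  rw [sum_ite_eq]
  split_ifs with h
  · ring
  · rw [Nat.choose_eq_zero_of_lt (by simpa [Nat.lt_succ_iff] using h)]; simp

theorem card_filter_eq_coeff_sum_X_pow {α : Type*} (s : Finset α) (N : α → ℕ) (m : ℕ) :
    #{x ∈ s | N x = m} = (∑ x ∈ s, (X : ℕ[X]) ^ N x).coeff m := by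
  simp only [finsetSum_coeff, coeff_X_pow, card_filter, eq_comm]

theorem sum_filter_apply_eq_mul_prod_sum {ι β R : Type*} [Fintype ι] [DecidableEq ι]
    [Fintype β] [DecidableEq β] [CommSemiring R] (g : ι → β → R) (j : ι) (k : β) :
    ∑ f : ι → β with f j = k, ∏ x, g x (f x) = g j k * ∏ x ∈ univ.erase j, ∑ b, g x b := by
  let g' : ι → β → R := fun x b => if x = j ∧ b ≠ k then 0 else g x b
  have hg' : ∀ f : ι → β, ∏ x, g' x (f x) = if f j = k then ∏ x, g x (f x) else 0 := by
    intro f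
    split_ifs with h
    · exact prod_congr rfl fun x _ => if_neg fun hx => hx.2 (hx.1 ▸ h)
    · exact prod_eq_zero (mem_univ j) (if_pos ⟨rfl, h⟩)
  rw [sum_filter, ← Fintype.sum_congr _ _ hg', ← Fintype.prod_sum,
    ← mul_prod_erase _ _ (mem_univ j)]
  congr 1
  · simp [g']
  · exact prod_congr rfl fun x hx => by simp [g', ne_of_mem_erase hx]

theorem sum_ite_X_one {β R : Type*} [CommSemiring R] (s : Finset β) (p : β → Prop)
    [DecidablePred p] :
    ∑ b ∈ s, (if p b then X else 1 : R[X]) =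
      C (#{b ∈ s | p b} : R) * X + C ((#s - #{b ∈ s | p b} : ℕ) : R) := by
  rw [← card_filter_add_card_filter_not (s := s) p, Nat.add_sub_cancel_left]
  simp [sum_ite, nsmul_eq_mul]

section Shuffle

variable {n a : ℕ}

theorem pos_eq_card_lex_le (f : Fin n → Fin a) (j : Fin n) :
    pos f j = #{x | toLex (f x, x) ≤ toLex (f j, j)} := by
  simp only [Prod.Lex.toLex_le_toLex, pos]
  rw [filter_or, card_union_of_disjoint]
  · simp only [and_comm]
  · exact disjoint_filter.2 fun x _ h h' => (h'.1 ▸ h).false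

theorem card_lex_le_of_lt (k : Fin a) {x j : Fin n} (h : x < j) :
    #{b | toLex (b, x) ≤ toLex (k, j)} = (k : ℕ) + 1 := by
  simp only [Prod.Lex.toLex_le_toLex, h.le, and_true, ← le_iff_lt_or_eq, filter_ge_eq_Iic,
    Fin.card_Iic]

theorem card_lex_le_of_gt (k : Fin a) {x j : Fin n} (h : j < x) :
    #{b | toLex (b, x) ≤ toLex (k, j)} = (k : ℕ) := by
  simp only [Prod.Lex.toLex_le_toLex, h.not_ge, and_false, or_false, filter_gt_eq_Iio,
    Fin.card_Iio]

theorem card_erase_filter_lt (j : Fin n) : #{x ∈ univ.erase j | x < j} = j := by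
  rw [← Fin.card_Iio j]; congr 1; ext x; simp; omega

theorem card_erase_filter_not_lt (j : Fin n) : #{x ∈ univ.erase j | ¬x < j} = n - 1 - j := by
  rw [← Fin.card_Ioi j]; congr 1; ext x; simp; omega

theorem sum_X_pow_pos_of_apply_eq (j : Fin n) (k : Fin a) :
    ∑ f : Fin n → Fin a with f j = k, (X : ℕ[X]) ^ pos f j =
      X * (C ((k : ℕ) + 1) * X + C (a - (k + 1))) ^ (j : ℕ) *
        (C (k : ℕ) * X + C (a - k)) ^ (n - 1 - j) := by
  set g : Fin n → Fin a → ℕ[X] := fun x b => if toLex (b, x) ≤ toLex (k, j) then X else 1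
  have hpos : ∀ f ∈ ({f | f j = k} : Finset (Fin n → Fin a)),
      X ^ pos f j = ∏ x, g x (f x) := by
    intro f hf
    rw [prod_ite, prod_const, prod_const_one, mul_one, pos_eq_card_lex_le, (mem_filter.1 hf).2]
  have hsum : ∀ x ∈ univ.erase j, ∑ b, g x b =
      if x < j then C ((k : ℕ) + 1) * X + C (a - (k + 1)) else C (k : ℕ) * X + C (a - k) := by
    intro x hx
    rw [sum_ite_X_one, card_univ, Fintype.card_fin]
    split_ifs with h
    · rw [card_lex_le_of_lt k h, Nat.cast_id, Nat.cast_id]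
    · rw [card_lex_le_of_gt k (lt_of_le_of_ne (not_lt.1 h) (ne_of_mem_erase hx).symm),
        Nat.cast_id, Nat.cast_id]
  rw [sum_congr rfl hpos, sum_filter_apply_eq_mul_prod_sum, prod_congr rfl hsum, prod_ite,
    prod_const, prod_const, card_erase_filter_lt, card_erase_filter_not_lt, mul_assoc]
  simp [g]

theorem sum_X_pow_pos (j : Fin n) :
    ∑ f : Fin n → Fin a, (X : ℕ[X]) ^ pos f j = ∑ k ∈ Icc 1 a,
      X * ((C k * X + C (a - k)) ^ (j : ℕ) * (C (k - 1) * X + C (a - k + 1)) ^ (n - 1 - j)) := by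
  simp only [← sum_fiberwise univ (fun f : Fin n → Fin a => f j), sum_X_pow_pos_of_apply_eq,
    mul_assoc]
  rw [Fin.sum_univ_eq_sum_range (fun k => X *
    ((C (k + 1) * X + C (a - (k + 1))) ^ (j : ℕ) * (C k * X + C (a - k)) ^ (n - 1 - j))) a,
    ← Finset.Ico_add_one_right_eq_Icc, sum_Ico_eq_sum_range, Nat.add_sub_cancel]
  refine sum_congr rfl fun k hk => ?_
  have hka : a - (k + 1) + 1 = a - k := by rw [mem_range] at hk; omega
  rw [add_comm 1 k, Nat.add_sub_cancel, hka]

theorem card_pos_eq_succ (j : Fin n) (i : ℕ) :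
    #{f : Fin n → Fin a | pos f j = i + 1} = ∑ k ∈ Icc 1 a, ∑ r ∈ range (i + 1),
      (j : ℕ).choose r * (n - 1 - j).choose (i - r) * k ^ r * (a - k) ^ (j - r : ℕ) *
        (k - 1) ^ (i - r) * (a - k + 1) ^ (n - 1 - j - (i - r)) := by
  rw [card_filter_eq_coeff_sum_X_pow, sum_X_pow_pos, finsetSum_coeff]
  refine sum_congr rfl fun k _ => ?_
  rw [coeff_X_mul, coeff_mul, Nat.sum_antidiagonal_eq_sum_range_succ_mk]
  refine sum_congr rfl fun r _ => ?_
  simp only [coeff_C_mul_X_add_C_pow, Nat.cast_id]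
  ring

end Shuffle

/-- The number of shuffle words `f : {1,…,n} → {1,…,a}` with `pos(f,j) = i` is given by the
explicit double sum; consequently `P_a(i,j)`, the probability that an `a`-shuffle moves the
card at position `i` to position `j`, is this sum divided by `a^n`. -/
theorem statement0 (a n : ℕ) (i j : ℕ)
    (hi1 : 1 ≤ i) (hj1 : 1 ≤ j) (hj2 : j ≤ n) :
    (Finset.univ.filter fun f : Fin n → Fin a =>
        pos f (⟨j - 1, by omega⟩ : Fin n) = i).card =
      (∑ k ∈ Finset.Icc 1 a, ∑ r ∈ Finset.Icc (max 0 ((i + j) - (n + 1))) (min (i-1) (j-1)),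
        Nat.choose (j-1) r * Nat.choose (n-j) (i-r-1) * k ^ r * (a-k) ^ (j-1-r) *
          (k-1) ^ (i-1-r) * (a-k+1) ^ ((n-j) - (i-r-1))) ∧
    (((Finset.univ.filter fun f : Fin n → Fin a =>
        pos f (⟨j - 1, by omega⟩ : Fin n) = i).card : ℝ) / (a : ℝ) ^ n =
      ((∑ k ∈ Finset.Icc 1 a, ∑ r ∈ Finset.Icc (max 0 ((i + j) - (n + 1))) (min (i-1) (j-1)),
        Nat.choose (j-1) r * Nat.choose (n-j) (i-r-1) * k ^ r * (a-k) ^ (j-1-r) *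
          (k-1) ^ (i-1-r) * (a-k+1) ^ ((n-j) - (i-r-1)) : ℕ) : ℝ) / (a : ℝ) ^ n) := by
  have hcount : #{f : Fin n → Fin a | pos f ⟨j - 1, by omega⟩ = i} =
      ∑ k ∈ Icc 1 a, ∑ r ∈ Icc (max 0 ((i + j) - (n + 1))) (min (i - 1) (j - 1)),
        (j - 1).choose r * (n - j).choose (i - r - 1) * k ^ r * (a - k) ^ (j - 1 - r) *
          (k - 1) ^ (i - 1 - r) * (a - k + 1) ^ ((n - j) - (i - r - 1)) := by
    obtain ⟨m, rfl⟩ : ∃ m, i = m + 1 := ⟨i - 1, by omega⟩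
    rw [card_pos_eq_succ]
    refine sum_congr rfl fun k _ => ?_
    have hnj : n - 1 - (j - 1) = n - j := by omega
    symm
    refine sum_subset_zero_on_sdiff (fun r hr => ?_) (fun r hr => ?_) fun r _ => ?_
    · rw [mem_Icc] at hr
      rw [mem_range]
      omega
    · rw [mem_sdiff, mem_range, mem_Icc] at hr
      rw [hnj]
      rcases lt_or_ge (j - 1) r with h | h
      · simp [Nat.choose_eq_zero_of_lt h]
      · simp [Nat.choose_eq_zero_of_lt (show n - j < m - r by omega)]
    · simp only [hnj, Nat.add_sub_cancel, Nat.sub_right_comm (m + 1) r 1]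
  exact ⟨hcount, by rw [hcount]⟩
end

section
/- For all integers a ≥ 1, n ≥ 1 and all 1 ≤ i, j ≤ n, the single-card transition matrix P_a(i,j) = a^{-n}·#{f : {1,…,n} → {1,…,a} : pos(f,j) = i} is cross-symmetric: P_a(i,j) = P_a(n+1-i, n+1-j); equivalently, #{f : pos(f,j) = i} = #{f : pos(f, n+1-j) = n+1-i}. -/
lemma card_filter_rev {n : ℕ} (p : Fin n → Prop) [DecidablePred p] :
    (Finset.univ.filter fun k : Fin n => p k.rev).card = (Finset.univ.filter p).card := by
  refine Finset.card_bij' (fun k _ => Fin.rev k) (fun k _ => Fin.rev k) ?_ ?_ ?_ ?_ <;>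
    simp [Fin.rev_rev]

lemma one_le_pos {n a : ℕ} (f : Fin n → Fin a) (j : Fin n) : 1 ≤ pos f j := by
  have : j ∈ Finset.univ.filter fun k => k ≤ j ∧ f k = f j := by simp
  have := Finset.card_pos.mpr ⟨j, this⟩
  unfold pos; omega

lemma pos_sum {n a : ℕ} (f : Fin n → Fin a) (j : Fin n) :
    pos f j + pos (fun k : Fin n => (f k.rev).rev) j.rev = n + 1 := by
  simp only [pos]
  have h1 : (Finset.univ.filter fun k : Fin n => (f k.rev).rev < (f j.rev.rev).rev).card
      = (Finset.univ.filter fun m => f j < f m).card := by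
    rw [show (Finset.univ.filter fun k : Fin n => (f k.rev).rev < (f j.rev.rev).rev)
        = (Finset.univ.filter fun k => f j < f k.rev) by
      apply Finset.filter_congr; intro k _; simp [Fin.rev_rev, Fin.rev_lt_rev]]
    exact card_filter_rev (fun m => f j < f m)
  have h2 : (Finset.univ.filter fun k : Fin n => k ≤ j.rev ∧ (f k.rev).rev = (f j.rev.rev).rev).card
      = (Finset.univ.filter fun m => j ≤ m ∧ f m = f j).card := by
    rw [show (Finset.univ.filter fun k : Fin n => k ≤ j.rev ∧ (f k.rev).rev = (f j.rev.rev).rev)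
        = (Finset.univ.filter fun k => j ≤ k.rev ∧ f k.rev = f j) by
      apply Finset.filter_congr; intro k _
      simp only [Fin.rev_rev, Fin.rev_inj, and_congr_left_iff]
      intro _
      simp only [Fin.le_def, Fin.val_rev]
      omega]
    exact card_filter_rev (fun m => j ≤ m ∧ f m = f j)
  rw [h1, h2]
  -- arithmetic counting
  have hA : (Finset.univ.filter fun m => f m < f j).card
      + (Finset.univ.filter fun m => f j < f m).card
      + (Finset.univ.filter fun m => f m = f j).card = n := by
    have hu : ((Finset.univ : Finset (Fin n)).filter fun m => f m < f j)
        ∪ ((Finset.univ.filter fun m => f j < f m)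
          ∪ (Finset.univ.filter fun m => f m = f j)) = Finset.univ := by
      ext m; simp only [Finset.mem_union, Finset.mem_filter, Finset.mem_univ, true_and,
        iff_true]
      rcases lt_trichotomy (f m) (f j) with h | h | h <;> tauto
    have d1 : Disjoint (Finset.univ.filter fun m : Fin n => f j < f m)
        (Finset.univ.filter fun m => f m = f j) := by
      simp only [Finset.disjoint_left, Finset.mem_filter, Finset.mem_univ, true_and]
      intro m h h'
      rw [h'] at h; exact lt_irrefl _ h
    have d2 : Disjoint ((Finset.univ : Finset (Fin n)).filter fun m => f m < f j)
        ((Finset.univ.filter fun m => f j < f m)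
          ∪ (Finset.univ.filter fun m => f m = f j)) := by
      simp only [Finset.disjoint_left, Finset.mem_filter, Finset.mem_univ, true_and,
        Finset.mem_union]
      rintro m h (h' | h')
      · exact lt_irrefl _ (h.trans h')
      · rw [h'] at h; exact lt_irrefl _ h
    have hc := congrArg Finset.card hu
    rw [Finset.card_union_of_disjoint d2, Finset.card_union_of_disjoint d1,
      Finset.card_univ, Fintype.card_fin] at hc
    omega
  have hB : (Finset.univ.filter fun m => m ≤ j ∧ f m = f j).card
      + (Finset.univ.filter fun m => j ≤ m ∧ f m = f j).card
      = (Finset.univ.filter fun m => f m = f j).card + 1 := by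
    have hu : ((Finset.univ.filter fun m => m ≤ j ∧ f m = f j)
        ∪ (Finset.univ.filter fun m => j ≤ m ∧ f m = f j))
        = Finset.univ.filter fun m => f m = f j := by
      ext m; simp; rcases le_total m j with h | h <;> tauto
    have hi : ((Finset.univ.filter fun m => m ≤ j ∧ f m = f j)
        ∩ (Finset.univ.filter fun m => j ≤ m ∧ f m = f j)) = {j} := by
      ext m; simp; constructor
      · rintro ⟨⟨h1, _⟩, h2, _⟩; exact le_antisymm h1 h2
      · rintro rfl; simp
    have := Finset.card_union_add_card_inter
      (Finset.univ.filter fun m => m ≤ j ∧ f m = f j)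
      (Finset.univ.filter fun m => j ≤ m ∧ f m = f j)
    rw [hu, hi] at this
    simp at this; omega
  omega

lemma key {n a : ℕ} (j : Fin n) (i : ℕ) (hi1 : 1 ≤ i) (hi2 : i ≤ n) :
    (Finset.univ.filter fun f : Fin n → Fin a => pos f j = i).card =
      (Finset.univ.filter fun f : Fin n → Fin a => pos f j.rev = n + 1 - i).card := by
  refine Finset.card_bij' (fun f _ => fun k => (f k.rev).rev)
    (fun f _ => fun k => (f k.rev).rev) ?_ ?_ ?_ ?_
  · intro f hf
    simp only [Finset.mem_filter, Finset.mem_univ, true_and] at hf ⊢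
    have := pos_sum f j
    omega
  · intro f hf
    simp only [Finset.mem_filter, Finset.mem_univ, true_and] at hf ⊢
    have := pos_sum (fun k => (f k.rev).rev) j
    have h2 := one_le_pos f j.rev
    simp only [Fin.rev_rev] at this
    rw [show (fun k : Fin n => f k) = f from rfl] at this
    omega
  · intro f _; funext k; simp [Fin.rev_rev]
  · intro f _; funext k; simp [Fin.rev_rev]

/-- Cross-symmetry of the single-card transition matrix:
`P_a(i,j) = P_a(n+1-i, n+1-j)`, equivalently
`#{f : pos(f,j) = i} = #{f : pos(f, n+1-j) = n+1-i}`. -/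
theorem statement1 (a n : ℕ) (ha : 1 ≤ a) (hn : 1 ≤ n) (i j : ℕ)
    (hi1 : 1 ≤ i) (hi2 : i ≤ n) (hj1 : 1 ≤ j) (hj2 : j ≤ n) :
    (((Finset.univ.filter fun f : Fin n → Fin a =>
        pos f (⟨j - 1, by omega⟩ : Fin n) = i).card : ℝ) / (a : ℝ) ^ n =
      ((Finset.univ.filter fun f : Fin n → Fin a =>
        pos f (⟨(n + 1 - j) - 1, by omega⟩ : Fin n) = n + 1 - i).card : ℝ) / (a : ℝ) ^ n) ∧
    (Finset.univ.filter fun f : Fin n → Fin a =>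
        pos f (⟨j - 1, by omega⟩ : Fin n) = i).card =
      (Finset.univ.filter fun f : Fin n → Fin a =>
        pos f (⟨(n + 1 - j) - 1, by omega⟩ : Fin n) = n + 1 - i).card := by
  have hrev : (⟨(n + 1 - j) - 1, by omega⟩ : Fin n) = (⟨j - 1, by omega⟩ : Fin n).rev := by
    simp [Fin.rev]; omega
  have hcard := key (a := a) (⟨j - 1, by omega⟩ : Fin n) i hi1 hi2
  rw [hrev]
  exact ⟨by rw [hcard], hcard⟩
end

section
/- For all integers a, b ≥ 1 and n ≥ 1, the single-card transition matrices satisfy P_a · P_b = P_{ab}, i.e. for all 1 ≤ i, j ≤ n: Σ_{t=1}^{n} P_a(i,t)·P_b(t,j) = P_{ab}(i,j). -/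
/-- `P_a(i,j)`: the probability that an `a`-shuffle moves the card at (1-based) position
`(i:ℕ)+1` to position `(j:ℕ)+1`. -/
noncomputable def Pmat (a : ℕ) {n : ℕ} (i j : Fin n) : ℝ :=
  ((Finset.univ.filter fun f : Fin n → Fin a => pos f j = (i : ℕ) + 1).card : ℝ) / (a : ℝ) ^ n

/-!
Write `σ_f` for the permutation of the shuffle with word `f`, so that the card at final position `k`
started at `σ_f k`: it ranks `k` by the key `(f k, k)` in lexicographic order. Performing an
`a`-shuffle `f` and then a `b`-shuffle `g` is the `a * b`-shuffle with word
`h k = b * f (σ_g k) + g k`. Its keys `(h k, k)` are ordered as the keys `(f (σ_g k), σ_g k)`,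
because `σ_g` is increasing for the keys `(g k, k)`; hence `σ_h = σ_f ∘ σ_g`. As `(f, g) ↦ h` is a
bijection onto the words over `a * b` letters, counting the pairs with `σ_f (σ_g j) = i` according
to the intermediate position `σ_g j` gives the matrix product.
-/

open Finset Function

section Rank

variable {α β : Type*} [Fintype α] [LinearOrder β]

def rank (κ : α → β) (k : α) : ℕ := #{j | κ j < κ k}

variable {κ : α → β} {j k : α}

lemma rank_lt_rank (h : κ j < κ k) : rank κ j < rank κ k := by
  refine card_lt_card ((ssubset_iff_of_subset fun x hx => ?_).2 ⟨j, ?_, ?_⟩)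
  · simp only [mem_filter, mem_univ, true_and] at hx ⊢
    exact hx.trans h
  · simpa using h
  · simp

lemma rank_lt_rank_iff (hκ : Injective κ) : rank κ j < rank κ k ↔ κ j < κ k := by
  refine ⟨fun h => ?_, rank_lt_rank⟩
  by_contra hjk
  rcases (not_lt.1 hjk).lt_or_eq with hkj | hkj
  · exact (rank_lt_rank hkj).not_gt h
  · exact h.ne (by rw [hκ hkj])

lemma rank_lt_card (κ : α → β) (k : α) : rank κ k < Fintype.card α :=
  card_lt_card (filter_ssubset.2 ⟨k, mem_univ k, lt_irrefl _⟩)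

lemma card_filter_le_eq_rank_add_one (hκ : Injective κ) (k : α) :
    #{j | κ j ≤ κ k} = rank κ k + 1 := by
  classical
  have hle : univ.filter (fun j => κ j ≤ κ k) = insert k (univ.filter fun j => κ j < κ k) := by
    ext j
    simp [le_iff_lt_or_eq, hκ.eq_iff, or_comm]
  rw [hle, card_insert_of_notMem (by simp), rank]

lemma rank_congr {γ : Type*} [LinearOrder γ] {κ' : α → γ}
    (h : ∀ j k, κ j < κ k ↔ κ' j < κ' k) : rank κ = rank κ' :=
  funext fun k => by simp only [rank, h]

lemma rank_comp_equiv {γ : Type*} [Fintype γ] (κ : α → β) (e : γ ≃ α) (k : γ) :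
    rank (κ ∘ e) k = rank κ (e k) :=
  card_equiv e (by simp)

noncomputable def rankPerm {n : ℕ} (κ : Fin n → β) (hκ : Injective κ) : Equiv.Perm (Fin n) :=
  Equiv.ofBijective (fun k => ⟨rank κ k, by simpa using rank_lt_card κ k⟩) <|
    Finite.injective_iff_bijective.1 fun j k h => by
      by_contra hjk
      rcases lt_or_gt_of_ne (hκ.ne hjk) with hlt | hlt
      · exact (rank_lt_rank hlt).ne (Fin.val_eq_of_eq h)
      · exact (rank_lt_rank hlt).ne' (Fin.val_eq_of_eq h)

lemma rankPerm_val {n : ℕ} (κ : Fin n → β) (hκ : Injective κ) (k : Fin n) :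
    (rankPerm κ hκ k : ℕ) = rank κ k := rfl

end Rank

lemma card_filter_prod_eq_sum {α β γ : Type*} [Fintype α] [Fintype β] [Fintype γ] [DecidableEq γ]
    (P : α → γ → Prop) [∀ x t, Decidable (P x t)] (u : β → γ) :
    #{p : α × β | P p.1 (u p.2)} = ∑ t, #{x | P x t} * #{y | u y = t} := by
  rw [card_eq_sum_card_fiberwise (f := fun p => u p.2) (t := univ) fun _ _ => mem_univ _]
  refine sum_congr rfl fun t _ => ?_
  rw [← card_product, ← filter_product, univ_product_univ, filter_filter]
  congr 1
  exact filter_congr fun p _ => ⟨fun ⟨h, ht⟩ => ⟨ht ▸ h, ht⟩, fun ⟨h, ht⟩ => ⟨ht ▸ h, ht⟩⟩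

lemma finProdFinEquiv_lt_finProdFinEquiv_iff {m n : ℕ} {p q : Fin m × Fin n} :
    finProdFinEquiv p < finProdFinEquiv q ↔ toLex p < toLex q := by
  have : StrictMono (finProdFinEquiv ∘ ofLex : Fin m ×ₗ Fin n → Fin (m * n)) := by
    intro p q h
    simp only [comp_apply, Fin.lt_def, finProdFinEquiv_apply_val]
    rcases Prod.Lex.lt_iff.1 h with h | ⟨h, h'⟩
    · have hq : n * ((ofLex p).1 + 1 : ℕ) ≤ n * (ofLex q).1 :=
        Nat.mul_le_mul_left n (Fin.lt_def.1 h)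
      have hp := (ofLex p).2.isLt
      rw [mul_add_one] at hq
      omega
    · rw [h]; exact Nat.add_lt_add_right (Fin.lt_def.1 h') _
  exact this.lt_iff_lt

section Shuffle

variable {n a b : ℕ}

def shuffleKey (f : Fin n → Fin a) (j : Fin n) : Fin a ×ₗ Fin n := toLex (f j, j)

lemma shuffleKey_injective (f : Fin n → Fin a) : Injective (shuffleKey f) :=
  fun _ _ h => congrArg Prod.snd (toLex.injective h)

/-- The permutation performed by the shuffle with word `f`: the card at final position `k`
comes from position `shufflePerm f k` (both 0-based). -/
noncomputable def shufflePerm (f : Fin n → Fin a) : Equiv.Perm (Fin n) :=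
  rankPerm (shuffleKey f) (shuffleKey_injective f)

lemma pos_eq_shufflePerm_add_one (f : Fin n → Fin a) (k : Fin n) :
    pos f k = shufflePerm f k + 1 := by
  rw [shufflePerm, rankPerm_val, ← card_filter_le_eq_rank_add_one (shuffleKey_injective f),
    pos, ← card_union_of_disjoint (disjoint_filter.2 fun j _ h h' => h.ne h'.2), ← filter_or]
  simp [shuffleKey, Prod.Lex.toLex_le_toLex, and_comm]

lemma shufflePerm_lt_shufflePerm_iff {f : Fin n → Fin a} {j k : Fin n} :
    shufflePerm f j < shufflePerm f k ↔ shuffleKey f j < shuffleKey f k := by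
  rw [Fin.lt_def, shufflePerm, rankPerm_val, rankPerm_val,
    rank_lt_rank_iff (shuffleKey_injective f)]

/-- The word of the `a`-shuffle `f` followed by the `b`-shuffle `g`. -/
noncomputable def stack (f : Fin n → Fin a) (g : Fin n → Fin b) (k : Fin n) : Fin (a * b) :=
  finProdFinEquiv (f (shufflePerm g k), g k)

lemma shufflePerm_stack (f : Fin n → Fin a) (g : Fin n → Fin b) :
    shufflePerm (stack f g) = (shufflePerm g).trans (shufflePerm f) := by
  have hlt : ∀ j k, shuffleKey (stack f g) j < shuffleKey (stack f g) k ↔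
      (shuffleKey f ∘ shufflePerm g) j < (shuffleKey f ∘ shufflePerm g) k := by
    intro j k
    simp only [shuffleKey, stack, comp_apply, Prod.Lex.toLex_lt_toLex,
      finProdFinEquiv_lt_finProdFinEquiv_iff, finProdFinEquiv.injective.eq_iff, Prod.ext_iff,
      shufflePerm_lt_shufflePerm_iff]
    tauto
  ext k : 2
  change rank _ k = rank (shuffleKey f) (shufflePerm g k)
  rw [rank_congr hlt, rank_comp_equiv]

noncomputable def stackEquiv : (Fin n → Fin a) × (Fin n → Fin b) ≃ (Fin n → Fin (a * b)) where
  toFun p := stack p.1 p.2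
  invFun h :=
    let g k := (finProdFinEquiv.symm (h k)).2
    (fun t => (finProdFinEquiv.symm (h ((shufflePerm g).symm t))).1, g)
  left_inv p := by ext <;> simp [stack]
  right_inv h := by ext k; simp [stack, Nat.mod_add_div]

lemma card_shufflePerm_mul_eq_sum (i j : Fin n) :
    #{h : Fin n → Fin (a * b) | shufflePerm h j = i} =
      ∑ t, #{f : Fin n → Fin a | shufflePerm f t = i} *
        #{g : Fin n → Fin b | shufflePerm g j = t} := by
  rw [← card_filter_prod_eq_sum (fun f t => shufflePerm f t = i)]
  exact (card_equiv stackEquiv fun p => by simp [stackEquiv, shufflePerm_stack]).symm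

lemma Pmat_eq_card_div (i j : Fin n) :
    Pmat a i j = #{f : Fin n → Fin a | shufflePerm f j = i} / (a : ℝ) ^ n := by
  simp [Pmat, pos_eq_shufflePerm_add_one, Fin.val_inj]

end Shuffle

theorem statement2_general (a b n : ℕ) (i j : Fin n) :
    ∑ t : Fin n, Pmat a i t * Pmat b t j = Pmat (a * b) i j := by
  simp only [Pmat_eq_card_div, div_mul_div_comm, ← sum_div, card_shufflePerm_mul_eq_sum]
  push_cast
  ring

/-- The single-card transition matrices satisfy `P_a · P_b = P_{ab}`. -/
theorem statement2 (a b n : ℕ) (ha : 1 ≤ a) (hb : 1 ≤ b) (hn : 1 ≤ n) (i j : Fin n) :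
    ∑ t : Fin n, Pmat a i t * Pmat b t j = Pmat (a * b) i j :=
  statement2_general a b n i j
end

section
/- For all integers a ≥ 1, n ≥ 1 and 1 ≤ j ≤ n, the number of words f : {1,…,n} → {1,…,a} such that pos(f,j) = n equals Σ_{k=1}^{a} (k-1)^{n-j}·k^{j-1} (with the convention 0^0 = 1). Hence the probability Q_a(j) that the bottom card of the deck is at position j from the top after an a-shuffle equals a^{-n} Σ_{k=1}^{a} (k-1)^{n-j} k^{j-1}. -/
theorem pos_eq_iff {n a : ℕ} (f : Fin n → Fin a) (i : Fin n) :
    pos f i = n ↔ ∀ x, f x < f i ∨ (x ≤ i ∧ f x = f i) := by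
  unfold pos
  have hdisj : Disjoint (Finset.univ.filter fun j => f j < f i)
      (Finset.univ.filter fun j => j ≤ i ∧ f j = f i) := by
    rw [Finset.disjoint_filter]
    rintro x _ hx ⟨_, he⟩
    exact absurd he (ne_of_lt hx)
  rw [← Finset.card_union_of_disjoint hdisj, ← Finset.filter_or]
  constructor
  · intro h
    have heq : (Finset.univ.filter fun x => f x < f i ∨ (x ≤ i ∧ f x = f i)) = Finset.univ :=
      Finset.eq_univ_of_card _ (by simpa using h)
    intro x
    have hx : x ∈ Finset.univ.filter fun x => f x < f i ∨ (x ≤ i ∧ f x = f i) := by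
      rw [heq]; exact Finset.mem_univ x
    exact (Finset.mem_filter.mp hx).2
  · intro h
    rw [Finset.filter_true_of_mem (fun x _ => h x)]
    simp

theorem count_pos_eq {n a : ℕ} (i : Fin n) :
    (Finset.univ.filter fun f : Fin n → Fin a => pos f i = n).card =
      ∑ v : Fin a, (v : ℕ) ^ (n - 1 - (i : ℕ)) * ((v : ℕ) + 1) ^ (i : ℕ) := by
  classical
  have h1 : (Finset.univ.filter fun f : Fin n → Fin a => pos f i = n)
      = Finset.univ.filter fun f : Fin n → Fin a =>
          ∀ x, f x < f i ∨ (x ≤ i ∧ f x = f i) := by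
    apply Finset.filter_congr
    intro f _
    simpa using pos_eq_iff f i
  rw [h1]
  rw [Finset.card_eq_sum_card_fiberwise (f := fun f => f i) (t := Finset.univ)
    (fun f _ => Finset.mem_univ _)]
  refine Finset.sum_congr rfl fun v _ => ?_
  have h2 : ((Finset.univ.filter fun f : Fin n → Fin a =>
        ∀ x, f x < f i ∨ (x ≤ i ∧ f x = f i)).filter fun f => f i = v)
      = Fintype.piFinset (fun x : Fin n =>
          if x = i then {v} else if x ≤ i then Finset.Iic v else Finset.Iio v) := by
    ext f
    simp only [Finset.mem_filter, Finset.mem_univ, true_and, Fintype.mem_piFinset]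
    constructor
    · rintro ⟨h, hv⟩ x
      rcases eq_or_ne x i with rfl | hx
      · simp [hv]
      · rw [if_neg hx]
        rcases h x with hlt | ⟨hle, heq⟩
        · by_cases hxi : x ≤ i
          · rw [if_pos hxi]; exact Finset.mem_Iic.mpr (le_of_lt (hv ▸ hlt))
          · rw [if_neg hxi]; exact Finset.mem_Iio.mpr (hv ▸ hlt)
        · rw [if_pos hle]; exact Finset.mem_Iic.mpr (le_of_eq (hv ▸ heq))
    · intro h
      have hv : f i = v := by
        have := h i
        simpa using this
      refine ⟨fun x => ?_, hv⟩
      rcases eq_or_ne x i with rfl | hx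
      · exact Or.inr ⟨le_refl _, rfl⟩
      · have hx' := h x
        rw [if_neg hx] at hx'
        by_cases hxi : x ≤ i
        · rw [if_pos hxi] at hx'
          rcases lt_or_eq_of_le (Finset.mem_Iic.mp hx') with hlt | heq
          · exact Or.inl (hv ▸ hlt)
          · exact Or.inr ⟨hxi, hv ▸ heq⟩
        · rw [if_neg hxi] at hx'
          exact Or.inl (hv ▸ Finset.mem_Iio.mp hx')
  rw [h2, Fintype.card_piFinset]
  have hcard : ∀ x : Fin n,
      (if x = i then ({v} : Finset (Fin a)) else if x ≤ i then Finset.Iic v else Finset.Iio v).card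
      = if x = i then 1 else if x ≤ i then (v : ℕ) + 1 else (v : ℕ) := by
    intro x
    rcases eq_or_ne x i with rfl | hx
    · simp
    · rw [if_neg hx, if_neg hx]
      by_cases hxi : x ≤ i
      · rw [if_pos hxi, if_pos hxi, Fin.card_Iic]
      · rw [if_neg hxi, if_neg hxi, Fin.card_Iio]
  rw [Finset.prod_congr rfl fun x _ => hcard x]
  have hsplit : (Finset.univ : Finset (Fin n)) = (Finset.Iio i ∪ {i}) ∪ Finset.Ioi i := by
    ext x
    simp only [Finset.mem_univ, Finset.mem_union, Finset.mem_Iio, Finset.mem_singleton,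
      Finset.mem_Ioi, true_iff]
    rcases lt_trichotomy x i with h | h | h
    · exact Or.inl (Or.inl h)
    · exact Or.inl (Or.inr h)
    · exact Or.inr h
  have hd1 : Disjoint (Finset.Iio i) ({i} : Finset (Fin n)) := by
    simp [Finset.disjoint_singleton_right]
  have hd2 : Disjoint (Finset.Iio i ∪ {i}) (Finset.Ioi i) := by
    rw [Finset.disjoint_union_left]
    constructor
    · rw [Finset.disjoint_left]
      intro x hx hx'
      exact absurd (Finset.mem_Ioi.mp hx') (not_lt.mpr (le_of_lt (Finset.mem_Iio.mp hx)))
    · simp [Finset.disjoint_singleton_left]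
  rw [hsplit, Finset.prod_union hd2, Finset.prod_union hd1]
  have p1 : (∏ x ∈ Finset.Iio i,
      if x = i then 1 else if x ≤ i then (v : ℕ) + 1 else (v : ℕ)) = ((v : ℕ) + 1) ^ (i : ℕ) := by
    rw [Finset.prod_congr rfl fun x hx => ?_, Finset.prod_const, Fin.card_Iio]
    have hlt := Finset.mem_Iio.mp hx
    rw [if_neg (ne_of_lt hlt), if_pos (le_of_lt hlt)]
  have p2 : (∏ x ∈ ({i} : Finset (Fin n)),
      if x = i then 1 else if x ≤ i then (v : ℕ) + 1 else (v : ℕ)) = 1 := by simp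
  have p3 : (∏ x ∈ Finset.Ioi i,
      if x = i then 1 else if x ≤ i then (v : ℕ) + 1 else (v : ℕ))
      = (v : ℕ) ^ (n - 1 - (i : ℕ)) := by
    rw [Finset.prod_congr rfl fun x hx => ?_, Finset.prod_const, Fin.card_Ioi]
    have hlt := Finset.mem_Ioi.mp hx
    rw [if_neg (ne_of_gt hlt), if_neg (not_le.mpr hlt)]
  rw [p1, p2, p3]
  ring

/-- The number of shuffle words with `pos(f,j) = n` (i.e. sending the bottom card to
position `j` from the top) is `Σ_{k=1}^{a} (k-1)^{n-j} k^{j-1}`; hence the probability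
`Q_a(j)` that the bottom card is at position `j` after an `a`-shuffle is this over `a^n`. -/
theorem statement3 (a n : ℕ) (ha : 1 ≤ a) (hn : 1 ≤ n) (j : ℕ)
    (hj1 : 1 ≤ j) (hj2 : j ≤ n) :
    (Finset.univ.filter fun f : Fin n → Fin a =>
        pos f (⟨j - 1, by omega⟩ : Fin n) = n).card =
      (∑ k ∈ Finset.Icc 1 a, (k - 1) ^ (n - j) * k ^ (j - 1)) ∧
    (((Finset.univ.filter fun f : Fin n → Fin a =>
        pos f (⟨j - 1, by omega⟩ : Fin n) = n).card : ℝ) / (a : ℝ) ^ n =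
      ((∑ k ∈ Finset.Icc 1 a, (k - 1) ^ (n - j) * k ^ (j - 1) : ℕ) : ℝ) / (a : ℝ) ^ n) := by
  have key : (Finset.univ.filter fun f : Fin n → Fin a =>
        pos f (⟨j - 1, by omega⟩ : Fin n) = n).card =
      ∑ k ∈ Finset.Icc 1 a, (k - 1) ^ (n - j) * k ^ (j - 1) := by
    rw [count_pos_eq]
    rw [Fin.sum_univ_eq_sum_range (fun v => v ^ (n - 1 - (j - 1)) * (v + 1) ^ (j - 1))]
    have hnj : n - 1 - (j - 1) = n - j := by omega
    rw [hnj]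
    refine Finset.sum_nbij' (fun v => v + 1) (fun k => k - 1) ?_ ?_ ?_ ?_ ?_
    · intro v hv
      simp only [Finset.mem_range] at hv
      simp only [Finset.mem_Icc]
      omega
    · intro k hk
      simp only [Finset.mem_Icc] at hk
      simp only [Finset.mem_range]
      omega
    · intro v _; show v + 1 - 1 = v; omega
    · intro k hk
      simp only [Finset.mem_Icc] at hk
      show k - 1 + 1 = k; omega
    · intro v _
      simp
  exact ⟨key, by rw [key]⟩
end

section
/- Let n ≥ 2 and a ≥ 2 be integers, set α = 1 - 1/a, and for 1 ≤ i ≤ n define Q_a(i) = a^{-n} Σ_{k=1}^{a} (k-1)^{n-i} k^{i-1} (with 0^0 = 1). Then for every 1 ≤ i ≤ n, (1/a)·α^{n-i+1}/(1-α^n) ≤ Q_a(i) ≤ (1/a)·α^{n-i}/(1-α^{n-1}). Consequently the separation distance SEP(a) = 1 - n·Q_a(1) satisfies 1 - (n/a)·α^{n-1}/(1-α^{n-1}) ≤ SEP(a) ≤ 1 - (n/a)·α^{n}/(1-α^{n}). -/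
/-!
Write `x m = Q_a(m + 1)`, `N = n - 1` and `α = 1 - 1/a`. Since `k - 1 ≤ α k` for `k ≤ a`, a
termwise comparison gives `x m ≤ α x (m + 1)`; shifting `∑ k^N` by one gives the wrap-around
`x N = x 0 + 1/a`; and `∑ x m = 1` because `∑_m (k-1)^(N-m) k^m = k^(N+1) - (k-1)^(N+1)`
telescopes over `k`. These three facts alone give both bounds: walking up from `x m` to `x N`,
wrapping to `x 0` and walking up again to `x m` gives the upper bound, and bounding every term
of `∑ x k` by a geometric multiple of `x m` along the same cycle gives the lower bound.
-/

open Finset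

section GeometricGrowth

variable {x : ℕ → ℝ} {α A : ℝ} {N : ℕ}

theorem le_pow_mul_of_le_mul_succ (hα : 0 ≤ α) (hstep : ∀ k < N, x k ≤ α * x (k + 1))
    {k d : ℕ} (hkd : k + d ≤ N) : x k ≤ α ^ d * x (k + d) := by
  induction d with
  | zero => simp
  | succ d ih =>
    calc x k ≤ α ^ d * x (k + d) := ih (by omega)
      _ ≤ α ^ d * (α * x (k + d + 1)) :=
        mul_le_mul_of_nonneg_left (hstep _ (by omega)) (pow_nonneg hα d)
      _ = α ^ (d + 1) * x (k + (d + 1)) := by rw [← add_assoc, pow_succ, mul_assoc]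

theorem le_pow_mul_add_of_le_add (hα : 0 ≤ α) (hstep : ∀ k < N, x k ≤ α * x (k + 1))
    (hwrap : x N ≤ x 0 + A) {m : ℕ} (hm : m ≤ N) : x N ≤ α ^ m * x m + A := by
  have := le_pow_mul_of_le_mul_succ hα hstep (k := 0) (d := m) (by omega)
  rw [zero_add] at this
  linarith

theorem one_sub_mul_sum_range_le (hα₀ : 0 ≤ α) (hα₁ : α ≤ 1)
    (hstep : ∀ k < N, x k ≤ α * x (k + 1)) {l r : ℕ} (hl : l ≤ N) (hr : r ≤ l + 1) :
    (1 - α) * ∑ d ∈ range r, x (l - d) ≤ (1 - α ^ r) * x l := by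
  have hterm : ∀ d ∈ range r, x (l - d) ≤ α ^ d * x l := fun d hd => by
    have hdl : d ≤ l := by rw [mem_range] at hd; omega
    simpa [Nat.sub_add_cancel hdl] using
      le_pow_mul_of_le_mul_succ hα₀ hstep (k := l - d) (d := d) (by omega)
  calc (1 - α) * ∑ d ∈ range r, x (l - d) ≤ (1 - α) * ∑ d ∈ range r, α ^ d * x l :=
        mul_le_mul_of_nonneg_left (sum_le_sum hterm) (by linarith)
    _ = (1 - α ^ r) * x l := by rw [← sum_mul, ← mul_assoc, mul_neg_geom_sum]

theorem mul_one_sub_pow_le (hα : 0 ≤ α) (hstep : ∀ k < N, x k ≤ α * x (k + 1))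
    (hwrap : x N ≤ x 0 + A) {m : ℕ} (hm : m ≤ N) :
    x m * (1 - α ^ N) ≤ A * α ^ (N - m) := by
  have hup : x m ≤ α ^ (N - m) * x N := by
    simpa [Nat.add_sub_cancel' hm] using
      le_pow_mul_of_le_mul_succ hα hstep (k := m) (d := N - m) (by omega)
  have hpow : α ^ (N - m) * α ^ m = α ^ N := by rw [← pow_add, Nat.sub_add_cancel hm]
  have : x m ≤ α ^ N * x m + A * α ^ (N - m) :=
    calc x m ≤ α ^ (N - m) * x N := hup
      _ ≤ α ^ (N - m) * (α ^ m * x m + A) :=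
        mul_le_mul_of_nonneg_left (le_pow_mul_add_of_le_add hα hstep hwrap hm)
          (pow_nonneg hα (N - m))
      _ = α ^ N * x m + A * α ^ (N - m) := by rw [← hpow]; ring
  linarith

theorem le_mul_one_sub_pow_succ (hα₀ : 0 ≤ α) (hα₁ : α ≤ 1)
    (hstep : ∀ k < N, x k ≤ α * x (k + 1)) (hwrap : x N ≤ x 0 + A)
    (hsum : (1 - α) * ∑ k ∈ range (N + 1), x k = A) {m : ℕ} (hm : m ≤ N) (hx : 0 ≤ x m) :
    A * α ^ (N - m + 1) ≤ x m * (1 - α ^ (N + 1)) := by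
  have hsplit : ∑ k ∈ range (N + 1), x k
      = ∑ d ∈ range (N - m), x (N - d) + ∑ d ∈ range (m + 1), x (m - d) := by
    rw [← sum_range_reflect, show N + 1 = N - m + (m + 1) by omega, sum_range_add]
    congr 1 <;> refine sum_congr rfl fun d hd => ?_ <;> rw [mem_range] at hd <;> congr 1 <;>
      omega
  have htail : (1 - α) * ∑ d ∈ range (N - m), x (N - d)
      ≤ (1 - α ^ (N - m)) * (α ^ m * x m + A) :=
    (one_sub_mul_sum_range_le hα₀ hα₁ hstep le_rfl (by omega)).trans <|
      mul_le_mul_of_nonneg_left (le_pow_mul_add_of_le_add hα₀ hstep hwrap hm)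
        (by linarith [pow_le_one₀ hα₀ hα₁ (n := N - m)])
  have hhead := one_sub_mul_sum_range_le hα₀ hα₁ hstep hm le_rfl
  have hpow : α ^ (N - m) * α ^ m = α ^ N := by rw [← pow_add, Nat.sub_add_cancel hm]
  have hloss : 0 ≤ (1 - α) * (1 - α ^ (m + 1)) * x m :=
    mul_nonneg (mul_nonneg (by linarith) (by linarith [pow_le_one₀ hα₀ hα₁ (n := m + 1)]))
      hx
  rw [hsplit, mul_add] at hsum
  calc A * α ^ (N - m + 1) = α * (α ^ (N - m) * A) := by ring
    _ ≤ α * ((1 - α ^ (m + 1) + α ^ m - α ^ N) * x m) := by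
      refine mul_le_mul_of_nonneg_left ?_ hα₀
      rw [← hpow]
      linarith
    _ ≤ x m * (1 - α ^ (N + 1)) := by
      rw [pow_succ] at hloss ⊢
      linear_combination hloss

end GeometricGrowth

theorem sum_Icc_one_eq_sum_range {M : Type*} [AddCommMonoid M] (f : ℕ → M) (a : ℕ) :
    ∑ k ∈ Icc 1 a, f k = ∑ j ∈ range a, f (j + 1) := by
  rw [range_eq_Ico, sum_Ico_add', ← Ico_add_one_right_eq_Icc, zero_add]

/-- `Q_a(m + 1)` for a deck of `N + 1` cards, summed over `j = k - 1`. -/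
noncomputable def bottomCardProb (a N m : ℕ) : ℝ :=
  (∑ j ∈ range a, (j : ℝ) ^ (N - m) * ((j : ℝ) + 1) ^ m) / (a : ℝ) ^ (N + 1)

section BottomCardProb

variable {a N : ℕ}

theorem natCast_le_one_sub_inv_mul_succ {j : ℕ} (h : j < a) :
    (j : ℝ) ≤ (1 - 1 / a) * (j + 1) := by
  have ha : (0 : ℝ) < a := by exact_mod_cast (j.zero_le.trans_lt h)
  have hj : (j : ℝ) + 1 ≤ a := by exact_mod_cast h
  have : ((j : ℝ) + 1) / a ≤ 1 := (div_le_one ha).2 hj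
  rw [sub_mul, one_mul, one_div_mul_eq_div]
  linarith

theorem bottomCardProb_nonneg (m : ℕ) : 0 ≤ bottomCardProb a N m := by
  unfold bottomCardProb; positivity

theorem bottomCardProb_le_mul_succ {m : ℕ} (hm : m < N) :
    bottomCardProb a N m ≤ (1 - 1 / a) * bottomCardProb a N (m + 1) := by
  unfold bottomCardProb
  rw [mul_div_assoc', mul_sum]
  refine div_le_div_of_nonneg_right (sum_le_sum fun j hj => ?_) (by positivity)
  rw [show N - m = N - (m + 1) + 1 by omega, pow_succ, pow_succ]
  have := natCast_le_one_sub_inv_mul_succ (mem_range.mp hj)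
  have : (0 : ℝ) ≤ (j : ℝ) ^ (N - (m + 1)) * ((j : ℝ) + 1) ^ m := by positivity
  nlinarith

theorem bottomCardProb_self (ha : a ≠ 0) (hN : N ≠ 0) :
    bottomCardProb a N N = bottomCardProb a N 0 + 1 / a := by
  have hshift := sum_range_succ' (fun j : ℕ => (j : ℝ) ^ N) a
  rw [sum_range_succ] at hshift
  push_cast [zero_pow hN, add_zero] at hshift
  simp only [bottomCardProb, Nat.sub_self, Nat.sub_zero, pow_zero, one_mul, mul_one]
  rw [← hshift, add_div, pow_succ]
  field_simp

theorem sum_bottomCardProb (ha : a ≠ 0) : ∑ m ∈ range (N + 1), bottomCardProb a N m = 1 := by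
  have hgeom (j : ℕ) : ∑ m ∈ range (N + 1), (j : ℝ) ^ (N - m) * ((j : ℝ) + 1) ^ m
      = ((j : ℝ) + 1) ^ (N + 1) - (j : ℝ) ^ (N + 1) := by
    simpa [mul_comm] using geom_sum₂_mul ((j : ℝ) + 1) j (N + 1)
  simp only [bottomCardProb, ← sum_div, sum_comm (s := range (N + 1)), hgeom]
  have htel := sum_range_sub (fun j : ℕ => (j : ℝ) ^ (N + 1)) a
  push_cast [zero_pow N.succ_ne_zero, sub_zero] at htel
  rw [htel, div_self (by positivity)]

theorem bottomCardProb_bounds (ha : a ≠ 0) (hN : N ≠ 0) {m : ℕ} (hm : m ≤ N) :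
    1 / (a : ℝ) * (1 - 1 / a) ^ (N - m + 1) / (1 - (1 - 1 / a) ^ (N + 1))
        ≤ bottomCardProb a N m ∧
      bottomCardProb a N m ≤ 1 / (a : ℝ) * (1 - 1 / a) ^ (N - m) / (1 - (1 - 1 / a) ^ N) := by
  have hinv₀ : 0 < 1 / (a : ℝ) := by positivity
  have hinv₁ : 1 / (a : ℝ) ≤ 1 := by
    rw [div_le_one (by positivity)]; exact_mod_cast Nat.one_le_iff_ne_zero.mpr ha
  have hα₀ : 0 ≤ 1 - 1 / (a : ℝ) := by linarith
  have hα₁ : 1 - 1 / (a : ℝ) < 1 := by linarith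
  have hstep : ∀ k < N, bottomCardProb a N k ≤ (1 - 1 / a) * bottomCardProb a N (k + 1) :=
    fun k hk => bottomCardProb_le_mul_succ hk
  have hwrap := (bottomCardProb_self ha hN).le
  have hsum :
      (1 - (1 - 1 / (a : ℝ))) * ∑ k ∈ range (N + 1), bottomCardProb a N k = 1 / a := by
    rw [sum_bottomCardProb ha]; ring
  constructor
  · rw [div_le_iff₀ (by linarith [pow_lt_one₀ hα₀ hα₁ (by omega : N + 1 ≠ 0)])]
    exact le_mul_one_sub_pow_succ hα₀ hα₁.le hstep hwrap hsum hm (bottomCardProb_nonneg m)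
  · rw [le_div_iff₀ (by linarith [pow_lt_one₀ hα₀ hα₁ hN])]
    exact mul_one_sub_pow_le hα₀ hstep hwrap hm

end BottomCardProb

/-- Bounds on `Q_a(i)`, the chance that the original bottom card is at position `i` after an
`a`-shuffle, and the resulting bounds on the separation distance `SEP(a) = 1 - n·Q_a(1)`. -/
theorem statement4 (n a : ℕ) (hn : 2 ≤ n) (ha : 2 ≤ a)
    (α : ℝ) (hα : α = 1 - 1 / (a : ℝ))
    (Q : ℕ → ℝ)
    (hQ : ∀ i, Q i = (1 / (a : ℝ) ^ n) *
      ∑ k ∈ Finset.Icc 1 a, ((k : ℝ) - 1) ^ (n - i) * (k : ℝ) ^ (i - 1)) :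
    (∀ i, 1 ≤ i → i ≤ n →
      (1 / (a : ℝ)) * α ^ (n - i + 1) / (1 - α ^ n) ≤ Q i ∧
      Q i ≤ (1 / (a : ℝ)) * α ^ (n - i) / (1 - α ^ (n - 1))) ∧
    1 - ((n : ℝ) / a) * α ^ (n - 1) / (1 - α ^ (n - 1)) ≤ 1 - (n : ℝ) * Q 1 ∧
    1 - (n : ℝ) * Q 1 ≤ 1 - ((n : ℝ) / a) * α ^ n / (1 - α ^ n) := by
  obtain ⟨N, rfl⟩ : ∃ N, n = N + 1 := ⟨n - 1, by omega⟩
  have hQp : ∀ m, Q (m + 1) = bottomCardProb a N m := fun m => by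
    rw [hQ, bottomCardProb, sum_Icc_one_eq_sum_range]
    simp [div_eq_inv_mul]
  have hbounds := fun m (hm : m ≤ N) => bottomCardProb_bounds (a := a) (by omega) (by omega) hm
  subst hα
  refine ⟨fun i hi hin => ?_, ?_, ?_⟩
  · obtain ⟨m, rfl⟩ : ∃ m, i = m + 1 := ⟨i - 1, by omega⟩
    simpa [hQp] using hbounds m (by omega)
  all_goals rw [show Q 1 = bottomCardProb a N 0 from hQp 0]; refine sub_le_sub_left ?_ 1
  · calc _ ≤ ((N + 1 : ℕ) : ℝ) * (1 / a * (1 - 1 / a) ^ N / (1 - (1 - 1 / a) ^ N)) := by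
          gcongr; simpa using (hbounds 0 N.zero_le).2
      _ = _ := by simp only [Nat.add_sub_cancel]; ring
  · calc _ = ((N + 1 : ℕ) : ℝ) *
            (1 / a * (1 - 1 / a) ^ (N + 1) / (1 - (1 - 1 / a) ^ (N + 1))) := by ring
      _ ≤ _ := by gcongr; simpa using (hbounds 0 N.zero_le).1
end

section
/- Let R, B ≥ 1 and a ≥ 1 be integers and set n = R + B. For every color word w ∈ {red, black}^n containing exactly R reds, the number of words f : {1,…,n} → {1,…,a} such that w(f) = w equals Σ_{k=1}^{a} Σ_{j=1}^{R} (k-1)^{R-j}·k^{j-1}·(a-k)^{b_w(j)}·(a-k+1)^{B-b_w(j)} (with 0^0 = 1). Hence the probability Q_a(w) that an a-shuffle of the deck with R reds atop B blacks results in the pattern w is this sum divided by a^{R+B}. -/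
/-- Color pattern of the shuffle word `f` for a deck with the top `R` original positions
red: final position `i` is red (`true`) iff the card there originally sat in the top `R`. -/
def wcolor (R : ℕ) {n a : ℕ} (f : Fin n → Fin a) : Fin n → Bool :=
  fun i => decide (pos f i ≤ R)

/-- Number of red entries of `w` at positions `≤ i`. -/
def numRedsUpTo {n : ℕ} (w : Fin n → Bool) (i : Fin n) : ℕ :=
  (Finset.univ.filter fun i' => i' ≤ i ∧ w i' = true).card

/-- `bBlack w j`: the number of black entries occurring before the `j`-th red entry of `w`
(a black entry at `i` precedes the `j`-th red iff fewer than `j` reds occur at positions `≤ i`). -/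
def bBlack {n : ℕ} (w : Fin n → Bool) (j : ℕ) : ℕ :=
  (Finset.univ.filter fun i => w i = false ∧ numRedsUpTo w i < j).card


/-! Sorting the final positions `i` by the lexicographic key `(f i, i)` lists the cards in their
original order, so `w(f) = w` exactly when the reds of `w` are the positions whose key is at most
that of the bottom red card. Fix the final position `r` of that card, say the `j`-th red of `w`,
and its packet `k` (1-based). Then every other value `f i` ranges independently over an interval:
`f i ≤ k` for the `j - 1` reds before `r`, `f i < k` for the `R - j` reds after it, `f i > k` for
the `b_w(j)` blacks before it and `f i ≥ k` for the blacks after it. This gives the summand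
`k^(j-1) (k-1)^(R-j) (a-k)^b_w(j) (a-k+1)^(B-b_w(j))`. -/

open Finset

section Rank

variable {ι α : Type*} [Fintype ι] [LinearOrder α] (g : ι → α)

theorem forall_mem_iff_card_filter_le_le_card_iff_exists {s : Finset ι} (hs : s.Nonempty) :
    (∀ i, i ∈ s ↔ #{j | g j ≤ g i} ≤ #s) ↔ ∃ r, ∀ i, i ∈ s ↔ g i ≤ g r := by
  constructor
  · intro h
    obtain ⟨r, hr, hmax⟩ := s.exists_max_image g hs
    refine ⟨r, fun i => ⟨hmax i, fun hir => (h i).2 ?_⟩⟩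
    calc #{j | g j ≤ g i} ≤ #{j | g j ≤ g r} :=
          card_le_card fun j => by simpa using fun hj => hj.trans hir
      _ ≤ #s := (h r).1 hr
  · rintro ⟨r, hr⟩ i
    refine ⟨fun hi => card_le_card fun j hj => (hr j).2 ?_, fun hle => ?_⟩
    · exact (mem_filter.1 hj).2.trans ((hr i).1 hi)
    · classical
      by_contra hi
      have hri : g r < g i := lt_of_not_ge (mt (hr i).2 hi)
      have hsub : insert i s ⊆ ({j | g j ≤ g i} : Finset ι) := by
        intro j hj
        rcases mem_insert.1 hj with rfl | hj
        · simp
        · simpa using ((hr j).1 hj).trans hri.le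
      have := card_le_card hsub
      rw [card_insert_of_notMem hi] at this
      omega

end Rank

namespace Prod.Lex

variable {α β : Type*} [PartialOrder α] [Preorder β] {x y : α} {i j : β}

lemma toLex_le_toLex_iff_of_snd_le (h : i ≤ j) : toLex (x, i) ≤ toLex (y, j) ↔ x ≤ y := by
  simp [Prod.Lex.toLex_le_toLex', h]

lemma toLex_le_toLex_iff_of_snd_lt (h : j < i) : toLex (x, i) ≤ toLex (y, j) ↔ x < y := by
  simp [Prod.Lex.toLex_le_toLex', h.not_ge, lt_iff_le_and_ne]

end Prod.Lex

namespace RedBlackShuffle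

variable {n a : ℕ}

def key (f : Fin n → Fin a) (i : Fin n) : Fin a ×ₗ Fin n := toLex (f i, i)

lemma key_injective (f : Fin n → Fin a) : Function.Injective (key f) :=
  fun _ _ h => congrArg Prod.snd (toLex.injective h)

lemma pos_eq_card_key_le (f : Fin n → Fin a) (i : Fin n) :
    pos f i = #{j | key f j ≤ key f i} := by
  rw [pos, ← card_union_of_disjoint, ← filter_or]
  · simp only [key, Prod.Lex.toLex_le_toLex, and_comm]
  · exact disjoint_filter.2 fun j _ hlt heq => hlt.ne heq.2

lemma wcolor_eq_iff_exists_key_le {R : ℕ} {w : Fin n → Bool} {f : Fin n → Fin a}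
    (hR : 1 ≤ R) (hw : #{i | w i = true} = R) :
    wcolor R f = w ↔ ∃ r, ∀ i, w i = true ↔ key f i ≤ key f r := by
  have hs : ({i | w i = true} : Finset (Fin n)).Nonempty := card_pos.1 (by omega)
  have := forall_mem_iff_card_filter_le_le_card_iff_exists (key f) hs
  simp only [mem_filter, mem_univ, true_and, hw, ← pos_eq_card_key_le] at this
  rw [← this, funext_iff]
  refine forall_congr' fun i => ?_
  cases w i <;> simp [wcolor]

/-- The words with pattern `w` that move the bottom red card (original position `#{i | w i}`)
to final position `r`. -/
def bottomRedAt (w : Fin n → Bool) (r : Fin n) : Finset (Fin n → Fin a) :=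
  {f | ∀ i, w i = true ↔ key f i ≤ key f r}

/-- The values `f i` may take for `f ∈ bottomRedAt w r` with `f r = k`; these constraints on
different `i` are independent, which is what makes the count a product. -/
def allowed (w : Fin n → Bool) (r : Fin n) (k : Fin a) (i : Fin n) : Finset (Fin a) :=
  {x | (i = r → x = k) ∧ (w i = true ↔ toLex (x, i) ≤ toLex (k, r))}

lemma mem_piFinset_allowed_iff {w : Fin n → Bool} {r : Fin n} {k : Fin a}
    {f : Fin n → Fin a} :
    f ∈ Fintype.piFinset (allowed w r k) ↔ f ∈ bottomRedAt w r ∧ f r = k := by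
  simp only [Fintype.mem_piFinset, allowed, bottomRedAt, mem_filter_univ]
  unfold key
  constructor
  · intro h
    have hfr : f r = k := (h r).1 rfl
    exact ⟨fun i => hfr ▸ (h i).2, hfr⟩
  · rintro ⟨h, rfl⟩ i
    exact ⟨fun hi => hi ▸ rfl, h i⟩

lemma card_allowed {w : Fin n → Bool} {r : Fin n} (hr : w r = true) (k : Fin a) (i : Fin n) :
    #(allowed w r k i) = ((k : ℕ) + 1) ^ (if w i = true ∧ i < r then 1 else 0) *
      (k : ℕ) ^ (if w i = true ∧ r < i then 1 else 0) *
      (a - (k + 1)) ^ (if w i = false ∧ i < r then 1 else 0) *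
      (a - k) ^ (if w i = false ∧ r < i then 1 else 0) := by
  rcases lt_trichotomy i r with h | rfl | h
  · cases hwi : w i
    · have : allowed w r k i = Ioi k := by
        ext x; simp [allowed, hwi, h.ne, Prod.Lex.toLex_le_toLex_iff_of_snd_le h.le]
      simp only [this, Fin.card_Ioi, Bool.false_eq_true, h, and_true, ↓reduceIte, pow_zero,
        not_lt_of_gt h, and_self, mul_one, pow_one, one_mul, and_false]
      omega
    · have : allowed w r k i = Iic k := by
        ext x; simp [allowed, hwi, h.ne, Prod.Lex.toLex_le_toLex_iff_of_snd_le h.le]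
      simp [this, h, not_lt_of_gt h]
  · have : allowed w i k i = {k} := by
      ext x; simp +contextual [allowed, hr]
    simp [this, hr]
  · cases hwi : w i
    · have : allowed w r k i = Ici k := by
        ext x; simp [allowed, hwi, h.ne', Prod.Lex.toLex_le_toLex_iff_of_snd_lt h]
      simp [this, h, not_lt_of_gt h]
    · have : allowed w r k i = Iio k := by
        ext x; simp [allowed, hwi, h.ne', Prod.Lex.toLex_le_toLex_iff_of_snd_lt h]
      simp [this, h, not_lt_of_gt h]

lemma card_filter_bottomRedAt_eq_prod {w : Fin n → Bool} {r : Fin n} (hr : w r = true)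
    (k : Fin a) :
    #{f ∈ bottomRedAt w r | f r = k} =
      ((k : ℕ) + 1) ^ #{i | w i = true ∧ i < r} * (k : ℕ) ^ #{i | w i = true ∧ r < i} *
        (a - (k + 1)) ^ #{i | w i = false ∧ i < r} * (a - k) ^ #{i | w i = false ∧ r < i} := by
  have : {f ∈ bottomRedAt w r | f r = k} = Fintype.piFinset (allowed w r k) := by
    ext f; rw [mem_piFinset_allowed_iff, mem_filter]
  rw [this, Fintype.card_piFinset]
  simp only [card_allowed hr, prod_mul_distrib, prod_pow_eq_pow_sum, sum_boole, Nat.cast_id]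

lemma numRedsUpTo_eq_card_lt_add_one {w : Fin n → Bool} {r : Fin n} (hr : w r = true) :
    numRedsUpTo w r = #{i | w i = true ∧ i < r} + 1 := by
  rw [numRedsUpTo, ← card_insert_of_notMem (s := {i | w i = true ∧ i < r}) (a := r) (by simp)]
  congr 1
  ext i
  rcases eq_or_ne i r with rfl | hi
  · simp [hr]
  · simp [hi, le_iff_lt_or_eq, and_comm]

lemma numRedsUpTo_add_card_gt (w : Fin n → Bool) (r : Fin n) :
    numRedsUpTo w r + #{i | w i = true ∧ r < i} = #{i | w i = true} := by
  rw [numRedsUpTo, ← card_filter_add_card_filter_not (s := {i | w i = true}) (· ≤ r),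
    filter_filter, filter_filter]
  simp only [not_le, and_comm]

lemma numRedsUpTo_lt_numRedsUpTo_iff {w : Fin n → Bool} {r : Fin n} (hr : w r = true)
    (i : Fin n) : numRedsUpTo w i < numRedsUpTo w r ↔ i < r := by
  constructor
  · intro h
    by_contra! hri
    exact h.not_ge (card_le_card fun j => by simpa using fun hj hwj => ⟨hj.trans hri, hwj⟩)
  · intro hir
    rw [numRedsUpTo_eq_card_lt_add_one hr, Nat.lt_add_one_iff]
    exact card_le_card fun j => by simpa using fun hj hwj => ⟨hwj, hj.trans_lt hir⟩

lemma bBlack_numRedsUpTo {w : Fin n → Bool} {r : Fin n} (hr : w r = true) :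
    bBlack w (numRedsUpTo w r) = #{i | w i = false ∧ i < r} := by
  simp only [bBlack, numRedsUpTo_lt_numRedsUpTo_iff hr]

lemma card_black_lt_add_card_black_gt {w : Fin n → Bool} {r : Fin n} (hr : w r = true) :
    #{i | w i = false ∧ i < r} + #{i | w i = false ∧ r < i} = #{i | w i = false} := by
  rw [← card_filter_add_card_filter_not (s := {i | w i = false}) (· < r),
    filter_filter, filter_filter]
  congr 2
  ext i
  have : w i = false → i ≠ r := fun hi h => by simp [h, hr] at hi
  simp only [mem_filter_univ, not_lt, and_congr_right_iff]
  exact fun hi => ⟨le_of_lt, fun h => lt_of_le_of_ne h (this hi).symm⟩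

lemma card_filter_wcolor_eq_sum {R : ℕ} {w : Fin n → Bool} (hR : 1 ≤ R)
    (hw : #{i | w i = true} = R) :
    #{f : Fin n → Fin a | wcolor R f = w} =
      ∑ r ∈ {i | w i = true}, #(bottomRedAt (a := a) w r) := by
  have hunion : ({f | wcolor R f = w} : Finset (Fin n → Fin a)) =
      ({i | w i = true} : Finset (Fin n)).biUnion (bottomRedAt w) := by
    ext f
    simp only [mem_filter_univ, mem_biUnion, wcolor_eq_iff_exists_key_le hR hw, bottomRedAt]
    exact ⟨fun ⟨r, h⟩ => ⟨r, (h r).2 le_rfl, h⟩, fun ⟨r, _, h⟩ => ⟨r, h⟩⟩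
  rw [hunion, card_biUnion]
  intro r _ r' _ hne
  refine disjoint_left.2 fun f hf hf' => hne (key_injective f (le_antisymm ?_ ?_))
  all_goals simp only [bottomRedAt, mem_filter_univ] at hf hf'
  · exact (hf' r).1 ((hf r).2 le_rfl)
  · exact (hf r').1 ((hf' r').2 le_rfl)

lemma sum_red_numRedsUpTo {M : Type*} [AddCommMonoid M] {R : ℕ} {w : Fin n → Bool}
    (hw : #{i | w i = true} = R) (G : ℕ → M) :
    ∑ r ∈ {i | w i = true}, G (numRedsUpTo w r) = ∑ j ∈ Icc 1 R, G j := by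
  have hmono : StrictMonoOn (numRedsUpTo w) {i | w i = true} := fun i _ r hr hir =>
    (numRedsUpTo_lt_numRedsUpTo_iff (by simpa using hr) i).2 hir
  have hinj : Set.InjOn (numRedsUpTo w) ({i | w i = true} : Finset (Fin n)) := by
    simpa using hmono.injOn
  have hsub : ({i | w i = true} : Finset (Fin n)).image (numRedsUpTo w) ⊆ Icc 1 R := by
    intro j hj
    obtain ⟨r, hr, rfl⟩ := mem_image.1 hj
    have hr : w r = true := by simpa using hr
    have := numRedsUpTo_add_card_gt w r
    rw [mem_Icc, numRedsUpTo_eq_card_lt_add_one hr] at *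
    omega
  have himage : ({i | w i = true} : Finset (Fin n)).image (numRedsUpTo w) = Icc 1 R :=
    eq_of_subset_of_card_le hsub (by rw [card_image_of_injOn hinj, hw, Nat.card_Icc]; omega)
  rw [← himage, sum_image hinj]

def summand (R B a : ℕ) (w : Fin n → Bool) (m j : ℕ) : ℕ :=
  (m - 1) ^ (R - j) * m ^ (j - 1) * (a - m) ^ bBlack w j * (a - m + 1) ^ (B - bBlack w j)

lemma card_filter_bottomRedAt_eq {R B : ℕ} {w : Fin n → Bool}
    (hw : #{i | w i = true} = R) (hb : #{i | w i = false} = B) {r : Fin n} (hr : w r = true)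
    (k : Fin a) :
    #{f ∈ bottomRedAt w r | f r = k} = summand R B a w (k + 1) (numRedsUpTo w r) := by
  have hlt := numRedsUpTo_eq_card_lt_add_one hr
  have hgt := numRedsUpTo_add_card_gt w r
  have hblack := card_black_lt_add_card_black_gt hr
  have hk : a - ((k : ℕ) + 1) + 1 = a - k := by omega
  have hred_lt : #{i | w i = true ∧ i < r} = numRedsUpTo w r - 1 := by omega
  have hred_gt : #{i | w i = true ∧ r < i} = R - numRedsUpTo w r := by omega
  have hblack_gt : #{i | w i = false ∧ r < i} = B - #{i | w i = false ∧ i < r} := by omega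
  rw [card_filter_bottomRedAt_eq_prod hr, summand, bBlack_numRedsUpTo hr, Nat.add_sub_cancel, hk,
    hred_lt, hred_gt, hblack_gt]
  ring

lemma card_bottomRedAt_eq {R B : ℕ} {w : Fin n → Bool}
    (hw : #{i | w i = true} = R) (hb : #{i | w i = false} = B) {r : Fin n} (hr : w r = true) :
    #(bottomRedAt (a := a) w r) = ∑ k : Fin a, summand R B a w (k + 1) (numRedsUpTo w r) := by
  rw [card_eq_sum_card_fiberwise fun f _ => mem_univ (f r)]
  exact sum_congr rfl fun k _ => card_filter_bottomRedAt_eq hw hb hr k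

lemma card_black_eq {R B : ℕ} {w : Fin (R + B) → Bool} (hw : #{i | w i = true} = R) :
    #{i | w i = false} = B := by
  have := card_filter_add_card_filter_not (s := univ) fun i => w i = true
  simp only [Bool.not_eq_true, hw, card_univ, Fintype.card_fin] at this
  omega

end RedBlackShuffle

lemma Fin.sum_univ_add_one_eq_sum_Icc {M : Type*} [AddCommMonoid M] (a : ℕ) (G : ℕ → M) :
    ∑ k : Fin a, G (k + 1) = ∑ m ∈ Icc 1 a, G m := by
  rw [Fin.sum_univ_eq_sum_range (fun k => G (k + 1)), range_eq_Ico, sum_Ico_add', zero_add,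
    Ico_add_one_right_eq_Icc]

theorem statement6_general (R B a : ℕ) (hR : 1 ≤ R)
    (w : Fin (R + B) → Bool)
    (hw : (Finset.univ.filter fun i => w i = true).card = R) :
    (Finset.univ.filter fun f : Fin (R + B) → Fin a => wcolor R f = w).card =
      (∑ k ∈ Finset.Icc 1 a, ∑ j ∈ Finset.Icc 1 R,
        (k - 1) ^ (R - j) * k ^ (j - 1) * (a - k) ^ (bBlack w j) *
          (a - k + 1) ^ (B - bBlack w j)) ∧
    (((Finset.univ.filter fun f : Fin (R + B) → Fin a => wcolor R f = w).card : ℝ) /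
        (a : ℝ) ^ (R + B) =
      ((∑ k ∈ Finset.Icc 1 a, ∑ j ∈ Finset.Icc 1 R,
        (k - 1) ^ (R - j) * k ^ (j - 1) * (a - k) ^ (bBlack w j) *
          (a - k + 1) ^ (B - bBlack w j) : ℕ) : ℝ) / (a : ℝ) ^ (R + B)) := by
  open RedBlackShuffle in
  have hcount : #{f : Fin (R + B) → Fin a | wcolor R f = w} =
      ∑ m ∈ Icc 1 a, ∑ j ∈ Icc 1 R, summand R B a w m j := by
    rw [card_filter_wcolor_eq_sum hR hw,
      sum_congr rfl fun r hr => card_bottomRedAt_eq hw (card_black_eq hw) (by simpa using hr),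
      sum_comm, ← Fin.sum_univ_add_one_eq_sum_Icc]
    exact sum_congr rfl fun k _ => sum_red_numRedsUpTo hw _
  exact ⟨hcount, by rw [hcount]; rfl⟩

/-- The number of shuffle words producing the color pattern `w` from the deck of `R` reds
atop `B` blacks, and hence the probability `Q_a(w)`. -/
theorem statement6 (R B a : ℕ) (hR : 1 ≤ R) (hB : 1 ≤ B) (ha : 1 ≤ a)
    (w : Fin (R + B) → Bool)
    (hw : (Finset.univ.filter fun i => w i = true).card = R) :
    (Finset.univ.filter fun f : Fin (R + B) → Fin a => wcolor R f = w).card =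
      (∑ k ∈ Finset.Icc 1 a, ∑ j ∈ Finset.Icc 1 R,
        (k - 1) ^ (R - j) * k ^ (j - 1) * (a - k) ^ (bBlack w j) *
          (a - k + 1) ^ (B - bBlack w j)) ∧
    (((Finset.univ.filter fun f : Fin (R + B) → Fin a => wcolor R f = w).card : ℝ) /
        (a : ℝ) ^ (R + B) =
      ((∑ k ∈ Finset.Icc 1 a, ∑ j ∈ Finset.Icc 1 R,
        (k - 1) ^ (R - j) * k ^ (j - 1) * (a - k) ^ (bBlack w j) *
          (a - k + 1) ^ (B - bBlack w j) : ℕ) : ℝ) / (a : ℝ) ^ (R + B)) :=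
  statement6_general R B a hR w hw
end

section
/- Let R, B ≥ 1 and a ≥ 1 be integers and n = R + B. The number of words f : {1,…,n} → {1,…,a} such that w(f) is the original pattern (R reds followed by B blacks) is Σ_{k=1}^{a} (k^R - (k-1)^R)·(a-k+1)^B, and the number of words f such that w(f) is the reversed pattern (B blacks followed by R reds) is Σ_{k=1}^{a-1} (a-k)^B·(k^R - (k-1)^R). Hence the respective probabilities under an a-shuffle are these sums divided by a^{R+B}. -/
open Finset

/-! ### Auxiliary counting lemmas -/

lemma card_lt' (a k : ℕ) (h : k ≤ a) :
    ((univ : Finset (Fin a)).filter fun x : Fin a => (x : ℕ) < k).card = k := by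
  have e : ((univ : Finset (Fin a)).filter fun x : Fin a => (x : ℕ) < k)
      = Finset.map (Fin.castLEEmb h) univ := by
    ext x
    simp only [mem_filter, mem_univ, true_and, mem_map, Fin.castLEEmb_apply]
    constructor
    · intro hx; exact ⟨⟨x, hx⟩, by ext; simp⟩
    · rintro ⟨y, rfl⟩; simp [Fin.castLE]
  rw [e, card_map, card_univ, Fintype.card_fin]

lemma card_not_lt' (a k : ℕ) (h : k ≤ a) :
    ((univ : Finset (Fin a)).filter fun x : Fin a => ¬ (x : ℕ) < k).card = a - k := by
  have h2 := Finset.card_filter_add_card_filter_not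
    (s := (univ : Finset (Fin a))) (p := fun x : Fin a => (x : ℕ) < k)
  rw [card_lt' a k h, card_univ, Fintype.card_fin] at h2
  omega

lemma card_pi_filter {n a : ℕ} (s : Fin n → Finset (Fin a)) :
    ((univ : Finset (Fin n → Fin a)).filter fun f => ∀ i, f i ∈ s i).card
      = ∏ i, (s i).card := by
  rw [← Fintype.card_piFinset]
  congr 1
  ext f
  simp [Fintype.mem_piFinset]

lemma card_two_sided {n a : ℕ} (P : Fin n → Prop) [DecidablePred P] (s t : Finset (Fin a)) :
    ((univ : Finset (Fin n → Fin a)).filter fun f =>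
        (∀ i, P i → f i ∈ s) ∧ (∀ i, ¬ P i → f i ∈ t)).card
      = s.card ^ (univ.filter P).card * t.card ^ (univ.filter fun i => ¬ P i).card := by
  have e : ((univ : Finset (Fin n → Fin a)).filter fun f =>
        (∀ i, P i → f i ∈ s) ∧ (∀ i, ¬ P i → f i ∈ t))
      = (univ : Finset (Fin n → Fin a)).filter fun f => ∀ i, f i ∈ if P i then s else t := by
    ext f
    simp only [mem_filter, mem_univ, true_and]
    constructor
    · rintro ⟨h1, h2⟩ i
      by_cases hP : P i
      · simpa [hP] using h1 i hP
      · simpa [hP] using h2 i hP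
    · intro h
      refine ⟨fun i hP => ?_, fun i hP => ?_⟩
      · simpa [hP] using h i
      · simpa [hP] using h i
  rw [e, card_pi_filter]
  have e2 : ∀ i, (if P i then s else t).card = if P i then s.card else t.card := fun i => by
    split <;> rfl
  simp_rw [e2]
  rw [Finset.prod_ite, Finset.prod_const, Finset.prod_const]

/-! ### Properties of `pos` -/

lemma pos_disjoint {n a : ℕ} (f : Fin n → Fin a) (i : Fin n) :
    Disjoint ((univ : Finset (Fin n)).filter fun l => f l < f i)
      ((univ : Finset (Fin n)).filter fun l => l ≤ i ∧ f l = f i) := by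
  rw [Finset.disjoint_left]
  intro l hl hl'
  simp only [mem_filter, mem_univ, true_and] at hl hl'
  exact absurd hl'.2 (ne_of_lt hl)

lemma pos_eq_card_union {n a : ℕ} (f : Fin n → Fin a) (i : Fin n) :
    pos f i = (((univ : Finset (Fin n)).filter fun l => f l < f i)
      ∪ ((univ : Finset (Fin n)).filter fun l => l ≤ i ∧ f l = f i)).card :=
  (card_union_of_disjoint (pos_disjoint f i)).symm

lemma pos_lt_pos {n a : ℕ} (f : Fin n → Fin a) {i j : Fin n}
    (h : f j < f i ∨ (f j = f i ∧ j < i)) : pos f j < pos f i := by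
  rcases h with h | ⟨hfe, hji⟩
  · have h1 : (((univ : Finset (Fin n)).filter fun l => f l < f j)
        ∪ ((univ : Finset (Fin n)).filter fun l => l ≤ j ∧ f l = f j))
        ⊆ (univ : Finset (Fin n)).filter fun l => f l < f i := by
      intro l hl
      simp only [mem_union, mem_filter, mem_univ, true_and] at hl ⊢
      rcases hl with h' | ⟨_, h'⟩
      · exact lt_trans h' h
      · exact h' ▸ h
    have h2 : 0 < ((univ : Finset (Fin n)).filter fun l => l ≤ i ∧ f l = f i).card :=
      Finset.card_pos.mpr ⟨i, by simp⟩
    have h3 : pos f j ≤ ((univ : Finset (Fin n)).filter fun l => f l < f i).card := by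
      rw [pos_eq_card_union]; exact card_le_card h1
    unfold pos at *
    omega
  · unfold pos
    have h1 : ((univ : Finset (Fin n)).filter fun l => f l < f j)
        = (univ : Finset (Fin n)).filter fun l => f l < f i := by
      simp_rw [hfe]
    have h2 : ((univ : Finset (Fin n)).filter fun l => l ≤ j ∧ f l = f j)
        ⊂ (univ : Finset (Fin n)).filter fun l => l ≤ i ∧ f l = f i := by
      constructor
      · intro l hl
        simp only [mem_filter, mem_univ, true_and] at hl ⊢
        exact ⟨le_trans hl.1 hji.le, hl.2.trans hfe⟩
      · intro hsub
        have := hsub (by simp : i ∈ _)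
        simp only [mem_filter, mem_univ, true_and] at this
        exact absurd this.1 (not_le.mpr hji)
    have h3 := Finset.card_lt_card h2
    rw [h1]
    omega

/-! ### Characterizations of the two patterns -/

lemma top_iff {R B a : ℕ} (hR : 1 ≤ R) (f : Fin (R + B) → Fin a) :
    (∀ i : Fin (R + B), (pos f i ≤ R ↔ (i : ℕ) < R)) ↔
      (∀ i j : Fin (R + B), (i : ℕ) < R → ¬ (j : ℕ) < R → f i ≤ f j) := by
  constructor
  · intro hp i j hi hj
    by_contra hlt
    push_neg at hlt
    have h1 := pos_lt_pos f (Or.inl hlt)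
    have h2 : pos f i ≤ R := (hp i).mpr hi
    have h3 : ¬ pos f j ≤ R := fun h => hj ((hp j).mp h)
    omega
  · intro hc i
    constructor
    · intro hpos
      by_contra hi
      have hsub : insert i ((univ : Finset (Fin (R+B))).filter fun l : Fin (R+B) => (l : ℕ) < R)
          ⊆ ((univ : Finset (Fin (R+B))).filter fun l => f l < f i)
            ∪ ((univ : Finset (Fin (R+B))).filter fun l => l ≤ i ∧ f l = f i) := by
        intro l hl
        simp only [mem_insert, mem_filter, mem_univ, true_and, mem_union] at hl ⊢
        rcases hl with rfl | hl
        · exact Or.inr ⟨le_refl _, rfl⟩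
        · rcases lt_or_eq_of_le (hc l i hl hi) with h | h
          · exact Or.inl h
          · exact Or.inr ⟨by rw [Fin.le_def]; omega, h⟩
      have hcard : (insert i ((univ : Finset (Fin (R+B))).filter
          fun l : Fin (R+B) => (l : ℕ) < R)).card = R + 1 := by
        rw [Finset.card_insert_of_notMem (by simp [hi]), card_lt' (R+B) R (Nat.le_add_right R B)]
      have := card_le_card hsub
      rw [hcard, ← pos_eq_card_union] at this
      omega
    · intro hi
      rw [pos_eq_card_union]
      calc (((univ : Finset (Fin (R+B))).filter fun l => f l < f i)
            ∪ ((univ : Finset (Fin (R+B))).filter fun l => l ≤ i ∧ f l = f i)).card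
          ≤ ((univ : Finset (Fin (R+B))).filter fun l : Fin (R+B) => (l : ℕ) < R).card := by
            apply card_le_card
            intro l hl
            simp only [mem_union, mem_filter, mem_univ, true_and] at hl ⊢
            rcases hl with h | ⟨hle, _⟩
            · by_contra hR'
              exact absurd (hc i l hi hR') (not_le.mpr h)
            · exact lt_of_le_of_lt (Fin.le_def.mp hle) hi
        _ = R := card_lt' (R+B) R (Nat.le_add_right R B)

lemma bot_iff {R B a : ℕ} (hB : 1 ≤ B) (f : Fin (R + B) → Fin a) :
    (∀ i : Fin (R + B), (pos f i ≤ R ↔ ¬ (i : ℕ) < B)) ↔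
      (∀ i j : Fin (R + B), ¬ (i : ℕ) < B → (j : ℕ) < B → f i < f j) := by
  constructor
  · intro hp i j hi hj
    by_contra hlt
    push_neg at hlt
    have h2 : pos f i ≤ R := (hp i).mpr hi
    have h3 : ¬ pos f j ≤ R := fun h => (hp j).mp h hj
    rcases lt_or_eq_of_le hlt with h | h
    · have := pos_lt_pos f (Or.inl h)
      omega
    · have := pos_lt_pos f (Or.inr ⟨h, by rw [Fin.lt_def]; omega⟩)
      omega
  · intro hc i
    constructor
    · intro hpos
      by_contra hi
      have hsub : insert i ((univ : Finset (Fin (R+B))).filter fun l : Fin (R+B) => ¬ (l : ℕ) < B)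
          ⊆ ((univ : Finset (Fin (R+B))).filter fun l => f l < f i)
            ∪ ((univ : Finset (Fin (R+B))).filter fun l => l ≤ i ∧ f l = f i) := by
        intro l hl
        simp only [mem_insert, mem_filter, mem_univ, true_and, mem_union] at hl ⊢
        rcases hl with rfl | hl
        · exact Or.inr ⟨le_refl _, rfl⟩
        · exact Or.inl (hc l i hl hi)
      have hcard : (insert i ((univ : Finset (Fin (R+B))).filter
          fun l : Fin (R+B) => ¬ (l : ℕ) < B)).card = R + 1 := by
        rw [Finset.card_insert_of_notMem (by simp [hi]),
          card_not_lt' (R+B) B (Nat.le_add_left B R)]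
        omega
      have := card_le_card hsub
      rw [hcard, ← pos_eq_card_union] at this
      omega
    · intro hi
      rw [pos_eq_card_union]
      calc (((univ : Finset (Fin (R+B))).filter fun l => f l < f i)
            ∪ ((univ : Finset (Fin (R+B))).filter fun l => l ≤ i ∧ f l = f i)).card
          ≤ ((univ : Finset (Fin (R+B))).filter fun l : Fin (R+B) => ¬ (l : ℕ) < B).card := by
            apply card_le_card
            intro l hl
            simp only [mem_union, mem_filter, mem_univ, true_and] at hl ⊢
            rcases hl with h | ⟨hle, hfe⟩
            · intro hlB
              exact absurd (hc i l hi hlB) (not_lt.mpr h.le)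
            · intro hlB
              exact absurd (hc i l hi hlB) (by rw [hfe]; exact lt_irrefl _)
        _ = R := by rw [card_not_lt' (R+B) B (Nat.le_add_left B R)]; omega

/-! ### The two counts -/

lemma count_le (R B a : ℕ) (hR : 1 ≤ R) (ha : 1 ≤ a) :
    ((univ : Finset (Fin (R + B) → Fin a)).filter fun f =>
        ∀ i j : Fin (R + B), (i : ℕ) < R → ¬ (j : ℕ) < R → f i ≤ f j).card
      = ∑ k ∈ Icc 1 a, (k ^ R - (k - 1) ^ R) * (a - k + 1) ^ B := by
  classical
  set s₀ : Finset (Fin (R + B)) := univ.filter fun i : Fin (R+B) => (i : ℕ) < R with hs₀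
  set M : (Fin (R + B) → Fin a) → ℕ := fun f => s₀.sup fun i => (f i : ℕ) + 1 with hM
  have hi₀ : (⟨0, by omega⟩ : Fin (R + B)) ∈ s₀ := by simp [hs₀]; omega
  have hmem : ∀ f ∈ (univ : Finset (Fin (R + B) → Fin a)).filter fun f =>
      ∀ i j : Fin (R + B), (i : ℕ) < R → ¬ (j : ℕ) < R → f i ≤ f j, M f ∈ Icc 1 a := by
    intro f _
    simp only [mem_Icc]
    constructor
    · calc 1 ≤ (f ⟨0, by omega⟩ : ℕ) + 1 := by omega
        _ ≤ M f := Finset.le_sup (f := fun i => (f i : ℕ) + 1) hi₀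
    · exact Finset.sup_le fun i _ => by have := (f i).isLt; omega
  rw [Finset.card_eq_sum_card_fiberwise hmem]
  refine Finset.sum_congr rfl fun k hk => ?_
  simp only [mem_Icc] at hk
  rw [Finset.filter_filter]
  have e : ((univ : Finset (Fin (R + B) → Fin a)).filter fun f =>
        (∀ i j : Fin (R + B), (i : ℕ) < R → ¬ (j : ℕ) < R → f i ≤ f j) ∧ M f = k)
      = ((univ : Finset (Fin (R + B) → Fin a)).filter fun f =>
          (∀ i : Fin (R+B), (i : ℕ) < R → f i ∈ (univ.filter fun x : Fin a => (x : ℕ) < k)) ∧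
          (∀ i : Fin (R+B), ¬ (i : ℕ) < R → f i ∈ (univ.filter fun x : Fin a => ¬ (x : ℕ) < k - 1)))
        \ ((univ : Finset (Fin (R + B) → Fin a)).filter fun f =>
          (∀ i : Fin (R+B), (i : ℕ) < R → f i ∈ (univ.filter fun x : Fin a => (x : ℕ) < k - 1)) ∧
          (∀ i : Fin (R+B), ¬ (i : ℕ) < R → f i ∈ (univ.filter fun x : Fin a => ¬ (x : ℕ) < k - 1))) := by
    ext f
    simp only [mem_sdiff, mem_filter, mem_univ, true_and]
    constructor
    · rintro ⟨hcond, hMk⟩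
      have hA1 : ∀ i : Fin (R + B), (i : ℕ) < R → (f i : ℕ) < k := by
        intro i hi
        have : (f i : ℕ) + 1 ≤ M f := Finset.le_sup (f := fun i => (f i : ℕ) + 1)
          (by simp [hs₀, hi])
        omega
      have hex : ∃ i₀ : Fin (R + B), (i₀ : ℕ) < R ∧ k - 1 ≤ (f i₀ : ℕ) := by
        by_contra hno
        push_neg at hno
        have : M f ≤ k - 1 := Finset.sup_le fun i hi => by
          have hi' : (i : ℕ) < R := by simpa [hs₀] using hi
          have := hno i hi'
          omega
        omega
      obtain ⟨i₀, hi₀R, hi₀v⟩ := hex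
      have hA2 : ∀ i : Fin (R + B), ¬ (i : ℕ) < R → ¬ (f i : ℕ) < k - 1 := by
        intro j hj
        have := hcond i₀ j hi₀R hj
        rw [Fin.le_def] at this
        omega
      refine ⟨⟨hA1, hA2⟩, fun hB => ?_⟩
      have := hB.1 i₀ hi₀R
      omega
    · rintro ⟨⟨hA1, hA2⟩, hnB⟩
      have hex : ¬ ∀ i : Fin (R + B), (i : ℕ) < R → (f i : ℕ) < k - 1 :=
        fun h => hnB ⟨h, hA2⟩
      push_neg at hex
      obtain ⟨i₀, hi₀R, hi₀v⟩ := hex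
      have hi₀v' : k - 1 ≤ (f i₀ : ℕ) := by omega
      have hcond : ∀ i j : Fin (R + B), (i : ℕ) < R → ¬ (j : ℕ) < R → f i ≤ f j := by
        intro i j hi hj
        rw [Fin.le_def]
        have h1 := hA1 i hi
        have h2 := hA2 j hj
        omega
      refine ⟨hcond, le_antisymm ?_ ?_⟩
      · exact Finset.sup_le fun i hi => by
          have hi' : (i : ℕ) < R := by simpa [hs₀] using hi
          have := hA1 i hi'
          omega
      · calc k ≤ (f i₀ : ℕ) + 1 := by omega
          _ ≤ M f := Finset.le_sup (f := fun i => (f i : ℕ) + 1) (by simp [hs₀, hi₀R])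
  rw [e, Finset.card_sdiff_of_subset]
  · rw [card_two_sided, card_two_sided]
    rw [card_lt' a k hk.2, card_lt' a (k-1) (by omega), card_not_lt' a (k-1) (by omega)]
    rw [card_lt' (R+B) R (Nat.le_add_right R B), card_not_lt' (R+B) R (Nat.le_add_right R B)]
    have e1 : R + B - R = B := by omega
    have e2 : a - (k - 1) = a - k + 1 := by omega
    rw [e1, e2, Nat.sub_mul]
  · intro f hf
    simp only [mem_filter, mem_univ, true_and] at hf ⊢
    exact ⟨fun i hi => by have := hf.1 i hi; omega, hf.2⟩

lemma count_lt (R B a : ℕ) (hR : 1 ≤ R) (hB : 1 ≤ B) (ha : 1 ≤ a) :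
    ((univ : Finset (Fin (R + B) → Fin a)).filter fun f =>
        ∀ i j : Fin (R + B), ¬ (i : ℕ) < B → (j : ℕ) < B → f i < f j).card
      = ∑ k ∈ Icc 1 (a - 1), (a - k) ^ B * (k ^ R - (k - 1) ^ R) := by
  classical
  have main : ((univ : Finset (Fin (R + B) → Fin a)).filter fun f =>
        ∀ i j : Fin (R + B), ¬ (i : ℕ) < B → (j : ℕ) < B → f i < f j).card
      = ∑ k ∈ Icc 1 a, (a - k) ^ B * (k ^ R - (k - 1) ^ R) := by
    set s₀ : Finset (Fin (R + B)) := univ.filter fun i : Fin (R+B) => ¬ (i : ℕ) < B with hs₀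
    set M : (Fin (R + B) → Fin a) → ℕ := fun f => s₀.sup fun i => (f i : ℕ) + 1 with hM
    have hi₀ : (⟨B, by omega⟩ : Fin (R + B)) ∈ s₀ := by simp [hs₀]
    have hmem : ∀ f ∈ (univ : Finset (Fin (R + B) → Fin a)).filter fun f =>
        ∀ i j : Fin (R + B), ¬ (i : ℕ) < B → (j : ℕ) < B → f i < f j, M f ∈ Icc 1 a := by
      intro f _
      simp only [mem_Icc]
      constructor
      · calc 1 ≤ (f ⟨B, by omega⟩ : ℕ) + 1 := by omega
          _ ≤ M f := Finset.le_sup (f := fun i => (f i : ℕ) + 1) hi₀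
      · exact Finset.sup_le fun i _ => by have := (f i).isLt; omega
    rw [Finset.card_eq_sum_card_fiberwise hmem]
    refine Finset.sum_congr rfl fun k hk => ?_
    simp only [mem_Icc] at hk
    rw [Finset.filter_filter]
    have e : ((univ : Finset (Fin (R + B) → Fin a)).filter fun f =>
          (∀ i j : Fin (R + B), ¬ (i : ℕ) < B → (j : ℕ) < B → f i < f j) ∧ M f = k)
        = ((univ : Finset (Fin (R + B) → Fin a)).filter fun f =>
            (∀ i : Fin (R+B), (i : ℕ) < B → f i ∈ (univ.filter fun x : Fin a => ¬ (x : ℕ) < k)) ∧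
            (∀ i : Fin (R+B), ¬ (i : ℕ) < B → f i ∈ (univ.filter fun x : Fin a => (x : ℕ) < k)))
          \ ((univ : Finset (Fin (R + B) → Fin a)).filter fun f =>
            (∀ i : Fin (R+B), (i : ℕ) < B → f i ∈ (univ.filter fun x : Fin a => ¬ (x : ℕ) < k)) ∧
            (∀ i : Fin (R+B), ¬ (i : ℕ) < B → f i ∈ (univ.filter fun x : Fin a => (x : ℕ) < k - 1))) := by
      ext f
      simp only [mem_sdiff, mem_filter, mem_univ, true_and]
      constructor
      · rintro ⟨hcond, hMk⟩
        have hA2 : ∀ i : Fin (R + B), ¬ (i : ℕ) < B → (f i : ℕ) < k := by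
          intro i hi
          have : (f i : ℕ) + 1 ≤ M f := Finset.le_sup (f := fun i => (f i : ℕ) + 1)
            (by simp only [hs₀, mem_filter, mem_univ, true_and]; exact hi)
          omega
        have hex : ∃ i₀ : Fin (R + B), ¬ (i₀ : ℕ) < B ∧ k - 1 ≤ (f i₀ : ℕ) := by
          by_contra hno
          push_neg at hno
          have : M f ≤ k - 1 := Finset.sup_le fun i hi => by
            have hi' : ¬ (i : ℕ) < B := by
              simp only [hs₀, mem_filter, mem_univ, true_and] at hi; exact hi
            have := hno i (by omega)
            omega
          omega
        obtain ⟨i₀, hi₀B, hi₀v⟩ := hex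
        have hA1 : ∀ j : Fin (R + B), (j : ℕ) < B → ¬ (f j : ℕ) < k := by
          intro j hj
          have := hcond i₀ j hi₀B hj
          rw [Fin.lt_def] at this
          omega
        refine ⟨⟨hA1, hA2⟩, fun hBc => ?_⟩
        have := hBc.2 i₀ hi₀B
        omega
      · rintro ⟨⟨hA1, hA2⟩, hnB⟩
        have hex : ¬ ∀ i : Fin (R + B), ¬ (i : ℕ) < B → (f i : ℕ) < k - 1 :=
          fun h => hnB ⟨hA1, h⟩
        push_neg at hex
        obtain ⟨i₀, hi₀B, hi₀v⟩ := hex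
        have hcond : ∀ i j : Fin (R + B), ¬ (i : ℕ) < B → (j : ℕ) < B → f i < f j := by
          intro i j hi hj
          rw [Fin.lt_def]
          have h1 := hA1 j hj
          have h2 := hA2 i hi
          omega
        refine ⟨hcond, le_antisymm ?_ ?_⟩
        · exact Finset.sup_le fun i hi => by
            have hi' : ¬ (i : ℕ) < B := by
              simp only [hs₀, mem_filter, mem_univ, true_and] at hi; exact hi
            have := hA2 i hi'
            omega
        · calc k ≤ (f i₀ : ℕ) + 1 := by omega
            _ ≤ M f := Finset.le_sup (f := fun i => (f i : ℕ) + 1)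
              (by simp only [hs₀, mem_filter, mem_univ, true_and]; omega)
    rw [e, Finset.card_sdiff_of_subset]
    · rw [card_two_sided, card_two_sided]
      rw [card_not_lt' a k hk.2, card_lt' a k hk.2, card_lt' a (k-1) (by omega)]
      rw [card_lt' (R+B) B (Nat.le_add_left B R), card_not_lt' (R+B) B (Nat.le_add_left B R)]
      have e1 : R + B - B = R := by omega
      rw [e1, Nat.mul_sub]
    · intro f hf
      simp only [mem_filter, mem_univ, true_and] at hf ⊢
      exact ⟨hf.1, fun i hi => by have := hf.2 i hi; omega⟩
  obtain ⟨a', rfl⟩ : ∃ a'', a = a'' + 1 := ⟨a - 1, (Nat.succ_pred_eq_of_pos ha).symm⟩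
  rw [main, Nat.add_sub_cancel, Finset.sum_Icc_succ_top (Nat.succ_le_succ (Nat.zero_le a')),
    Nat.sub_self, zero_pow (Nat.one_le_iff_ne_zero.mp hB), zero_mul, add_zero]

/-- Counts (and probabilities) of the original pattern (`R` reds then `B` blacks) and of the
reversed pattern (`B` blacks then `R` reds) after an `a`-shuffle. -/
theorem statement7 (R B a : ℕ) (hR : 1 ≤ R) (hB : 1 ≤ B) (ha : 1 ≤ a) :
    (Finset.univ.filter fun f : Fin (R + B) → Fin a =>
        wcolor R f = fun i : Fin (R + B) => decide ((i : ℕ) + 1 ≤ R)).card =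
      (∑ k ∈ Finset.Icc 1 a, (k ^ R - (k - 1) ^ R) * (a - k + 1) ^ B) ∧
    (Finset.univ.filter fun f : Fin (R + B) → Fin a =>
        wcolor R f = fun i : Fin (R + B) => decide (B < (i : ℕ) + 1)).card =
      (∑ k ∈ Finset.Icc 1 (a - 1), (a - k) ^ B * (k ^ R - (k - 1) ^ R)) ∧
    (((Finset.univ.filter fun f : Fin (R + B) → Fin a =>
        wcolor R f = fun i : Fin (R + B) => decide ((i : ℕ) + 1 ≤ R)).card : ℝ) /
          (a : ℝ) ^ (R + B) =
      ((∑ k ∈ Finset.Icc 1 a, (k ^ R - (k - 1) ^ R) * (a - k + 1) ^ B : ℕ) : ℝ) /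
          (a : ℝ) ^ (R + B)) ∧
    (((Finset.univ.filter fun f : Fin (R + B) → Fin a =>
        wcolor R f = fun i : Fin (R + B) => decide (B < (i : ℕ) + 1)).card : ℝ) /
          (a : ℝ) ^ (R + B) =
      ((∑ k ∈ Finset.Icc 1 (a - 1), (a - k) ^ B * (k ^ R - (k - 1) ^ R) : ℕ) : ℝ) /
          (a : ℝ) ^ (R + B)) := by
  classical
  have e1 : (Finset.univ.filter fun f : Fin (R + B) → Fin a =>
        wcolor R f = fun i : Fin (R + B) => decide ((i : ℕ) + 1 ≤ R))
      = (univ : Finset (Fin (R + B) → Fin a)).filter fun f =>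
        ∀ i j : Fin (R + B), (i : ℕ) < R → ¬ (j : ℕ) < R → f i ≤ f j := by
    apply Finset.filter_congr
    intro f _
    rw [funext_iff]
    simp only [wcolor, decide_eq_decide]
    rw [show (∀ i : Fin (R + B), (pos f i ≤ R ↔ (i : ℕ) + 1 ≤ R)) ↔
        (∀ i : Fin (R + B), (pos f i ≤ R ↔ (i : ℕ) < R)) from
      forall_congr' fun i => iff_congr Iff.rfl (by omega)]
    rw [top_iff hR f]
  have e2 : (Finset.univ.filter fun f : Fin (R + B) → Fin a =>
        wcolor R f = fun i : Fin (R + B) => decide (B < (i : ℕ) + 1))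
      = (univ : Finset (Fin (R + B) → Fin a)).filter fun f =>
        ∀ i j : Fin (R + B), ¬ (i : ℕ) < B → (j : ℕ) < B → f i < f j := by
    apply Finset.filter_congr
    intro f _
    rw [funext_iff]
    simp only [wcolor, decide_eq_decide]
    rw [show (∀ i : Fin (R + B), (pos f i ≤ R ↔ B < (i : ℕ) + 1)) ↔
        (∀ i : Fin (R + B), (pos f i ≤ R ↔ ¬ (i : ℕ) < B)) from
      forall_congr' fun i => iff_congr Iff.rfl (by omega)]
    rw [bot_iff hB f]
  have h1 := e1 ▸ count_le R B a hR ha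
  have h2 := e2 ▸ count_lt R B a hR hB ha
  exact ⟨h1, h2, by rw [h1], by rw [h2]⟩
end

section
/- Let R, B ≥ 1 be integers and n = R + B. For every color word w ∈ {red, black}^n with exactly R reds, the number of words f : {1,…,n} → {1,2} with w(f) = w equals 2^{h(w)} + 2^{t(w)} - 1, where h(w) is the number of red entries preceding the first black entry of w and t(w) is the number of black entries following the last red entry of w. Hence the probability that a single 2-shuffle of the deck with R reds atop B blacks produces w is (2^{h(w)} + 2^{t(w)} - 1)/2^{R+B}. -/
/-- `hCount w`: the number of red entries preceding the first black entry of `w`. -/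
def hCount {n : ℕ} (w : Fin n → Bool) : ℕ :=
  (Finset.univ.filter fun i : Fin n => ∀ i' ≤ i, w i' = true).card

/-- `tCount w`: the number of black entries following the last red entry of `w`. -/
def tCount {n : ℕ} (w : Fin n → Bool) : ℕ :=
  (Finset.univ.filter fun i : Fin n => ∀ i', i ≤ i' → w i' = false).card

namespace Statement8Aux

variable {n : ℕ}

def toS (f : Fin n → Fin 2) : Finset (Fin n) := Finset.univ.filter fun j => f j = 0

lemma mem_toS {f : Fin n → Fin 2} {j : Fin n} : j ∈ toS f ↔ f j = 0 := by simp [toS]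

lemma fcases (x : Fin 2) : x = 0 ∨ x = 1 := by omega

lemma pos_zero (f : Fin n → Fin 2) (i : Fin n) (h : f i = 0) :
    pos f i = (Finset.univ.filter fun j => j ≤ i ∧ f j = 0).card := by
  unfold pos; rw [h]
  have h0 : (Finset.univ.filter fun j : Fin n => f j < (0 : Fin 2)) = ∅ := by
    apply Finset.filter_false_of_mem; intro j _; omega
  rw [h0, Finset.card_empty, zero_add]

lemma pos_one (f : Fin n → Fin 2) (i : Fin n) (h : f i = 1) :
    pos f i = (toS f).card + (Finset.univ.filter fun j => j ≤ i ∧ f j = 1).card := by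
  unfold pos; rw [h]
  have h0 : (Finset.univ.filter fun j : Fin n => f j < (1 : Fin 2)) = toS f := by
    ext j
    simp only [Finset.mem_filter, Finset.mem_univ, true_and, mem_toS]
    omega
  rw [h0]

def Aset (w : Fin n → Bool) : Finset (Fin n) := Finset.univ.filter fun i => w i = true
def Hset (w : Fin n → Bool) : Finset (Fin n) :=
  Finset.univ.filter fun i => ∀ i' ≤ i, w i' = true
def Tset (w : Fin n → Bool) : Finset (Fin n) :=
  Finset.univ.filter fun i => ∀ i', i ≤ i' → w i' = false

lemma mem_Aset {w : Fin n → Bool} {i : Fin n} : i ∈ Aset w ↔ w i = true := by simp [Aset]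
lemma mem_Hset {w : Fin n → Bool} {i : Fin n} : i ∈ Hset w ↔ ∀ i' ≤ i, w i' = true := by
  simp [Hset]
lemma mem_Tset {w : Fin n → Bool} {i : Fin n} : i ∈ Tset w ↔ ∀ i', i ≤ i' → w i' = false := by
  simp [Tset]

lemma Hsub (w : Fin n → Bool) : Hset w ⊆ Aset w := by
  intro i hi; exact mem_Aset.2 ((mem_Hset.1 hi) i le_rfl)

lemma Tdisj (w : Fin n → Bool) : Disjoint (Aset w) (Tset w) := by
  rw [Finset.disjoint_left]
  intro i hi hit
  have := (mem_Tset.1 hit) i le_rfl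
  rw [mem_Aset.1 hi] at this
  exact absurd this (by simp)

lemma wcolor_eq_iff (R : ℕ) (f : Fin n → Fin 2) (w : Fin n → Bool) :
    wcolor R f = w ↔ ∀ i, (pos f i ≤ R ↔ w i = true) := by
  rw [funext_iff]
  apply forall_congr'
  intro i
  unfold wcolor
  cases hwi : w i <;> simp

lemma key (R : ℕ) (w : Fin n → Bool) (hw : (Aset w).card = R) (f : Fin n → Fin 2) :
    wcolor R f = w ↔
      ((Aset w ⊆ toS f ∧ toS f ⊆ Aset w ∪ Tset w) ∨
       ((Aset w \ Hset w) ⊆ toS f ∧ toS f ⊆ Aset w)) := by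
  rw [wcolor_eq_iff]
  -- basic position facts
  have hposS : ∀ i, f i = 0 → pos f i ≤ (toS f).card := by
    intro i h
    rw [pos_zero f i h]
    apply Finset.card_le_card
    intro j hj
    simp only [Finset.mem_filter, Finset.mem_univ, true_and] at hj
    exact mem_toS.2 hj.2
  have hpos1 : ∀ i, f i = 1 → (toS f).card < pos f i := by
    intro i h
    rw [pos_one f i h]
    have hp : 0 < (Finset.univ.filter fun j => j ≤ i ∧ f j = 1).card :=
      Finset.card_pos.2 ⟨i, by simp [h]⟩
    omega
  constructor
  · intro hP
    have hPf : ∀ i, w i = false ↔ R < pos f i := by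
      intro i
      have h := hP i
      cases hwi : w i <;> simp [hwi] at h ⊢ <;> omega
    rcases le_total (toS f).card R with hm | hm
    · right
      have hSA : toS f ⊆ Aset w := by
        intro s hs
        have h0 : f s = 0 := mem_toS.1 hs
        exact mem_Aset.2 ((hP s).1 (le_trans (hposS s h0) hm))
      refine ⟨?_, hSA⟩
      intro a ha
      rw [Finset.mem_sdiff] at ha
      by_contra haS
      apply ha.2
      have h1 : f a = 1 := by
        rcases fcases (f a) with h | h
        · exact absurd (mem_toS.2 h) haS
        · exact h
      rw [mem_Hset]
      intro i' hi'
      rcases fcases (f i') with h0' | h1'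
      · exact (hP i').1 (le_trans (hposS i' h0') hm)
      · have hpa : pos f a ≤ R := (hP a).2 (mem_Aset.1 ha.1)
        have hle : pos f i' ≤ pos f a := by
          rw [pos_one f a h1, pos_one f i' h1']
          have hcc : (Finset.univ.filter fun j => j ≤ i' ∧ f j = 1).card ≤
              (Finset.univ.filter fun j => j ≤ a ∧ f j = 1).card := by
            apply Finset.card_le_card
            intro j hj
            simp only [Finset.mem_filter, Finset.mem_univ, true_and] at hj ⊢
            exact ⟨le_trans hj.1 hi', hj.2⟩
          omega
        exact (hP i').1 (le_trans hle hpa)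
    · left
      have hAS : Aset w ⊆ toS f := by
        intro a ha
        by_contra haS
        have h1 : f a = 1 := by
          rcases fcases (f a) with h | h
          · exact absurd (mem_toS.2 h) haS
          · exact h
        have h2 := hpos1 a h1
        have hpa : pos f a ≤ R := (hP a).2 (mem_Aset.1 ha)
        omega
      refine ⟨hAS, ?_⟩
      intro s hs
      by_cases hsa : s ∈ Aset w
      · exact Finset.mem_union_left _ hsa
      apply Finset.mem_union_right
      have h0 : f s = 0 := mem_toS.1 hs
      have hws : w s = false := by
        cases hwi : w s
        · rfl
        · exact absurd (mem_Aset.2 hwi) hsa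
      have hcs : R < pos f s := (hPf s).1 hws
      rw [mem_Tset]
      intro i' hi'
      rcases fcases (f i') with h0' | h1'
      · have hmono : pos f s ≤ pos f i' := by
          rw [pos_zero f s h0, pos_zero f i' h0']
          apply Finset.card_le_card
          intro j hj
          simp only [Finset.mem_filter, Finset.mem_univ, true_and] at hj ⊢
          exact ⟨le_trans hj.1 hi', hj.2⟩
        exact (hPf i').2 (by omega)
      · have := hpos1 i' h1'
        exact (hPf i').2 (by omega)
  · intro hRHS i
    have hPf : (R < pos f i → w i = false) → (pos f i ≤ R ↔ w i = true) → True := fun _ _ => trivial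
    rcases hRHS with ⟨hAS, hST⟩ | ⟨hAHS, hSA⟩
    · -- left case : Aset ⊆ S ⊆ Aset ∪ Tset
      have hRm : R ≤ (toS f).card := hw ▸ Finset.card_le_card hAS
      rcases fcases (f i) with h0 | h1
      · have hiS : i ∈ toS f := mem_toS.2 h0
        rcases Finset.mem_union.1 (hST hiS) with hiA | hiT
        · constructor
          · intro _; exact mem_Aset.1 hiA
          · intro _
            rw [pos_zero f i h0]
            calc (Finset.univ.filter fun j => j ≤ i ∧ f j = 0).card
                ≤ (Aset w).card := by
                  apply Finset.card_le_card
                  intro j hj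
                  simp only [Finset.mem_filter, Finset.mem_univ, true_and] at hj
                  rcases Finset.mem_union.1 (hST (mem_toS.2 hj.2)) with h | h
                  · exact h
                  · exfalso
                    have := (mem_Tset.1 h) i hj.1
                    rw [mem_Aset.1 hiA] at this
                    exact absurd this (by simp)
              _ = R := hw
        · have hwi : w i = false := (mem_Tset.1 hiT) i le_rfl
          have hiA : i ∉ Aset w := by
            rw [mem_Aset, hwi]; simp
          constructor
          · intro hle
            exfalso
            have hins : insert i (Aset w) ⊆ Finset.univ.filter fun j => j ≤ i ∧ f j = 0 := by
              intro j hj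
              rcases Finset.mem_insert.1 hj with rfl | hj
              · simp [h0]
              · simp only [Finset.mem_filter, Finset.mem_univ, true_and]
                refine ⟨?_, mem_toS.1 (hAS hj)⟩
                rcases le_total j i with h | h
                · exact h
                · exfalso
                  have := (mem_Tset.1 hiT) j h
                  rw [mem_Aset.1 hj] at this
                  exact absurd this (by simp)
            have hcard := Finset.card_le_card hins
            rw [Finset.card_insert_of_notMem hiA, hw] at hcard
            rw [pos_zero f i h0] at hle
            omega
          · intro h; rw [hwi] at h; exact absurd h (by simp)
      · -- f i = 1 : position too deep, and i not red
        have hdeep : R < pos f i := lt_of_le_of_lt hRm (hpos1 i h1)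
        have hiS : i ∉ toS f := by
          rw [mem_toS, h1]; simp
        have hiA : i ∉ Aset w := fun h => hiS (hAS h)
        constructor
        · intro h; omega
        · intro h; exact absurd (mem_Aset.2 h) hiA
    · -- right case : Aset \ Hset ⊆ S ⊆ Aset
      have hmR : (toS f).card ≤ R := hw ▸ Finset.card_le_card hSA
      have hcards : (Aset w \ toS f).card + (toS f).card = R := by
        rw [Finset.card_sdiff_add_card_eq_card hSA, hw]
      rcases fcases (f i) with h0 | h1
      · have hiS : i ∈ toS f := mem_toS.2 h0
        constructor
        · intro _; exact mem_Aset.1 (hSA hiS)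
        · intro _; exact le_trans (hposS i h0) hmR
      · have hiS : i ∉ toS f := by
          rw [mem_toS, h1]; simp
        cases hwi : w i
        · -- w i = false : show position is deep
          have hiA : i ∉ Aset w := by rw [mem_Aset, hwi]; simp
          constructor
          · intro hle
            exfalso
            have hins : insert i (Aset w \ toS f) ⊆
                Finset.univ.filter fun j => j ≤ i ∧ f j = 1 := by
              intro j hj
              rcases Finset.mem_insert.1 hj with rfl | hj
              · simp [h1]
              · rw [Finset.mem_sdiff] at hj
                have hjH : j ∈ Hset w := by
                  by_contra hjH
                  exact hj.2 (hAHS (Finset.mem_sdiff.2 ⟨hj.1, hjH⟩))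
                have hj1 : f j = 1 := by
                  rcases fcases (f j) with h | h
                  · exact absurd (mem_toS.2 h) hj.2
                  · exact h
                simp only [Finset.mem_filter, Finset.mem_univ, true_and]
                refine ⟨?_, hj1⟩
                rcases le_total j i with h | h
                · exact h
                · exfalso
                  have := (mem_Hset.1 hjH) i h
                  rw [hwi] at this
                  exact absurd this (by simp)
            have hcard := Finset.card_le_card hins
            have hiAS : i ∉ Aset w \ toS f := fun h => hiA (Finset.mem_sdiff.1 h).1
            rw [Finset.card_insert_of_notMem hiAS] at hcard
            rw [pos_one f i h1] at hle
            omega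
          · intro h; exact absurd h (by simp)
        · -- w i = true : i ∈ Aset \ S ⊆ Hset, position shallow
          have hiA : i ∈ Aset w := mem_Aset.2 hwi
          have hiH : i ∈ Hset w := by
            by_contra hiH
            exact hiS (hAHS (Finset.mem_sdiff.2 ⟨hiA, hiH⟩))
          constructor
          · intro _; rfl
          · intro _
            rw [pos_one f i h1]
            have hsub : (Finset.univ.filter fun j => j ≤ i ∧ f j = 1) ⊆ Aset w \ toS f := by
              intro j hj
              simp only [Finset.mem_filter, Finset.mem_univ, true_and] at hj
              rw [Finset.mem_sdiff]
              constructor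
              · exact mem_Aset.2 ((mem_Hset.1 hiH) j hj.1)
              · rw [mem_toS, hj.2]; simp
            have := Finset.card_le_card hsub
            omega

lemma count (R : ℕ) (w : Fin n → Bool) (hw : (Aset w).card = R) :
    (Finset.univ.filter fun S : Finset (Fin n) =>
      ((Aset w ⊆ S ∧ S ⊆ Aset w ∪ Tset w) ∨ ((Aset w \ Hset w) ⊆ S ∧ S ⊆ Aset w))).card =
      2 ^ (Hset w).card + 2 ^ (Tset w).card - 1 := by
  have hfilter : (Finset.univ.filter fun S : Finset (Fin n) =>
      ((Aset w ⊆ S ∧ S ⊆ Aset w ∪ Tset w) ∨ ((Aset w \ Hset w) ⊆ S ∧ S ⊆ Aset w))) =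
      Finset.Icc (Aset w) (Aset w ∪ Tset w) ∪ Finset.Icc (Aset w \ Hset w) (Aset w) := by
    ext S
    simp only [Finset.mem_filter, Finset.mem_univ, true_and, Finset.mem_union, Finset.mem_Icc,
      Finset.le_iff_subset]
  rw [hfilter]
  have h1 : (Finset.Icc (Aset w) (Aset w ∪ Tset w)).card = 2 ^ (Tset w).card := by
    rw [Finset.card_Icc_finset Finset.subset_union_left]
    congr 1
    rw [Finset.card_union_of_disjoint (Tdisj w)]
    omega
  have h2 : (Finset.Icc (Aset w \ Hset w) (Aset w)).card = 2 ^ (Hset w).card := by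
    rw [Finset.card_Icc_finset Finset.sdiff_subset]
    congr 1
    have hHcard : (Hset w).card ≤ (Aset w).card := Finset.card_le_card (Hsub w)
    rw [Finset.card_sdiff_of_subset (Hsub w)]
    omega
  have hinter : Finset.Icc (Aset w) (Aset w ∪ Tset w) ∩ Finset.Icc (Aset w \ Hset w) (Aset w) =
      {Aset w} := by
    ext S
    simp only [Finset.mem_inter, Finset.mem_Icc, Finset.mem_singleton, Finset.le_iff_subset]
    constructor
    · rintro ⟨⟨hAS, _⟩, ⟨_, hSA⟩⟩
      exact Finset.Subset.antisymm hSA hAS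
    · rintro rfl
      exact ⟨⟨Finset.Subset.refl _, Finset.subset_union_left⟩,
        ⟨Finset.sdiff_subset, Finset.Subset.refl _⟩⟩
  have hcu := Finset.card_union_add_card_inter
    (Finset.Icc (Aset w) (Aset w ∪ Tset w)) (Finset.Icc (Aset w \ Hset w) (Aset w))
  rw [hinter, h1, h2, Finset.card_singleton] at hcu
  omega

lemma card_fun_eq (R : ℕ) (w : Fin n → Bool) (hw : (Aset w).card = R) :
    (Finset.univ.filter fun f : Fin n → Fin 2 => wcolor R f = w).card =
    (Finset.univ.filter fun S : Finset (Fin n) =>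
      ((Aset w ⊆ S ∧ S ⊆ Aset w ∪ Tset w) ∨ ((Aset w \ Hset w) ⊆ S ∧ S ⊆ Aset w))).card := by
  have hback : ∀ S : Finset (Fin n), toS (fun j => if j ∈ S then (0 : Fin 2) else 1) = S := by
    intro S
    ext j
    rw [mem_toS]
    by_cases hj : j ∈ S <;> simp [hj]
  apply Finset.card_bij' (fun f _ => toS f)
    (fun S _ => fun j => if j ∈ S then (0 : Fin 2) else 1)
  · intro f hf
    simp only [Finset.mem_filter, Finset.mem_univ, true_and] at hf ⊢
    exact (key R w hw f).1 hf
  · intro S hS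
    simp only [Finset.mem_filter, Finset.mem_univ, true_and] at hS ⊢
    apply (key R w hw _).2
    rw [hback S]
    exact hS
  · intro f _
    funext j
    rcases fcases (f j) with h | h
    · simp [mem_toS, h]
    · have : j ∉ toS f := by rw [mem_toS, h]; simp
      simp [this, h]
  · intro S _
    exact hback S

end Statement8Aux


/-- The number of `2`-shuffle words producing the color pattern `w` from the deck of `R`
reds atop `B` blacks is `2^{h(w)} + 2^{t(w)} - 1`, and hence the probability is
`(2^{h(w)} + 2^{t(w)} - 1)/2^{R+B}`. -/
theorem statement8 (R B : ℕ) (hR : 1 ≤ R) (hB : 1 ≤ B)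
    (w : Fin (R + B) → Bool)
    (hw : (Finset.univ.filter fun i => w i = true).card = R) :
    (Finset.univ.filter fun f : Fin (R + B) → Fin 2 => wcolor R f = w).card =
      2 ^ (hCount w) + 2 ^ (tCount w) - 1 ∧
    (((Finset.univ.filter fun f : Fin (R + B) → Fin 2 => wcolor R f = w).card : ℝ) /
        (2 : ℝ) ^ (R + B) =
      ((2 ^ (hCount w) + 2 ^ (tCount w) - 1 : ℕ) : ℝ) / (2 : ℝ) ^ (R + B)) := by
  have hw' : (Statement8Aux.Aset w).card = R := hw
  have h1 : (Finset.univ.filter fun f : Fin (R + B) → Fin 2 => wcolor R f = w).card =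
      2 ^ (hCount w) + 2 ^ (tCount w) - 1 := by
    rw [Statement8Aux.card_fun_eq R w hw', Statement8Aux.count R w hw']
    rfl
  exact ⟨h1, by rw [h1]⟩
end

section
/- Let m ≥ 1, let D_1,…,D_m ≥ 1 be integers with n = D_1+…+D_m, and let a ≥ 1 be an integer. For every label word w ∈ {1,…,m}^n containing exactly D_t entries equal to t for each t, the number of words f : {1,…,n} → {1,…,a} with v(f) = w satisfies #{f : v(f) = w*} ≤ #{f : v(f) = w} ≤ #{f : v(f) = v_0}, where v_0 is the sorted pattern (D_1 ones, then D_2 twos, …, then D_m m's) and w* is the reversed pattern (D_m m's, then D_{m-1} (m-1)'s, …, then D_1 ones). In particular, under an a-shuffle of the sorted deck the most likely pattern is v_0, the least likely is w*, and the separation distance is achieved at w*. -/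
/-- Partial sums of the pile sizes `D 0, D 1, …` (0-indexed: `D t` is the paper's `D_{t+1}`). -/
def dPrefix (D : ℕ → ℕ) (t : ℕ) : ℕ := ∑ s ∈ Finset.range t, D s

/-- The (0-based) label carried by 0-based original position `q` in the sorted deck
`D 0` cards labelled `0`, then `D 1` cards labelled `1`, …, `D (m-1)` cards labelled `m-1`. -/
def labelOf (D : ℕ → ℕ) (m q : ℕ) : ℕ :=
  ((Finset.range m).filter fun t => dPrefix D (t + 1) ≤ q).card

/-- The label pattern `v(f)` produced by the shuffle word `f` from the sorted deck. -/
def vpat (D : ℕ → ℕ) (m : ℕ) {n a : ℕ} (f : Fin n → Fin a) : Fin n → ℕ :=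
  fun i => labelOf D m (pos f i - 1)

open Finset Function

section Rearrangement

variable {ι β : Type*} [Fintype ι] [DecidableEq β]

theorem exists_perm_comp_eq_of_card_fiber_eq {v w : ι → β}
    (h : ∀ t, #{i | v i = t} = #{i | w i = t}) : ∃ π : Equiv.Perm ι, v ∘ π = w := by
  have e : ∀ t, {i // w i = t} ≃ {i // v i = t} := fun t =>
    Fintype.equivOfCardEq (by simp only [Fintype.card_subtype, h])
  exact ⟨Equiv.ofFiberEquiv e, funext (Equiv.ofFiberEquiv_map e)⟩

theorem apply_lt_of_fiber_sizes {n m : ℕ} {D : ℕ → ℕ} (hn : n = ∑ t ∈ range m, D t)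
    {w : Fin n → ℕ} (hw : ∀ t < m, #{i | w i = t} = D t) (i : Fin n) : w i < m := by
  have hcover : #{i | w i ∈ range m} = #(univ : Finset (Fin n)) := by
    rw [← sum_card_fiberwise_eq_card_filter, card_univ, Fintype.card_fin]
    exact (sum_congr rfl fun t ht => hw t (mem_range.mp ht)).trans hn.symm
  simpa using card_filter_eq_iff.mp hcover i (mem_univ i)

theorem exists_perm_comp_eq_of_fiber_sizes {n m : ℕ} {D : ℕ → ℕ}
    (hn : n = ∑ t ∈ range m, D t) {v w : Fin n → ℕ}
    (hv : ∀ t < m, #{i | v i = t} = D t) (hw : ∀ t < m, #{i | w i = t} = D t) :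
    ∃ π : Equiv.Perm (Fin n), v ∘ π = w := by
  refine exists_perm_comp_eq_of_card_fiber_eq fun t => ?_
  by_cases ht : t < m
  · rw [hv t ht, hw t ht]
  · have hempty (u : Fin n → ℕ) (hu : ∀ t < m, #{i | u i = t} = D t) : #{i | u i = t} = 0 :=
      card_eq_zero.mpr (filter_eq_empty_iff.mpr fun i _ hi =>
        ht (hi ▸ apply_lt_of_fiber_sizes hn hu i))
    rw [hempty v hv, hempty w hw]

end Rearrangement

section Labels

variable {D : ℕ → ℕ} {m : ℕ}

theorem dPrefix_mono : Monotone (dPrefix D) := fun _ _ h =>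
  sum_le_sum_of_subset (range_subset_range.mpr h)

theorem labelOf_mono : Monotone (labelOf D m) := fun _ _ h =>
  card_le_card (monotone_filter_right _ fun _ _ ht => ht.trans h)

theorem lt_labelOf_iff {s q : ℕ} (hs : s < m) : s < labelOf D m q ↔ dPrefix D (s + 1) ≤ q := by
  constructor
  · intro h
    by_contra! hq
    have hsub : {t ∈ range m | dPrefix D (t + 1) ≤ q} ⊆ range s := fun t ht => by
      simp only [mem_filter, mem_range] at ht ⊢
      by_contra! hst
      exact (ht.2.trans_lt hq).not_ge (dPrefix_mono (by omega))
    exact (lt_irrefl s) (h.trans_le ((card_le_card hsub).trans_eq (card_range s)))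
  · intro hq
    have hsub : range (s + 1) ⊆ {t ∈ range m | dPrefix D (t + 1) ≤ q} := fun t ht => by
      simp only [mem_filter, mem_range] at ht ⊢
      exact ⟨by omega, (dPrefix_mono (by omega)).trans hq⟩
    simpa [labelOf] using card_le_card hsub

theorem labelOf_lt_iff {t q : ℕ} (ht : t ≤ m) : labelOf D m q < t ↔ q < dPrefix D t := by
  cases t with
  | zero => simp [dPrefix]
  | succ s => rw [Nat.lt_succ_iff, ← not_lt, lt_labelOf_iff (by omega), not_le]

theorem card_filter_fin_eq_card_filter_range {n : ℕ} (p : ℕ → Prop) [DecidablePred p] :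
    #{i : Fin n | p i} = #{q ∈ range n | p q} :=
  card_nbij (↑) (fun i hi => by simpa using hi) Fin.val_injective.injOn
    fun q hq => by
      simp only [coe_filter, mem_range, Set.mem_ofPred_eq] at hq
      exact ⟨⟨q, hq.1⟩, by simpa using hq.2, rfl⟩

theorem card_labelOf_fiber {n : ℕ} (hn : n = ∑ t ∈ range m, D t) {t : ℕ} (ht : t < m) :
    #{i : Fin n | labelOf D m i = t} = D t := by
  have hfiber : {q ∈ range n | labelOf D m q = t} = Ico (dPrefix D t) (dPrefix D (t + 1)) := by
    have : dPrefix D (t + 1) ≤ n := hn ▸ dPrefix_mono (by omega : t + 1 ≤ m)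
    ext q
    have h1 := labelOf_lt_iff (D := D) (q := q) ht.le
    have h2 := labelOf_lt_iff (D := D) (q := q) (by omega : t + 1 ≤ m)
    simp only [mem_filter, mem_range, mem_Ico]
    omega
  rw [card_filter_fin_eq_card_filter_range (fun q => labelOf D m q = t), hfiber, Nat.card_Ico,
    dPrefix, dPrefix, sum_range_succ, Nat.add_sub_cancel_left]

end Labels

section TupleSort

variable {n : ℕ} {α : Type*} [LinearOrder α]

theorem Tuple.strictMono_toLex_comp_sort (f : Fin n → α) :
    StrictMono fun i => toLex (f (Tuple.sort f i), Tuple.sort f i) :=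
  (Subtype.strictMono_coe _).comp (Tuple.eq_sort_iff'.mp rfl)

theorem Tuple.card_toLex_le_eq (f : Fin n → α) (i : Fin n) :
    #{j | toLex (f j, j) ≤ toLex (f i, i)} = (Tuple.sort f).symm i + 1 := by
  set σ := Tuple.sort f
  have hσ := Tuple.strictMono_toLex_comp_sort f
  have : ({j | toLex (f j, j) ≤ toLex (f i, i)} : Finset (Fin n)) =
      (Iic (σ.symm i)).map σ.toEmbedding := by
    ext j
    rw [mem_map_equiv, mem_Iic, ← hσ.le_iff_le]
    simp [σ]
  rw [this, card_map, Fin.card_Iic]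

variable {β : Type*}

def LexMonotone [Preorder β] (f : Fin n → α) (w : Fin n → β) : Prop :=
  ∀ i j, toLex (f i, i) < toLex (f j, j) → w i ≤ w j

theorem Tuple.monotone_comp_sort_iff [Preorder β] {f : Fin n → α} {w : Fin n → β} :
    Monotone (w ∘ Tuple.sort f) ↔ LexMonotone f w := by
  set σ := Tuple.sort f
  have hσ := Tuple.strictMono_toLex_comp_sort f
  constructor
  · intro hw i j hij
    rw [← σ.apply_symm_apply i, ← σ.apply_symm_apply j] at hij ⊢
    exact hw (hσ.lt_iff_lt.mp hij).le
  · intro hw r s hrs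
    rcases hrs.eq_or_lt with rfl | hlt
    · exact le_rfl
    · exact hw _ _ (hσ hlt)

theorem comp_perm_eq_iff_monotone [PartialOrder β] {v w : Fin n → β} (hv : Monotone v)
    (hw : ∃ π : Equiv.Perm (Fin n), v ∘ π = w) (σ : Equiv.Perm (Fin n)) :
    w ∘ σ = v ↔ Monotone (w ∘ σ) := by
  obtain ⟨π, rfl⟩ := hw
  refine ⟨fun h => by rw [h]; exact hv, fun h => ?_⟩
  exact Tuple.unique_monotone (f := v) (σ := σ.trans π) (τ := Equiv.refl _) h hv

theorem LexMonotone.comp_of_monotone [Preorder β] {f : Fin n → α} {w : Fin n → β}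
    (h : LexMonotone f w) (σ : Equiv.Perm (Fin n)) (hσ : Monotone (w ∘ σ)) :
    LexMonotone (f ∘ σ) (w ∘ σ) := by
  intro i j hij
  rcases Prod.Lex.toLex_lt_toLex.mp hij with hlt | ⟨-, hlt⟩
  · exact h _ _ (Prod.Lex.toLex_lt_toLex.mpr (Or.inl hlt))
  · exact hσ hlt.le

theorem LexMonotone.comp_of_antitone [Preorder β] {f : Fin n → α} {w : Fin n → β}
    (h : LexMonotone f w) (hw : Antitone w) (σ : Equiv.Perm (Fin n)) :
    LexMonotone (f ∘ σ) (w ∘ σ) := by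
  intro i j hij
  rcases Prod.Lex.toLex_lt_toLex.mp hij with hlt | ⟨heq, -⟩
  · exact h _ _ (Prod.Lex.toLex_lt_toLex.mpr (Or.inl hlt))
  · rcases lt_or_ge (σ i) (σ j) with hlt | hge
    · exact h _ _ (Prod.Lex.toLex_lt_toLex.mpr (Or.inr ⟨heq, hlt⟩))
    · exact hw hge

end TupleSort

section Shuffle

variable {n a : ℕ}

theorem pos_eq_sort_symm_add_one (f : Fin n → Fin a) (i : Fin n) :
    pos f i = (Tuple.sort f).symm i + 1 := by
  rw [← Tuple.card_toLex_le_eq, pos, ← card_union_of_disjoint, ← filter_or]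
  · congr 1
    ext j
    simp only [mem_filter, mem_univ, true_and, Prod.Lex.toLex_le_toLex]
    tauto
  · exact disjoint_filter.mpr fun j _ hlt ⟨_, heq⟩ => hlt.ne heq

theorem vpat_eq_comp_sort_symm (D : ℕ → ℕ) (m : ℕ) (f : Fin n → Fin a) :
    vpat D m f = (fun i : Fin n => labelOf D m i) ∘ (Tuple.sort f).symm := by
  funext i
  simp [vpat, pos_eq_sort_symm_add_one]

theorem vpat_eq_iff_lexMonotone {D : ℕ → ℕ} {m : ℕ} {w : Fin n → ℕ}
    (hw : ∃ π : Equiv.Perm (Fin n), (fun i : Fin n => labelOf D m i) ∘ π = w)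
    (f : Fin n → Fin a) : vpat D m f = w ↔ LexMonotone f w := by
  rw [vpat_eq_comp_sort_symm, Equiv.comp_symm_eq, eq_comm,
    comp_perm_eq_iff_monotone (fun _ _ h => labelOf_mono h) hw, Tuple.monotone_comp_sort_iff]

theorem card_vpat_le_card_vpat_comp {D : ℕ → ℕ} {m : ℕ} {w : Fin n → ℕ}
    (hw : ∃ π : Equiv.Perm (Fin n), (fun i : Fin n => labelOf D m i) ∘ π = w)
    (σ : Equiv.Perm (Fin n))
    (h : ∀ f : Fin n → Fin a, LexMonotone f w → LexMonotone (f ∘ σ) (w ∘ σ)) :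
    #{f : Fin n → Fin a | vpat D m f = w} ≤ #{f : Fin n → Fin a | vpat D m f = w ∘ σ} := by
  have hwσ : ∃ π : Equiv.Perm (Fin n), (fun i : Fin n => labelOf D m i) ∘ π = w ∘ σ := by
    obtain ⟨π, hπ⟩ := hw
    exact ⟨σ.trans π, by rw [← hπ]; rfl⟩
  refine card_le_card_of_injOn (· ∘ σ) (fun f hf => ?_) σ.surjective.injective_comp_right.injOn
  simp only [coe_filter, Set.mem_ofPred_eq, mem_univ, true_and] at hf ⊢
  rw [vpat_eq_iff_lexMonotone hw] at hf
  rw [vpat_eq_iff_lexMonotone hwσ]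
  exact h f hf

end Shuffle

theorem statement10_general (m : ℕ) (D : ℕ → ℕ)
    (a : ℕ) (n : ℕ) (hn : n = ∑ t ∈ Finset.range m, D t)
    (w : Fin n → ℕ)
    (hw : ∀ t < m, (Finset.univ.filter fun i => w i = t).card = D t) :
    ((Finset.univ.filter fun f : Fin n → Fin a =>
        vpat D m f = fun i : Fin n => labelOf D m (n - 1 - (i : ℕ))).card ≤
      (Finset.univ.filter fun f : Fin n → Fin a => vpat D m f = w).card) ∧
    ((Finset.univ.filter fun f : Fin n → Fin a => vpat D m f = w).card ≤
      (Finset.univ.filter fun f : Fin n → Fin a =>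
        vpat D m f = fun i : Fin n => labelOf D m (i : ℕ)).card) ∧
    (1 - (n.factorial : ℝ) / (∏ t ∈ Finset.range m, ((D t).factorial : ℝ)) *
        (((Finset.univ.filter fun f : Fin n → Fin a =>
          vpat D m f = w).card : ℝ) / (a : ℝ) ^ n) ≤
      1 - (n.factorial : ℝ) / (∏ t ∈ Finset.range m, ((D t).factorial : ℝ)) *
        (((Finset.univ.filter fun f : Fin n → Fin a =>
          vpat D m f = fun i : Fin n => labelOf D m (n - 1 - (i : ℕ))).card : ℝ) /
            (a : ℝ) ^ n)) := by
  set v₀ : Fin n → ℕ := fun i => labelOf D m i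
  set w₀ : Fin n → ℕ := fun i => labelOf D m (n - 1 - i)
  have hv₀ : Monotone v₀ := fun _ _ h => labelOf_mono h
  have hw₀ : w₀ = v₀ ∘ Fin.revPerm := by
    funext i
    simp only [w₀, v₀, comp_apply, Fin.revPerm_apply, Fin.val_rev]
    congr 1
    omega
  obtain ⟨π, hπ⟩ :=
    exists_perm_comp_eq_of_fiber_sizes hn (fun t ht => card_labelOf_fiber hn ht) hw
  have hπ' : w ∘ π.symm = v₀ := (Equiv.comp_symm_eq _ _ _).mpr hπ.symm
  have hτ : w₀ ∘ (π.trans Fin.revPerm) = w := by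
    rw [hw₀, ← hπ]
    funext i
    simp [v₀]
  have hw₀_anti : Antitone w₀ := by
    rw [hw₀]
    exact hv₀.comp_antitone Fin.rev_anti
  have lower := hτ ▸ card_vpat_le_card_vpat_comp (a := a) ⟨_, hw₀.symm⟩ (π.trans Fin.revPerm)
    fun _ hf => hf.comp_of_antitone hw₀_anti _
  have upper := hπ' ▸ card_vpat_le_card_vpat_comp (a := a) ⟨π, hπ⟩ π.symm
    fun _ hf => hf.comp_of_monotone _ (hπ' ▸ hv₀)
  refine ⟨lower, upper, ?_⟩
  gcongr

/-- The most likely pattern after an `a`-shuffle of the sorted deck is the sorted pattern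
itself and the least likely is the reversed pattern `w*`; in particular the separation
distance is achieved at `w*`. -/
theorem statement10 (m : ℕ) (hm : 1 ≤ m) (D : ℕ → ℕ) (hD : ∀ t < m, 1 ≤ D t)
    (a : ℕ) (ha : 1 ≤ a) (n : ℕ) (hn : n = ∑ t ∈ Finset.range m, D t)
    (w : Fin n → ℕ)
    (hw : ∀ t < m, (Finset.univ.filter fun i => w i = t).card = D t) :
    ((Finset.univ.filter fun f : Fin n → Fin a =>
        vpat D m f = fun i : Fin n => labelOf D m (n - 1 - (i : ℕ))).card ≤
      (Finset.univ.filter fun f : Fin n → Fin a => vpat D m f = w).card) ∧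
    ((Finset.univ.filter fun f : Fin n → Fin a => vpat D m f = w).card ≤
      (Finset.univ.filter fun f : Fin n → Fin a =>
        vpat D m f = fun i : Fin n => labelOf D m (i : ℕ)).card) ∧
    (1 - (n.factorial : ℝ) / (∏ t ∈ Finset.range m, ((D t).factorial : ℝ)) *
        (((Finset.univ.filter fun f : Fin n → Fin a =>
          vpat D m f = w).card : ℝ) / (a : ℝ) ^ n) ≤
      1 - (n.factorial : ℝ) / (∏ t ∈ Finset.range m, ((D t).factorial : ℝ)) *
        (((Finset.univ.filter fun f : Fin n → Fin a =>
          vpat D m f = fun i : Fin n => labelOf D m (n - 1 - (i : ℕ))).card : ℝ) /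
            (a : ℝ) ^ n)) :=
  statement10_general m D a n hn w hw
end

section
/- Let n ≥ 1 and consider the alternating deck of 2n cards in which position p (from the top) is red if p is odd and black if p is even. Then the number of color words w ∈ {red, black}^{2n} that are a riffle of the cut at p for some odd p with 1 ≤ p ≤ 2n-1 equals 2^n, and the number of color words w that are a riffle of the cut at p for some even p with 0 ≤ p ≤ 2n equals 2^{n-1}. -/
/-- `w : Fin N → Bool` (red = `true`) is a riffle of the cut of the alternating deck
(position `p` red iff `p` odd, 1-based) at `p`: there is a `p`-element set `S` of final
positions receiving the top pile, such that the `j`-th smallest element of `S` is red iff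
`j` is odd, and the `j`-th smallest element of the complement is red iff `p + j` is odd. -/
def IsRiffle (N p : ℕ) (w : Fin N → Bool) : Prop :=
  ∃ S : Finset (Fin N), S.card = p ∧
    (∀ i ∈ S, w i = decide (Odd (S.filter fun i' => i' ≤ i).card)) ∧
    (∀ i ∉ S, w i = decide (Odd (p + ((Finset.univ \ S).filter fun i' => i' ≤ i).card)))

open Finset

namespace S16

lemma bool_resolve : ∀ {a b c : Bool}, a ≠ b → ¬(a = c) → b = c := by decide

lemma bnot_of_ne : ∀ {a b : Bool}, a ≠ b → (!a) = b := by decide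

variable {N : ℕ}


/-- rank of `i` in `S` -/
def rk (S : Finset (Fin N)) (i : Fin N) : ℕ := (S.filter fun i' => i' ≤ i).card

lemma rk_add_compl (S : Finset (Fin N)) (i : Fin N) :
    rk S i + rk (univ \ S) i = i.val + 1 := by
  classical
  rw [rk, rk, ← card_union_of_disjoint, ← filter_union]
  · rw [union_sdiff_of_subset (subset_univ S)]
    have : (univ.filter fun i' => i' ≤ i) = Iic i := by ext j; simp
    rw [this, Fin.card_Iic]
  · exact disjoint_filter_filter (disjoint_sdiff)

lemma rk_le_card (S : Finset (Fin N)) (i : Fin N) : rk S i ≤ S.card :=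
  card_le_card (filter_subset _ _)

lemma rk_succ (S : Finset (Fin N)) (a b : Fin N) (hab : a.val + 1 = b.val) :
    rk S b = rk S a + (if b ∈ S then 1 else 0) := by
  classical
  have h : ∀ j : Fin N, (j ≤ b) ↔ (j ≤ a ∨ j = b) := by
    intro j
    rw [Fin.le_def, Fin.le_def, Fin.ext_iff]
    omega
  rw [rk, rk, filter_congr (fun j _ => by rw [h j]), filter_or, card_union_of_disjoint,
    filter_eq']
  · split <;> simp
  · rw [filter_eq']
    split
    · simp only [disjoint_singleton_right, mem_filter]
      rintro ⟨-, hb⟩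
      have := Fin.le_def.mp hb; omega
    · simp

lemma rk_last (S : Finset (Fin N)) (i : Fin N) (hi : i.val + 1 = N) : rk S i = S.card := by
  rw [rk, filter_true_of_mem]
  intro j hj
  have := j.isLt
  exact Fin.le_def.mpr (by omega)

lemma rk_zero (S : Finset (Fin N)) (i : Fin N) (hi : i.val = 0) :
    rk S i = if i ∈ S then 1 else 0 := by
  classical
  have h : ∀ j : Fin N, (j ≤ i) ↔ (j = i) := by
    intro j
    rw [Fin.le_def, Fin.ext_iff]
    omega
  rw [rk, filter_congr (fun j _ => by rw [h j]), filter_eq']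
  split <;> simp

/-- the general rank computation lemma -/
lemma rk_eq (S : Finset (Fin N)) (i : Fin N) (g : Fin N → ℕ) (m : ℕ)
    (h1 : ∀ j ∈ S, j ≤ i → g j < m)
    (hinj : ∀ j ∈ S, ∀ j' ∈ S, g j = g j' → j = j')
    (h2 : ∀ c < m, ∃ j, j ∈ S ∧ j ≤ i ∧ g j = c) :
    rk S i = m := by
  classical
  rw [rk, ← Finset.card_range m]
  apply Finset.card_bij (fun j _ => g j)
  · intro j hj
    simp only [mem_filter] at hj
    simpa using h1 j hj.1 hj.2
  · intro j hj j' hj' hg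
    simp only [mem_filter] at hj hj'
    exact hinj j hj.1 j' hj'.1 hg
  · intro c hc
    obtain ⟨j, hjS, hji, hjc⟩ := h2 c (by simpa using hc)
    exact ⟨j, by simp [mem_filter, hjS, hji], hjc⟩


/-- if two positions are in the same (unshifted) pair and get equal colors, they coincide -/
lemma mix_ne {n : ℕ} {w : Fin (2*n) → Bool}
    (hmix : ∀ k, (h : 2*k+1 < 2*n) → w ⟨2*k, by omega⟩ ≠ w ⟨2*k+1, h⟩)
    {j j' : Fin (2*n)} (h2 : j.val/2 = j'.val/2) (hw : w j = w j') : j = j' := by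
  by_contra hne
  have hvne : j.val ≠ j'.val := fun he => hne (Fin.ext he)
  have hjlt := j.isLt
  have hjlt' := j'.isLt
  have hc : (j.val = 2*(j.val/2) ∧ j'.val = 2*(j.val/2)+1)
      ∨ (j'.val = 2*(j.val/2) ∧ j.val = 2*(j.val/2)+1) := by omega
  have hb : 2*(j.val/2)+1 < 2*n := by omega
  apply hmix (j.val/2) hb
  rcases hc with ⟨h1, h2⟩ | ⟨h1, h2⟩
  · rw [show (⟨2*(j.val/2), by omega⟩ : Fin (2*n)) = j from Fin.ext h1.symm,
      show (⟨2*(j.val/2)+1, hb⟩ : Fin (2*n)) = j' from Fin.ext h2.symm, hw]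
  · rw [show (⟨2*(j.val/2), by omega⟩ : Fin (2*n)) = j' from Fin.ext h1.symm,
      show (⟨2*(j.val/2)+1, hb⟩ : Fin (2*n)) = j from Fin.ext h2.symm, hw]


/-- same for the shifted pairing (2k+1, 2k+2) -/
lemma mix_neE {n : ℕ} {w : Fin (2*n) → Bool}
    (hmixE : ∀ k, (h : 2*k+2 < 2*n) → w ⟨2*k+1, by omega⟩ ≠ w ⟨2*k+2, h⟩)
    {j j' : Fin (2*n)} (hj1 : 1 ≤ j.val) (hjb : j.val + 1 < 2*n)
    (hj1' : 1 ≤ j'.val) (hjb' : j'.val + 1 < 2*n)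
    (h2 : (j.val-1)/2 = (j'.val-1)/2) (hw : w j = w j') : j = j' := by
  by_contra hne
  have hvne : j.val ≠ j'.val := fun he => hne (Fin.ext he)
  have hc : (j.val = 2*((j.val-1)/2)+1 ∧ j'.val = 2*((j.val-1)/2)+2)
      ∨ (j'.val = 2*((j.val-1)/2)+1 ∧ j.val = 2*((j.val-1)/2)+2) := by omega
  have hb : 2*((j.val-1)/2)+2 < 2*n := by omega
  apply hmixE ((j.val-1)/2) hb
  rcases hc with ⟨h1, h2⟩ | ⟨h1, h2⟩
  · rw [show (⟨2*((j.val-1)/2)+1, by omega⟩ : Fin (2*n)) = j from Fin.ext h1.symm,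
      show (⟨2*((j.val-1)/2)+2, hb⟩ : Fin (2*n)) = j' from Fin.ext h2.symm, hw]
  · rw [show (⟨2*((j.val-1)/2)+1, by omega⟩ : Fin (2*n)) = j' from Fin.ext h1.symm,
      show (⟨2*((j.val-1)/2)+2, hb⟩ : Fin (2*n)) = j from Fin.ext h2.symm, hw]


lemma forward_pair {n p : ℕ} {w : Fin (2*n) → Bool}
    (h : IsRiffle (2*n) p w) (a b : Fin (2*n)) (hab : a.val + 1 = b.val)
    (hpar : (p + a.val) % 2 = 1) : w a ≠ w b := by
  obtain ⟨S, hcard, hmem, hnmem⟩ := h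
  have hstep := rk_succ S a b hab
  have hsuma := rk_add_compl S a
  have hsumb := rk_add_compl S b
  by_cases ha : a ∈ S <;> by_cases hb : b ∈ S
  · have hwa : w a = decide (Odd (rk S a)) := hmem a ha
    have hwb : w b = decide (Odd (rk S b)) := hmem b hb
    rw [hwa, hwb, if_pos hb] at *
    simp only [ne_eq, decide_eq_decide, Nat.odd_iff]
    omega
  · have hwa : w a = decide (Odd (rk S a)) := hmem a ha
    have hwb : w b = decide (Odd (p + rk (univ \ S) b)) := hnmem b hb
    rw [hwa, hwb, if_neg hb] at *
    simp only [ne_eq, decide_eq_decide, Nat.odd_iff]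
    omega
  · have hwa : w a = decide (Odd (p + rk (univ \ S) a)) := hnmem a ha
    have hwb : w b = decide (Odd (rk S b)) := hmem b hb
    rw [hwa, hwb, if_pos hb] at *
    simp only [ne_eq, decide_eq_decide, Nat.odd_iff]
    omega
  · have hwa : w a = decide (Odd (p + rk (univ \ S) a)) := hnmem a ha
    have hwb : w b = decide (Odd (p + rk (univ \ S) b)) := hnmem b hb
    rw [hwa, hwb, if_neg hb] at *
    simp only [ne_eq, decide_eq_decide, Nat.odd_iff]
    omega

lemma forward_even_zero {n p : ℕ} (hn : 1 ≤ n) {w : Fin (2*n) → Bool}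
    (hp : p % 2 = 0) (h : IsRiffle (2*n) p w) : w ⟨0, by omega⟩ = true := by
  obtain ⟨S, hcard, hmem, hnmem⟩ := h
  by_cases h0 : (⟨0, by omega⟩ : Fin (2*n)) ∈ S
  · have hwa : w ⟨0, by omega⟩ = decide (Odd (rk S ⟨0, by omega⟩)) := hmem _ h0
    rw [rk_zero S _ rfl, if_pos h0] at hwa
    simp [hwa]
  · have hwa : w ⟨0, by omega⟩ = decide (Odd (p + rk (univ \ S) ⟨0, by omega⟩)) := hnmem _ h0
    have h0' : (⟨0, by omega⟩ : Fin (2*n)) ∈ univ \ S := by simp [h0]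
    rw [rk_zero _ _ rfl, if_pos h0'] at hwa
    rw [hwa, decide_eq_true_eq, Nat.odd_iff]
    omega

lemma forward_even_last {n p : ℕ} (hn : 1 ≤ n) {w : Fin (2*n) → Bool}
    (hp : p % 2 = 0) (h : IsRiffle (2*n) p w) : w ⟨2*n-1, by omega⟩ = false := by
  obtain ⟨S, hcard, hmem, hnmem⟩ := h
  have hple : S.card ≤ 2*n := le_trans (card_le_univ S) (by simp)
  by_cases h0 : (⟨2*n-1, by omega⟩ : Fin (2*n)) ∈ S
  · have hwa : w ⟨2*n-1, by omega⟩ = decide (Odd (rk S ⟨2*n-1, by omega⟩)) := hmem _ h0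
    rw [rk_last S _ (by simp; omega), hcard] at hwa
    rw [hwa, decide_eq_false_iff_not, Nat.odd_iff]
    omega
  · have hwa : w ⟨2*n-1, by omega⟩
        = decide (Odd (p + rk (univ \ S) ⟨2*n-1, by omega⟩)) := hnmem _ h0
    rw [rk_last _ _ (by simp; omega), card_univ_diff] at hwa
    simp only [Fintype.card_fin, hcard] at hwa
    rw [hwa, decide_eq_false_iff_not, Nat.odd_iff]
    omega


lemma O1_rank {n : ℕ} {w : Fin (2*n) → Bool}
    (hmix : ∀ k, (h : 2*k+1 < 2*n) → w ⟨2*k, by omega⟩ ≠ w ⟨2*k+1, h⟩)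
    (S : Finset (Fin (2*n)))
    (hS : ∀ i : Fin (2*n), i ∈ S ↔ w i = decide ((i.val/2) % 2 = 0))
    (i : Fin (2*n)) :
    rk S i = if i ∈ S then i.val/2 + 1 else (i.val+1)/2 := by
  have hilt := i.isLt
  apply rk_eq S i (fun j => j.val/2)
  · intro j hjS hji
    have hji' := Fin.le_def.mp hji
    by_cases hiS : i ∈ S
    · rw [if_pos hiS]; omega
    · rw [if_neg hiS]
      have hne : j.val ≠ i.val := fun he => hiS ((Fin.ext he : j = i) ▸ hjS)
      omega
  · intro j hj j' hj' hg
    rw [hS] at hj hj'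
    by_contra hne
    have hvne : j.val ≠ j'.val := fun he => hne (Fin.ext he)
    have hjlt := j.isLt
    have hjlt' := j'.isLt
    have hc : (j.val = 2*(j.val/2) ∧ j'.val = 2*(j.val/2)+1)
        ∨ (j'.val = 2*(j.val/2) ∧ j.val = 2*(j.val/2)+1) := by omega
    have hb : 2*(j.val/2)+1 < 2*n := by omega
    apply hmix (j.val/2) hb
    rcases hc with ⟨h1, h2⟩ | ⟨h1, h2⟩
    · rw [show (⟨2*(j.val/2), by omega⟩ : Fin (2*n)) = j from Fin.ext h1.symm,
        show (⟨2*(j.val/2)+1, hb⟩ : Fin (2*n)) = j' from Fin.ext h2.symm, hj, hj', hg]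
    · rw [show (⟨2*(j.val/2), by omega⟩ : Fin (2*n)) = j' from Fin.ext h1.symm,
        show (⟨2*(j.val/2)+1, hb⟩ : Fin (2*n)) = j from Fin.ext h2.symm, hj, hj', hg]
  · intro c hc
    have hcn : c < n := by split at hc <;> omega
    have hb : 2*c+1 < 2*n := by omega
    have harg0 : ((⟨2*c, by omega⟩ : Fin (2*n)).val)/2 = c := by simp
    have harg1 : ((⟨2*c+1, hb⟩ : Fin (2*n)).val)/2 = c := by simp; omega
    by_cases hw : w ⟨2*c, by omega⟩ = decide (c % 2 = 0)
    · refine ⟨⟨2*c, by omega⟩, ?_, ?_, harg0⟩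
      · rw [hS]; simpa using hw
      · rw [Fin.le_def]
        simp only
        split at hc
        · omega
        · omega
    · have h2' : w ⟨2*c+1, hb⟩ = decide (c % 2 = 0) := bool_resolve (hmix c hb) hw
      refine ⟨⟨2*c+1, hb⟩, ?_, ?_, harg1⟩
      · rw [hS]
        show w ⟨2*c+1, hb⟩ = decide ((2*c+1) / 2 % 2 = 0)
        rw [show (2*c+1)/2 = c from by omega]
        exact h2'
      · rw [Fin.le_def]
        simp only
        split at hc
        · rename_i hiS
          rcases Nat.lt_or_ge c (i.val/2) with h' | h'
          · omega
          · have hiv : i.val = 2*c ∨ i.val = 2*c+1 := by omega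
            rcases hiv with h'' | h''
            · exfalso
              apply hw
              rw [show (⟨2*c, by omega⟩ : Fin (2*n)) = i from Fin.ext h''.symm]
              rw [hS] at hiS
              rw [hiS, show i.val/2 = c from by omega]
            · omega
        · omega


lemma construct_O1 {n : ℕ} (hn : 1 ≤ n) (hodd : n % 2 = 1) {w : Fin (2*n) → Bool}
    (hmix : ∀ k, (h : 2*k+1 < 2*n) → w ⟨2*k, by omega⟩ ≠ w ⟨2*k+1, h⟩) :
    IsRiffle (2*n) n w := by
  classical
  set S := univ.filter (fun i : Fin (2*n) => w i = decide ((i.val/2) % 2 = 0)) with hSdef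
  have hS : ∀ i, i ∈ S ↔ w i = decide ((i.val/2) % 2 = 0) := by
    intro i; simp [hSdef]
  have hrk := O1_rank hmix S hS
  have hcard : S.card = n := by
    have hlt : 2*n-1 < 2*n := by omega
    have h := hrk ⟨2*n-1, hlt⟩
    rw [rk_last S _ (by simp; omega)] at h
    rw [h]
    simp only [show ((⟨2*n-1, hlt⟩ : Fin (2*n)) : ℕ) = 2*n-1 from rfl]
    split <;> omega
  refine ⟨S, hcard, ?_, ?_⟩
  · intro i hi
    have hwi : w i = decide ((i.val/2) % 2 = 0) := (hS i).mp hi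
    have hr : rk S i = i.val/2 + 1 := by rw [hrk i, if_pos hi]
    rw [show (S.filter fun i' => i' ≤ i).card = rk S i from rfl, hr, hwi,
      decide_eq_decide, Nat.odd_iff]
    omega
  · intro i hi
    have hwi : w i ≠ decide ((i.val/2) % 2 = 0) := fun h => hi ((hS i).mpr h)
    have hr : rk S i = (i.val+1)/2 := by rw [hrk i, if_neg hi]
    have hsum := rk_add_compl S i
    have hilt := i.isLt
    have hcrk : rk (univ \ S) i = i.val/2 + 1 := by omega
    rw [show ((univ \ S).filter fun i' => i' ≤ i).card = rk (univ \ S) i from rfl, hcrk,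
      Bool.eq_not_iff.mpr hwi, ← _root_.decide_not, decide_eq_decide, Nat.odd_iff]
    omega


lemma construct_O2a {n : ℕ} (hn : 2 ≤ n) (heven : n % 2 = 0) {w : Fin (2*n) → Bool}
    (hmix : ∀ k, (h : 2*k+1 < 2*n) → w ⟨2*k, by omega⟩ ≠ w ⟨2*k+1, h⟩)
    (hlastpair : w ⟨2*n-2, by omega⟩ = true) :
    IsRiffle (2*n) (n-1) w := by
  classical
  set S := univ.filter
    (fun i : Fin (2*n) => i.val + 2 < 2*n ∧ w i = decide ((i.val/2) % 2 = 0)) with hSdef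
  have hS : ∀ i, i ∈ S ↔ (i.val + 2 < 2*n ∧ w i = decide ((i.val/2) % 2 = 0)) := by
    intro i; simp [hSdef]
  have hrk : ∀ i, rk S i = if i ∈ S then i.val/2 + 1 else min ((i.val+1)/2) (n-1) := by
    intro i
    have hilt := i.isLt
    apply rk_eq S i (fun j => j.val/2)
    · intro j hjS hji
      have hji' := Fin.le_def.mp hji
      obtain ⟨hjb, hjw⟩ := (hS j).mp hjS
      by_cases hiS : i ∈ S
      · rw [if_pos hiS]; omega
      · rw [if_neg hiS]
        have hne : j.val ≠ i.val := fun he => hiS ((Fin.ext he : j = i) ▸ hjS)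
        omega
    · intro j hj j' hj' hg
      obtain ⟨hjb, hjw⟩ := (hS j).mp hj
      obtain ⟨hjb', hjw'⟩ := (hS j').mp hj'
      exact mix_ne hmix hg (by rw [hjw, hjw', hg])
    · intro c hc
      have hcn : c < n - 1 := by
        by_cases hiS : i ∈ S
        · rw [if_pos hiS] at hc
          obtain ⟨hib, -⟩ := (hS i).mp hiS
          omega
        · rw [if_neg hiS] at hc; omega
      have hb : 2*c+1 < 2*n := by omega
      by_cases hw : w ⟨2*c, by omega⟩ = decide (c % 2 = 0)
      · refine ⟨⟨2*c, by omega⟩, ?_, ?_, by simp⟩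
        · rw [hS]
          refine ⟨by simp; omega, ?_⟩
          show w ⟨2*c, by omega⟩ = decide ((2*c) / 2 % 2 = 0)
          rw [show (2*c)/2 = c from by omega]
          exact hw
        · rw [Fin.le_def]
          show 2*c ≤ i.val
          by_cases hiS : i ∈ S
          · rw [if_pos hiS] at hc
            rcases Nat.lt_or_ge c (i.val/2) with h' | h'
            · omega
            · omega
          · rw [if_neg hiS] at hc; omega
      · have h2' : w ⟨2*c+1, hb⟩ = decide (c % 2 = 0) := bool_resolve (hmix c hb) hw
        refine ⟨⟨2*c+1, hb⟩, ?_, ?_, by simp; omega⟩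
        · rw [hS]
          refine ⟨by simp; omega, ?_⟩
          show w ⟨2*c+1, hb⟩ = decide ((2*c+1) / 2 % 2 = 0)
          rw [show (2*c+1)/2 = c from by omega]
          exact h2'
        · rw [Fin.le_def]
          show 2*c+1 ≤ i.val
          by_cases hiS : i ∈ S
          · rw [if_pos hiS] at hc
            rcases Nat.lt_or_ge c (i.val/2) with h' | h'
            · omega
            · have hiv : i.val = 2*c ∨ i.val = 2*c+1 := by omega
              rcases hiv with h'' | h''
              · exfalso
                apply hw
                obtain ⟨-, hwcond⟩ := (hS i).mp hiS
                rw [show (⟨2*c, by omega⟩ : Fin (2*n)) = i from Fin.ext h''.symm]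
                rw [hwcond, show i.val/2 = c from by omega]
              · omega
          · rw [if_neg hiS] at hc; omega
  have hnotlast : ∀ (v : ℕ) (hv : v < 2*n), 2*n ≤ v + 2 → (⟨v, hv⟩ : Fin (2*n)) ∉ S := by
    intro v hv hvb hmem
    obtain ⟨hb, -⟩ := (hS _).mp hmem
    simp only at hb
    omega
  have hcard : S.card = n - 1 := by
    have hlt : 2*n-1 < 2*n := by omega
    have h := hrk ⟨2*n-1, hlt⟩
    rw [rk_last S _ (by simp; omega), if_neg (hnotlast _ _ (by omega))] at h
    rw [h]
    simp only [show ((⟨2*n-1, hlt⟩ : Fin (2*n)) : ℕ) = 2*n-1 from rfl]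
    omega
  refine ⟨S, hcard, ?_, ?_⟩
  · intro i hi
    obtain ⟨hib, hwi⟩ := (hS i).mp hi
    have hr : rk S i = i.val/2 + 1 := by rw [hrk i, if_pos hi]
    rw [show (S.filter fun i' => i' ≤ i).card = rk S i from rfl, hr, hwi,
      decide_eq_decide, Nat.odd_iff]
    omega
  · intro i hi
    have hilt := i.isLt
    have hsum := rk_add_compl S i
    have hr : rk S i = min ((i.val+1)/2) (n-1) := by rw [hrk i, if_neg hi]
    rw [show ((univ \ S).filter fun i' => i' ≤ i).card = rk (univ \ S) i from rfl]
    by_cases hib : i.val + 2 < 2*n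
    · -- interior unpicked
      have hwi : ¬ (w i = decide ((i.val/2) % 2 = 0)) := fun h => hi ((hS i).mpr ⟨hib, h⟩)
      have hcrk : rk (univ \ S) i = i.val/2 + 1 := by omega
      rw [hcrk, Bool.eq_not_iff.mpr hwi, ← _root_.decide_not, decide_eq_decide, Nat.odd_iff]
      omega
    · rcases (show i.val = 2*n-2 ∨ i.val = 2*n-1 from by omega) with hiv | hiv
      · have hcrk : rk (univ \ S) i = n := by omega
        rw [hcrk, show i = ⟨2*n-2, by omega⟩ from Fin.ext hiv, hlastpair]
        symm
        rw [decide_eq_true_eq, Nat.odd_iff]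
        omega
      · have hcrk : rk (univ \ S) i = n + 1 := by omega
        have hlastb : 2*(n-1)+1 < 2*n := by omega
        have hwlast : w ⟨2*(n-1)+1, hlastb⟩ = false := by
          apply bool_resolve (hmix (n-1) hlastb)
          rw [show (⟨2*(n-1), by omega⟩ : Fin (2*n)) = ⟨2*n-2, by omega⟩ from
            Fin.ext (by simp; omega), hlastpair]
          simp
        rw [hcrk, show i = ⟨2*(n-1)+1, hlastb⟩ from Fin.ext (by simp; omega), hwlast]
        symm
        rw [decide_eq_false_iff_not, Nat.odd_iff]
        omega


lemma construct_O2b {n : ℕ} (hn : 2 ≤ n) (heven : n % 2 = 0) {w : Fin (2*n) → Bool}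
    (hmix : ∀ k, (h : 2*k+1 < 2*n) → w ⟨2*k, by omega⟩ ≠ w ⟨2*k+1, h⟩)
    (hlastpair : w ⟨2*n-2, by omega⟩ = false) :
    IsRiffle (2*n) (n+1) w := by
  classical
  set S := univ.filter
    (fun i : Fin (2*n) => (i.val + 2 < 2*n ∧ w i = decide ((i.val/2) % 2 = 0))
      ∨ 2*n ≤ i.val + 2) with hSdef
  have hS : ∀ i, i ∈ S ↔ ((i.val + 2 < 2*n ∧ w i = decide ((i.val/2) % 2 = 0))
      ∨ 2*n ≤ i.val + 2) := by
    intro i; simp [hSdef]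
  set g : Fin (2*n) → ℕ := fun j => if j.val + 2 < 2*n then j.val/2 else j.val - (n-1)
    with hgdef
  have hrk : ∀ i, rk S i = if i ∈ S then g i + 1 else (i.val+1)/2 := by
    intro i
    have hilt := i.isLt
    apply rk_eq S i g
    · intro j hjS hji
      have hji' := Fin.le_def.mp hji
      have hjlt := j.isLt
      by_cases hiS : i ∈ S
      · rw [if_pos hiS]
        by_cases hjb : j.val + 2 < 2*n
        · rw [hgdef]; simp only [if_pos hjb]
          by_cases hib : i.val + 2 < 2*n
          · simp only [if_pos hib]; omega
          · simp only [if_neg hib]; omega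
        · rw [hgdef]; simp only [if_neg hjb]
          have hib : ¬ (i.val + 2 < 2*n) := by omega
          simp only [if_neg hib]; omega
      · rw [if_neg hiS]
        have hne : j.val ≠ i.val := fun he => hiS ((Fin.ext he : j = i) ▸ hjS)
        have hib : i.val + 2 < 2*n := by
          by_contra hib
          exact hiS ((hS i).mpr (Or.inr (by omega)))
        have hjb : j.val + 2 < 2*n := by omega
        rw [hgdef]; simp only [if_pos hjb]; omega
    · intro j hj j' hj' hg
      rcases (hS j).mp hj with ⟨hjb, hjw⟩ | hjb <;> rcases (hS j').mp hj' with ⟨hjb', hjw'⟩ | hjb'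
      · rw [hgdef] at hg; simp only [if_pos hjb, if_pos hjb'] at hg
        exact mix_ne hmix hg (by rw [hjw, hjw', hg])
      · rw [hgdef] at hg; simp only [if_pos hjb, if_neg (show ¬ (j'.val + 2 < 2*n) from by omega)] at hg
        have := j'.isLt; omega
      · rw [hgdef] at hg; simp only [if_neg (show ¬ (j.val + 2 < 2*n) from by omega), if_pos hjb'] at hg
        have := j.isLt; omega
      · rw [hgdef] at hg
        simp only [if_neg (show ¬ (j.val + 2 < 2*n) from by omega),
          if_neg (show ¬ (j'.val + 2 < 2*n) from by omega)] at hg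
        exact Fin.ext (by omega)
    · intro c hc
      have hgi : g i = if i.val + 2 < 2*n then i.val/2 else i.val - (n-1) := rfl
      by_cases hcn : c < n - 1
      · -- interior pair pick
        have hb : 2*c+1 < 2*n := by omega
        by_cases hw : w ⟨2*c, by omega⟩ = decide (c % 2 = 0)
        · refine ⟨⟨2*c, by omega⟩, ?_, ?_, ?_⟩
          · rw [hS]
            refine Or.inl ⟨by simp; omega, ?_⟩
            show w ⟨2*c, by omega⟩ = decide ((2*c) / 2 % 2 = 0)
            rw [show (2*c)/2 = c from by omega]
            exact hw
          · rw [Fin.le_def]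
            show 2*c ≤ i.val
            by_cases hiS : i ∈ S
            · rw [if_pos hiS] at hc
              by_cases hib : i.val + 2 < 2*n
              · rw [hgi, if_pos hib] at hc; omega
              · have := i.isLt; omega
            · rw [if_neg hiS] at hc; omega
          · show (if 2*c + 2 < 2*n then (2*c)/2 else 2*c - (n-1)) = c
            rw [if_pos (by omega)]; omega
        · have h2' : w ⟨2*c+1, hb⟩ = decide (c % 2 = 0) := bool_resolve (hmix c hb) hw
          refine ⟨⟨2*c+1, hb⟩, ?_, ?_, ?_⟩
          · rw [hS]
            refine Or.inl ⟨by simp; omega, ?_⟩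
            show w ⟨2*c+1, hb⟩ = decide ((2*c+1) / 2 % 2 = 0)
            rw [show (2*c+1)/2 = c from by omega]
            exact h2'
          · rw [Fin.le_def]
            show 2*c+1 ≤ i.val
            by_cases hiS : i ∈ S
            · rw [if_pos hiS] at hc
              by_cases hib : i.val + 2 < 2*n
              · rw [hgi, if_pos hib] at hc
                rcases Nat.lt_or_ge c (i.val/2) with h' | h'
                · omega
                · rcases (show i.val = 2*c ∨ i.val = 2*c+1 from by omega) with h'' | h''
                  · exfalso
                    apply hw
                    rcases (hS i).mp hiS with ⟨-, hwcond⟩ | hbad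
                    · rw [show (⟨2*c, by omega⟩ : Fin (2*n)) = i from Fin.ext h''.symm]
                      rw [hwcond, show i.val/2 = c from by omega]
                    · omega
                  · omega
              · have := i.isLt; omega
            · rw [if_neg hiS] at hc; omega
          · show (if 2*c+1 + 2 < 2*n then (2*c+1)/2 else 2*c+1 - (n-1)) = c
            rw [if_pos (by omega)]; omega
      · -- tail elements
        have hm : c = n - 1 ∨ c = n := by
          have : c < n + 1 := by
            by_cases hiS : i ∈ S
            · rw [if_pos hiS] at hc
              have := i.isLt
              by_cases hib : i.val + 2 < 2*n
              · rw [hgi, if_pos hib] at hc; omega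
              · rw [hgi, if_neg hib] at hc; omega
            · rw [if_neg hiS] at hc
              have := i.isLt; omega
          omega
        have him : 2*n - 2 ≤ i.val := by
          by_cases hiS : i ∈ S
          · rw [if_pos hiS] at hc
            by_cases hib : i.val + 2 < 2*n
            · rw [hgi, if_pos hib] at hc; omega
            · have := i.isLt; omega
          · rw [if_neg hiS] at hc
            have hib : i.val + 2 < 2*n := by
              by_contra hib
              exact hiS ((hS i).mpr (Or.inr (by omega)))
            omega
        rcases hm with hm | hm
        · refine ⟨⟨2*n-2, by omega⟩, (hS _).mpr (Or.inr (by simp; omega)), ?_, ?_⟩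
          · rw [Fin.le_def]; show 2*n-2 ≤ i.val; omega
          · show (if 2*n-2 + 2 < 2*n then (2*n-2)/2 else 2*n-2 - (n-1)) = c
            rw [if_neg (by omega)]; omega
        · -- c = n requires i = 2n-1
          have him' : i.val = 2*n-1 := by
            by_cases hiS : i ∈ S
            · rw [if_pos hiS] at hc
              by_cases hib : i.val + 2 < 2*n
              · rw [hgi, if_pos hib] at hc; have := i.isLt; omega
              · rw [hgi, if_neg hib] at hc; have := i.isLt; omega
            · rw [if_neg hiS] at hc; have := i.isLt; omega
          refine ⟨⟨2*n-1, by omega⟩, (hS _).mpr (Or.inr (by simp; omega)), ?_, ?_⟩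
          · rw [Fin.le_def]; show 2*n-1 ≤ i.val; omega
          · show (if 2*n-1 + 2 < 2*n then (2*n-1)/2 else 2*n-1 - (n-1)) = c
            rw [if_neg (by omega)]; omega
  have hcard : S.card = n + 1 := by
    have hlt : 2*n-1 < 2*n := by omega
    have hmemlast : (⟨2*n-1, hlt⟩ : Fin (2*n)) ∈ S := (hS _).mpr (Or.inr (by simp; omega))
    have h := hrk ⟨2*n-1, hlt⟩
    rw [rk_last S _ (by simp; omega), if_pos hmemlast] at h
    rw [h]
    show (if 2*n-1 + 2 < 2*n then (2*n-1)/2 else 2*n-1 - (n-1)) + 1 = n + 1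
    rw [if_neg (by omega)]; omega
  refine ⟨S, hcard, ?_, ?_⟩
  · intro i hi
    have hilt := i.isLt
    have hr : rk S i = g i + 1 := by rw [hrk i, if_pos hi]
    rw [show (S.filter fun i' => i' ≤ i).card = rk S i from rfl, hr]
    rcases (hS i).mp hi with ⟨hib, hwi⟩ | hib
    · rw [hwi, show g i = i.val/2 from by rw [hgdef]; simp only [if_pos hib],
        decide_eq_decide, Nat.odd_iff]
      omega
    · have hgi : g i = i.val - (n-1) := by
        rw [hgdef]; simp only [if_neg (show ¬ (i.val + 2 < 2*n) from by omega)]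
      rcases (show i.val = 2*n-2 ∨ i.val = 2*n-1 from by omega) with hiv | hiv
      · have hwiv : w i = false := by
          rw [show i = ⟨2*n-2, by omega⟩ from Fin.ext hiv]; exact hlastpair
        rw [hgi, hwiv]
        symm
        rw [decide_eq_false_iff_not, Nat.odd_iff]
        omega
      · have hlastb : 2*(n-1)+1 < 2*n := by omega
        have hwlast : w ⟨2*(n-1)+1, hlastb⟩ = true := by
          apply bool_resolve (hmix (n-1) hlastb)
          rw [show (⟨2*(n-1), by omega⟩ : Fin (2*n)) = ⟨2*n-2, by omega⟩ from
            Fin.ext (by simp; omega), hlastpair]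
          simp
        have hwiv : w i = true := by
          rw [show i = ⟨2*(n-1)+1, hlastb⟩ from Fin.ext (by simp; omega)]; exact hwlast
        rw [hgi, hwiv]
        symm
        rw [decide_eq_true_eq, Nat.odd_iff]
        omega
  · intro i hi
    have hilt := i.isLt
    have hsum := rk_add_compl S i
    have hr : rk S i = (i.val+1)/2 := by rw [hrk i, if_neg hi]
    have hib : i.val + 2 < 2*n := by
      by_contra hib
      exact hi ((hS i).mpr (Or.inr (by omega)))
    have hwi : ¬ (w i = decide ((i.val/2) % 2 = 0)) := fun h => hi ((hS i).mpr (Or.inl ⟨hib, h⟩))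
    have hcrk : rk (univ \ S) i = i.val/2 + 1 := by omega
    rw [show ((univ \ S).filter fun i' => i' ≤ i).card = rk (univ \ S) i from rfl, hcrk,
      Bool.eq_not_iff.mpr hwi, ← _root_.decide_not, decide_eq_decide, Nat.odd_iff]
    omega


lemma construct_E1 {n : ℕ} (hn : 1 ≤ n) (hodd : n % 2 = 1) {w : Fin (2*n) → Bool}
    (hzero : w ⟨0, by omega⟩ = true) (hlast : w ⟨2*n-1, by omega⟩ = false)
    (hmixE : ∀ k, (h : 2*k+2 < 2*n) → w ⟨2*k+1, by omega⟩ ≠ w ⟨2*k+2, h⟩) :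
    IsRiffle (2*n) (n-1) w := by
  classical
  set S := univ.filter
    (fun i : Fin (2*n) => 1 ≤ i.val ∧ i.val + 1 < 2*n ∧
      w i = decide (((i.val-1)/2) % 2 = 0)) with hSdef
  have hS : ∀ i, i ∈ S ↔ (1 ≤ i.val ∧ i.val + 1 < 2*n ∧
      w i = decide (((i.val-1)/2) % 2 = 0)) := by
    intro i; simp [hSdef]
  have hrk : ∀ i, rk S i = if i ∈ S then (i.val-1)/2 + 1 else i.val/2 := by
    intro i
    have hilt := i.isLt
    apply rk_eq S i (fun j => (j.val-1)/2)
    · intro j hjS hji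
      have hji' := Fin.le_def.mp hji
      obtain ⟨hj1, hjb, hjw⟩ := (hS j).mp hjS
      by_cases hiS : i ∈ S
      · rw [if_pos hiS]; omega
      · rw [if_neg hiS]
        have hne : j.val ≠ i.val := fun he => hiS ((Fin.ext he : j = i) ▸ hjS)
        omega
    · intro j hj j' hj' hg
      obtain ⟨hj1, hjb, hjw⟩ := (hS j).mp hj
      obtain ⟨hj1', hjb', hjw'⟩ := (hS j').mp hj'
      exact mix_neE hmixE hj1 hjb hj1' hjb' hg (by rw [hjw, hjw', hg])
    · intro c hc
      have hcn : c < n - 1 := by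
        by_cases hiS : i ∈ S
        · rw [if_pos hiS] at hc
          obtain ⟨hi1, hib, -⟩ := (hS i).mp hiS
          omega
        · rw [if_neg hiS] at hc; omega
      have hb : 2*c+2 < 2*n := by omega
      by_cases hw : w ⟨2*c+1, by omega⟩ = decide (c % 2 = 0)
      · refine ⟨⟨2*c+1, by omega⟩, ?_, ?_, ?_⟩
        · rw [hS]
          refine ⟨by simp, by simp; omega, ?_⟩
          show w ⟨2*c+1, by omega⟩ = decide ((2*c+1-1) / 2 % 2 = 0)
          rw [show (2*c+1-1)/2 = c from by omega]
          exact hw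
        · rw [Fin.le_def]
          show 2*c+1 ≤ i.val
          by_cases hiS : i ∈ S
          · obtain ⟨hi1, hib, -⟩ := (hS i).mp hiS
            rw [if_pos hiS] at hc; omega
          · rw [if_neg hiS] at hc; omega
        · show (2*c+1-1)/2 = c
          omega
      · have h2' : w ⟨2*c+2, hb⟩ = decide (c % 2 = 0) := bool_resolve (hmixE c hb) hw
        refine ⟨⟨2*c+2, hb⟩, ?_, ?_, ?_⟩
        · rw [hS]
          refine ⟨by simp, by simp; omega, ?_⟩
          show w ⟨2*c+2, hb⟩ = decide ((2*c+2-1) / 2 % 2 = 0)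
          rw [show (2*c+2-1)/2 = c from by omega]
          exact h2'
        · rw [Fin.le_def]
          show 2*c+2 ≤ i.val
          by_cases hiS : i ∈ S
          · rw [if_pos hiS] at hc
            rcases Nat.lt_or_ge c ((i.val-1)/2) with h' | h'
            · obtain ⟨hi1, -, -⟩ := (hS i).mp hiS
              omega
            · obtain ⟨hi1, -, hwcond⟩ := (hS i).mp hiS
              rcases (show i.val = 2*c+1 ∨ i.val = 2*c+2 from by omega) with h'' | h''
              · exfalso
                apply hw
                rw [show (⟨2*c+1, by omega⟩ : Fin (2*n)) = i from Fin.ext h''.symm]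
                rw [hwcond, show (i.val-1)/2 = c from by omega]
              · omega
          · rw [if_neg hiS] at hc; omega
        · show (2*c+2-1)/2 = c
          omega
  have hcard : S.card = n - 1 := by
    have hlt : 2*n-1 < 2*n := by omega
    have hnotlast : (⟨2*n-1, hlt⟩ : Fin (2*n)) ∉ S := by
      intro hmem
      obtain ⟨-, hb, -⟩ := (hS _).mp hmem
      simp only at hb
      omega
    have h := hrk ⟨2*n-1, hlt⟩
    rw [rk_last S _ (by simp; omega), if_neg hnotlast] at h
    rw [h]
    show (2*n-1)/2 = n-1
    omega
  refine ⟨S, hcard, ?_, ?_⟩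
  · intro i hi
    obtain ⟨hi1, hib, hwi⟩ := (hS i).mp hi
    have hr : rk S i = (i.val-1)/2 + 1 := by rw [hrk i, if_pos hi]
    rw [show (S.filter fun i' => i' ≤ i).card = rk S i from rfl, hr, hwi,
      decide_eq_decide, Nat.odd_iff]
    omega
  · intro i hi
    have hilt := i.isLt
    have hsum := rk_add_compl S i
    have hr : rk S i = i.val/2 := by rw [hrk i, if_neg hi]
    rw [show ((univ \ S).filter fun i' => i' ≤ i).card = rk (univ \ S) i from rfl]
    by_cases hi0 : i.val = 0
    · have hwiv : w i = true := by
        rw [show i = ⟨0, by omega⟩ from Fin.ext hi0]; exact hzero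
      have hcrk : rk (univ \ S) i = 1 := by omega
      rw [hcrk, hwiv]
      symm
      rw [decide_eq_true_eq, Nat.odd_iff]
      omega
    · by_cases hiL : i.val + 1 = 2*n
      · have hwiv : w i = false := by
          rw [show i = ⟨2*n-1, by omega⟩ from Fin.ext (show i.val = 2*n-1 by omega)]; exact hlast
        have hcrk : rk (univ \ S) i = n + 1 := by omega
        rw [hcrk, hwiv]
        symm
        rw [decide_eq_false_iff_not, Nat.odd_iff]
        omega
      · have hwi : ¬ (w i = decide (((i.val-1)/2) % 2 = 0)) := fun h =>
          hi ((hS i).mpr ⟨by omega, by omega, h⟩)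
        have hcrk : rk (univ \ S) i = i.val + 1 - i.val/2 := by omega
        rw [hcrk, Bool.eq_not_iff.mpr hwi, ← _root_.decide_not, decide_eq_decide,
          Nat.odd_iff]
        omega


lemma construct_E2 {n : ℕ} (hn : 2 ≤ n) (heven : n % 2 = 0) {w : Fin (2*n) → Bool}
    (hzero : w ⟨0, by omega⟩ = true) (hlast : w ⟨2*n-1, by omega⟩ = false)
    (hmixE : ∀ k, (h : 2*k+2 < 2*n) → w ⟨2*k+1, by omega⟩ ≠ w ⟨2*k+2, h⟩) :
    IsRiffle (2*n) n w := by
  classical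
  set S := univ.filter
    (fun i : Fin (2*n) => i.val = 0 ∨ (1 ≤ i.val ∧ i.val + 1 < 2*n ∧
      w i = decide (((i.val-1)/2) % 2 = 1))) with hSdef
  have hS : ∀ i, i ∈ S ↔ (i.val = 0 ∨ (1 ≤ i.val ∧ i.val + 1 < 2*n ∧
      w i = decide (((i.val-1)/2) % 2 = 1))) := by
    intro i; simp [hSdef]
  set g : Fin (2*n) → ℕ := fun j => if j.val = 0 then 0 else (j.val-1)/2 + 1 with hgdef
  have hg0 : ∀ j : Fin (2*n), j.val = 0 → g j = 0 := by
    intro j hj; rw [hgdef]; simp only [if_pos hj]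
  have hgpos : ∀ j : Fin (2*n), j.val ≠ 0 → g j = (j.val-1)/2 + 1 := by
    intro j hj; rw [hgdef]; simp only [if_neg hj]
  have hrk : ∀ i, rk S i = if i ∈ S then g i + 1 else i.val/2 + 1 := by
    intro i
    have hilt := i.isLt
    apply rk_eq S i g
    · intro j hjS hji
      have hji' := Fin.le_def.mp hji
      by_cases hj0 : j.val = 0
      · rw [hg0 j hj0]
        by_cases hiS : i ∈ S
        · rw [if_pos hiS]; omega
        · rw [if_neg hiS]; omega
      · rcases (hS j).mp hjS with hj0' | ⟨hj1, hjb, hjw⟩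
        · exact absurd hj0' hj0
        · rw [hgpos j hj0]
          by_cases hiS : i ∈ S
          · rw [if_pos hiS, hgpos i (by omega)]; omega
          · rw [if_neg hiS]
            have hne : j.val ≠ i.val := fun he => hiS ((Fin.ext he : j = i) ▸ hjS)
            omega
    · intro j hj j' hj' hgg
      by_cases hj0 : j.val = 0 <;> by_cases hj0' : j'.val = 0
      · exact Fin.ext (by omega)
      · rcases (hS j').mp hj' with h | ⟨h1, hb, -⟩
        · exact absurd h hj0'
        · rw [hg0 j hj0, hgpos j' hj0'] at hgg; omega
      · rcases (hS j).mp hj with h | ⟨h1, hb, -⟩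
        · exact absurd h hj0
        · rw [hgpos j hj0, hg0 j' hj0'] at hgg; omega
      · rcases (hS j).mp hj with h | ⟨h1, hb, hjw⟩
        · exact absurd h hj0
        rcases (hS j').mp hj' with h | ⟨h1', hb', hjw'⟩
        · exact absurd h hj0'
        rw [hgpos j hj0, hgpos j' hj0'] at hgg
        have hgg' : (j.val-1)/2 = (j'.val-1)/2 := by omega
        exact mix_neE hmixE h1 hb h1' hb' hgg' (by rw [hjw, hjw', hgg'])
    · intro c hc
      have hm : c ≤ n - 1 := by
        by_cases hiS : i ∈ S
        · rw [if_pos hiS] at hc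
          rcases (hS i).mp hiS with h0 | ⟨h1, hb, -⟩
          · rw [hg0 i h0] at hc; omega
          · rw [hgpos i (by omega)] at hc; omega
        · rw [if_neg hiS] at hc; omega
      by_cases hc0 : c = 0
      · refine ⟨⟨0, by omega⟩, (hS _).mpr (Or.inl rfl), ?_, ?_⟩
        · rw [Fin.le_def]; show 0 ≤ i.val; omega
        · rw [hg0 _ rfl, hc0]
      · have hk : 1 ≤ c ∧ c ≤ n - 1 := ⟨by omega, hm⟩
        have hb : 2*(c-1)+2 < 2*n := by omega
        by_cases hw : w ⟨2*(c-1)+1, by omega⟩ = decide ((c-1) % 2 = 1)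
        · refine ⟨⟨2*(c-1)+1, by omega⟩, ?_, ?_, ?_⟩
          · rw [hS]
            refine Or.inr ⟨by simp, by simp; omega, ?_⟩
            show w ⟨2*(c-1)+1, by omega⟩ = decide ((2*(c-1)+1-1) / 2 % 2 = 1)
            rw [show (2*(c-1)+1-1)/2 = c-1 from by omega]
            exact hw
          · rw [Fin.le_def]
            show 2*(c-1)+1 ≤ i.val
            by_cases hiS : i ∈ S
            · rw [if_pos hiS] at hc
              rcases (hS i).mp hiS with h0 | ⟨h1, hbb, -⟩
              · rw [hg0 i h0] at hc; omega
              · rw [hgpos i (by omega)] at hc; omega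
            · rw [if_neg hiS] at hc; omega
          · rw [hgpos _ (by simp)]
            show (2*(c-1)+1-1)/2 + 1 = c
            omega
        · have h2' : w ⟨2*(c-1)+2, hb⟩ = decide ((c-1) % 2 = 1) :=
            bool_resolve (hmixE (c-1) hb) hw
          refine ⟨⟨2*(c-1)+2, hb⟩, ?_, ?_, ?_⟩
          · rw [hS]
            refine Or.inr ⟨by simp, by simp; omega, ?_⟩
            show w ⟨2*(c-1)+2, hb⟩ = decide ((2*(c-1)+2-1) / 2 % 2 = 1)
            rw [show (2*(c-1)+2-1)/2 = c-1 from by omega]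
            exact h2'
          · rw [Fin.le_def]
            show 2*(c-1)+2 ≤ i.val
            by_cases hiS : i ∈ S
            · rw [if_pos hiS] at hc
              rcases (hS i).mp hiS with h0 | ⟨h1, hbb, hwcond⟩
              · rw [hg0 i h0] at hc; omega
              · rw [hgpos i (by omega)] at hc
                rcases Nat.lt_or_ge (c-1) ((i.val-1)/2) with h' | h'
                · omega
                · rcases (show i.val = 2*(c-1)+1 ∨ i.val = 2*(c-1)+2 from by omega)
                    with h'' | h''
                  · exfalso
                    apply hw
                    rw [show (⟨2*(c-1)+1, by omega⟩ : Fin (2*n)) = i from Fin.ext h''.symm]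
                    rw [hwcond, show (i.val-1)/2 = c-1 from by omega]
                  · omega
            · rw [if_neg hiS] at hc; omega
          · rw [hgpos _ (by simp)]
            show (2*(c-1)+2-1)/2 + 1 = c
            omega
  have hcard : S.card = n := by
    have hlt : 2*n-1 < 2*n := by omega
    have hnotlast : (⟨2*n-1, hlt⟩ : Fin (2*n)) ∉ S := by
      intro hmem
      rcases (hS _).mp hmem with h0 | ⟨-, hb, -⟩
      · simp only at h0; omega
      · simp only at hb; omega
    have h := hrk ⟨2*n-1, hlt⟩
    rw [rk_last S _ (by simp; omega), if_neg hnotlast] at h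
    rw [h]
    show (2*n-1)/2 + 1 = n
    omega
  refine ⟨S, hcard, ?_, ?_⟩
  · intro i hi
    have hr : rk S i = g i + 1 := by rw [hrk i, if_pos hi]
    rw [show (S.filter fun i' => i' ≤ i).card = rk S i from rfl, hr]
    rcases (hS i).mp hi with h0 | ⟨h1, hb, hwi⟩
    · have hwiv : w i = true := by
        rw [show i = ⟨0, by omega⟩ from Fin.ext h0]; exact hzero
      rw [hg0 i h0, hwiv]
      symm
      rw [decide_eq_true_eq, Nat.odd_iff]
    · rw [hgpos i (by omega), hwi, decide_eq_decide, Nat.odd_iff]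
      omega
  · intro i hi
    have hilt := i.isLt
    have hsum := rk_add_compl S i
    have hr : rk S i = i.val/2 + 1 := by rw [hrk i, if_neg hi]
    rw [show ((univ \ S).filter fun i' => i' ≤ i).card = rk (univ \ S) i from rfl]
    have hi0 : i.val ≠ 0 := fun h => hi ((hS i).mpr (Or.inl h))
    by_cases hiL : i.val + 1 = 2*n
    · have hwiv : w i = false := by
        rw [show i = ⟨2*n-1, by omega⟩ from Fin.ext (show i.val = 2*n-1 by omega)]; exact hlast
      have hcrk : rk (univ \ S) i = n := by omega
      rw [hcrk, hwiv]
      symm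
      rw [decide_eq_false_iff_not, Nat.odd_iff]
      omega
    · have hwi : ¬ (w i = decide (((i.val-1)/2) % 2 = 1)) := fun h =>
        hi ((hS i).mpr (Or.inr ⟨by omega, by omega, h⟩))
      have hcrk : rk (univ \ S) i = i.val - i.val/2 := by omega
      rw [hcrk, Bool.eq_not_iff.mpr hwi, ← _root_.decide_not, decide_eq_decide,
        Nat.odd_iff]
      omega


def Apred (n : ℕ) (w : Fin (2*n) → Bool) : Prop :=
  ∀ k, (h : 2*k+1 < 2*n) → w ⟨2*k, by omega⟩ ≠ w ⟨2*k+1, h⟩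

def Bpred (n : ℕ) (w : Fin (2*n) → Bool) : Prop :=
  (∀ h : 0 < 2*n, w ⟨0, h⟩ = true ∧ w ⟨2*n-1, by omega⟩ = false) ∧
  (∀ k, (h : 2*k+2 < 2*n) → w ⟨2*k+1, by omega⟩ ≠ w ⟨2*k+2, h⟩)


lemma odd_iff {n : ℕ} (hn : 1 ≤ n) (w : Fin (2*n) → Bool) :
    (∃ p, Odd p ∧ 1 ≤ p ∧ p ≤ 2*n-1 ∧ IsRiffle (2*n) p w) ↔ Apred n w := by
  constructor
  · rintro ⟨p, hpo, -, -, hrif⟩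
    have hp : p % 2 = 1 := Nat.odd_iff.mp hpo
    intro k h
    exact forward_pair hrif ⟨2*k, by omega⟩ ⟨2*k+1, h⟩ rfl
      (show (p + 2*k) % 2 = 1 by omega)
  · intro hA
    rcases Nat.even_or_odd n with he | ho
    · have he' : n % 2 = 0 := Nat.even_iff.mp he
      have hn2 : 2 ≤ n := by omega
      by_cases hlp : w ⟨2*n-2, by omega⟩ = true
      · exact ⟨n-1, Nat.odd_iff.mpr (by omega), by omega, by omega,
          construct_O2a hn2 (Nat.even_iff.mp he) hA hlp⟩
      · exact ⟨n+1, Nat.odd_iff.mpr (by omega), by omega, by omega,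
          construct_O2b hn2 (Nat.even_iff.mp he) hA (by simpa using hlp)⟩
    · exact ⟨n, ho, hn, by omega, construct_O1 hn (Nat.odd_iff.mp ho) hA⟩

lemma even_iff {n : ℕ} (hn : 1 ≤ n) (w : Fin (2*n) → Bool) :
    (∃ p, Even p ∧ p ≤ 2*n ∧ IsRiffle (2*n) p w) ↔ Bpred n w := by
  constructor
  · rintro ⟨p, hpe, -, hrif⟩
    have hp : p % 2 = 0 := Nat.even_iff.mp hpe
    refine ⟨fun h => ⟨forward_even_zero hn hp hrif, forward_even_last hn hp hrif⟩, ?_⟩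
    intro k h
    exact forward_pair hrif ⟨2*k+1, by omega⟩ ⟨2*k+2, h⟩ rfl
      (show (p + (2*k+1)) % 2 = 1 by omega)
  · intro hB
    obtain ⟨hends, hmixE⟩ := hB
    obtain ⟨hzero, hlast⟩ := hends (by omega)
    rcases Nat.even_or_odd n with he | ho
    · have hn2 : 2 ≤ n := by rcases Nat.even_iff.mp he with h; omega
      exact ⟨n, he, by omega, construct_E2 hn2 (Nat.even_iff.mp he) hzero hlast hmixE⟩
    · exact ⟨n-1, Nat.even_iff.mpr (by have := Nat.odd_iff.mp ho; omega), by omega,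
        construct_E1 hn (Nat.odd_iff.mp ho) hzero hlast hmixE⟩

/-- counting A words -/
lemma card_A {n : ℕ} : Nat.card {w : Fin (2*n) → Bool // Apred n w} = 2^n := by
  have e : {w : Fin (2*n) → Bool // Apred n w} ≃ (Fin n → Bool) := by
    refine
      { toFun := fun x k => x.1 ⟨2*k.val, by omega⟩
        invFun := fun v =>
          ⟨fun i => if i.val % 2 = 0 then v ⟨i.val/2, by omega⟩ else !(v ⟨i.val/2, by omega⟩),
           ?_⟩
        left_inv := ?_
        right_inv := ?_ }
    · intro k h
      simp only [Fin.val_mk]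
      rw [if_pos (show 2*k % 2 = 0 by omega),
        if_neg (show ¬((2*k+1) % 2 = 0) by omega),
        show (⟨2*k/2, by omega⟩ : Fin n) = ⟨k, by omega⟩ from Fin.ext (show 2*k/2 = k by omega),
        show (⟨(2*k+1)/2, by omega⟩ : Fin n) = ⟨k, by omega⟩ from
          Fin.ext (show (2*k+1)/2 = k by omega)]
      simp
    · rintro ⟨w, hw⟩
      apply Subtype.ext
      funext i
      simp only
      by_cases hpar : i.val % 2 = 0
      · rw [if_pos hpar,
          show (⟨2*(⟨i.val/2, by omega⟩ : Fin n).val, by omega⟩ : Fin (2*n)) = i from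
            Fin.ext (show 2*(i.val/2) = i.val by omega)]
      · rw [if_neg hpar]
        have h1 : 2*(i.val/2)+1 < 2*n := by omega
        rw [show (⟨2*(⟨i.val/2, by omega⟩ : Fin n).val, by omega⟩ : Fin (2*n))
            = ⟨2*(i.val/2), by omega⟩ from Fin.ext (show 2*(i.val/2) = 2*(i.val/2) from rfl)]
        have h2 := hw (i.val/2) h1
        rw [show (⟨2*(i.val/2)+1, h1⟩ : Fin (2*n)) = i from
          Fin.ext (show 2*(i.val/2)+1 = i.val by omega)] at h2
        exact bnot_of_ne h2
    · intro v
      funext k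
      simp only [Fin.val_mk]
      rw [if_pos (show 2*k.val % 2 = 0 by omega),
        show (⟨2*k.val/2, by omega⟩ : Fin n) = k from Fin.ext (show 2*k.val/2 = k.val by omega)]
  rw [Nat.card_congr e]
  simp [Nat.card_eq_fintype_card]

/-- counting B words -/
lemma card_B {n : ℕ} (hn : 1 ≤ n) :
    Nat.card {w : Fin (2*n) → Bool // Bpred n w} = 2^(n-1) := by
  have e : {w : Fin (2*n) → Bool // Bpred n w} ≃ (Fin (n-1) → Bool) := by
    refine
      { toFun := fun x k => x.1 ⟨2*k.val+1, by omega⟩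
        invFun := fun v =>
          ⟨fun i => if h0 : i.val = 0 then true else if hL : i.val + 1 = 2*n then false
            else if i.val % 2 = 1 then v ⟨(i.val-1)/2, by omega⟩
            else !(v ⟨(i.val-1)/2, by omega⟩), ?_⟩
        left_inv := ?_
        right_inv := ?_ }
    · constructor
      · intro h
        constructor
        · simp
        · simp only [Fin.val_mk]
          rw [dif_neg (show ¬(2*n-1 = 0) by omega), dif_pos (show 2*n-1+1 = 2*n by omega)]
      · intro k h
        simp only [Fin.val_mk]
        rw [dif_neg (show ¬(2*k+1 = 0) by omega), dif_neg (show ¬(2*k+1+1 = 2*n) by omega),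
          if_pos (show (2*k+1) % 2 = 1 by omega),
          dif_neg (show ¬(2*k+2 = 0) by omega), dif_neg (show ¬(2*k+2+1 = 2*n) by omega),
          if_neg (show ¬((2*k+2) % 2 = 1) by omega),
          show (⟨(2*k+1-1)/2, by omega⟩ : Fin (n-1)) = ⟨(2*k+2-1)/2, by omega⟩ from
            Fin.ext (show (2*k+1-1)/2 = (2*k+2-1)/2 by omega)]
        simp
    · rintro ⟨w, hw⟩
      apply Subtype.ext
      funext i
      simp only
      by_cases h0 : i.val = 0
      · rw [dif_pos h0]
        have hh := (hw.1 (by omega)).1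
        rw [show (⟨0, by omega⟩ : Fin (2*n)) = i from Fin.ext (show (0:ℕ) = i.val by omega)]
          at hh
        exact hh.symm
      · rw [dif_neg h0]
        by_cases hL : i.val + 1 = 2*n
        · rw [dif_pos hL]
          have hh := (hw.1 (by omega)).2
          rw [show (⟨2*n-1, by omega⟩ : Fin (2*n)) = i from
            Fin.ext (show 2*n-1 = i.val by omega)] at hh
          exact hh.symm
        · rw [dif_neg hL]
          by_cases hpar : i.val % 2 = 1
          · rw [if_pos hpar,
              show (⟨2*(⟨(i.val-1)/2, by omega⟩ : Fin (n-1)).val+1, by omega⟩ : Fin (2*n)) = i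
                from Fin.ext (show 2*((i.val-1)/2)+1 = i.val by omega)]
          · rw [if_neg hpar]
            have hb : 2*((i.val-1)/2)+2 < 2*n := by omega
            have hh := hw.2 ((i.val-1)/2) hb
            rw [show (⟨2*((i.val-1)/2)+2, hb⟩ : Fin (2*n)) = i from
              Fin.ext (show 2*((i.val-1)/2)+2 = i.val by omega)] at hh
            rw [show (⟨2*(⟨(i.val-1)/2, by omega⟩ : Fin (n-1)).val+1, by omega⟩ : Fin (2*n))
                = ⟨2*((i.val-1)/2)+1, by omega⟩ from Fin.ext rfl]
            exact bnot_of_ne hh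
    · intro v
      funext k
      simp only [Fin.val_mk]
      rw [dif_neg (show ¬(2*k.val+1 = 0) by omega),
        dif_neg (show ¬(2*k.val+1+1 = 2*n) from by have := k.isLt; omega),
        if_pos (show (2*k.val+1) % 2 = 1 by omega),
        show (⟨(2*k.val+1-1)/2, by omega⟩ : Fin (n-1)) = k from
          Fin.ext (show (2*k.val+1-1)/2 = k.val by omega)]
  rw [Nat.card_congr e]
  simp [Nat.card_eq_fintype_card]

end S16

/-- The number of color words obtainable by cutting the alternating `2n`-card deck at an odd
position and riffling is `2^n`; at an even position, `2^{n-1}`. -/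
theorem statement16 (n : ℕ) (hn : 1 ≤ n) :
    Nat.card {w : Fin (2 * n) → Bool //
        ∃ p, Odd p ∧ 1 ≤ p ∧ p ≤ 2 * n - 1 ∧ IsRiffle (2 * n) p w} = 2 ^ n ∧
    Nat.card {w : Fin (2 * n) → Bool //
        ∃ p, Even p ∧ p ≤ 2 * n ∧ IsRiffle (2 * n) p w} = 2 ^ (n - 1) := by
  constructor
  · rw [Nat.card_congr (Equiv.subtypeEquivRight (S16.odd_iff hn))]
    exact S16.card_A
  · rw [Nat.card_congr (Equiv.subtypeEquivRight (S16.even_iff hn))]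
    exact S16.card_B hn
end
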